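/- arXiv:1903.11828 — 13 statements merged into one kernel-verified Lean document; each statement's English description precedes it below -/
import Mathlib

section
/- For every Young diagram λ, the product of hook lengths is at most the product of anti-hook lengths: ∏_{u∈λ} h(u) ≤ ∏_{u∈λ} h*(u). -/
open Finset

def hookLen (μ : YoungDiagram) (c : ℕ × ℕ) : ℕ :=
  (μ.rowLen c.1 - c.2) + (μ.colLen c.2 - c.1) - 1

def antiHookLen (c : ℕ × ℕ) : ℕ := c.1 + c.2 + 1

/-- Remove the first (0-th) column of a Young diagram. -/
def eraseCol (μ : YoungDiagram) : YoungDiagram where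
  cells := (μ.cells.filter (fun c => c.2 ≠ 0)).image (fun c => (c.1, c.2 - 1))
  isLowerSet := by
    rintro ⟨i2, j2⟩ ⟨i1, j1⟩ ⟨hi, hj⟩ h
    simp only [Finset.coe_image, Finset.coe_filter, YoungDiagram.mem_cells,
      Set.mem_image, Set.mem_setOf_eq, Prod.mk.injEq] at h ⊢
    obtain ⟨⟨a, b⟩, ⟨hm, hb⟩, ha, hb'⟩ := h
    simp only at hm hb ha hb' hi hj
    refine ⟨(i1, j1 + 1), ⟨?_, by omega⟩, rfl, by omega⟩
    exact μ.up_left_mem (by omega) (by omega) (show (a, b) ∈ μ by simpa using hm)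

theorem mem_eraseCol {μ : YoungDiagram} {i j : ℕ} :
    (i, j) ∈ eraseCol μ ↔ (i, j + 1) ∈ μ := by
  constructor
  · intro h
    change (i, j) ∈ (μ.cells.filter (fun c => c.2 ≠ 0)).image (fun c => (c.1, c.2 - 1)) at h
    simp only [eraseCol, YoungDiagram.mem_mk, Finset.mem_image, Finset.mem_filter,
      YoungDiagram.mem_cells, Prod.mk.injEq] at h
    obtain ⟨⟨a, b⟩, ⟨hm, hb⟩, ha, hb'⟩ := h
    simp only at hm hb ha hb'
    have : b = j + 1 := by omega
    subst ha this; exact hm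
  · intro h
    show (i, j) ∈ (μ.cells.filter (fun c => c.2 ≠ 0)).image (fun c => (c.1, c.2 - 1))
    simp only [eraseCol, YoungDiagram.mem_mk, Finset.mem_image, Finset.mem_filter,
      YoungDiagram.mem_cells, Prod.mk.injEq]
    exact ⟨(i, j + 1), ⟨h, by omega⟩, rfl, rfl⟩

theorem rowLen_eraseCol (μ : YoungDiagram) (i : ℕ) :
    (eraseCol μ).rowLen i = μ.rowLen i - 1 := by
  have h : ∀ j, j < (eraseCol μ).rowLen i ↔ j < μ.rowLen i - 1 := by
    intro j
    rw [← YoungDiagram.mem_iff_lt_rowLen, mem_eraseCol, YoungDiagram.mem_iff_lt_rowLen]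
    omega
  have h1 := h ((eraseCol μ).rowLen i)
  have h2 := h (μ.rowLen i - 1)
  omega

theorem colLen_eraseCol (μ : YoungDiagram) (j : ℕ) :
    (eraseCol μ).colLen j = μ.colLen (j + 1) := by
  have h : ∀ i, i < (eraseCol μ).colLen j ↔ i < μ.colLen (j + 1) := by
    intro i
    rw [← YoungDiagram.mem_iff_lt_colLen, mem_eraseCol, YoungDiagram.mem_iff_lt_colLen]
  have h1 := h ((eraseCol μ).colLen j)
  have h2 := h (μ.colLen (j + 1))
  omega

theorem rowLen_eq_zero_of_colLen_le (μ : YoungDiagram) {i : ℕ} (h : μ.colLen 0 ≤ i) :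
    μ.rowLen i = 0 := by
  by_contra hne
  have : (i, 0) ∈ μ := YoungDiagram.mem_iff_lt_rowLen.2 (by omega)
  rw [YoungDiagram.mem_iff_lt_colLen] at this
  omega

/-- Product over the cells of a Young diagram, as an iterated product over rows. -/
theorem prod_cells_eq (μ : YoungDiagram) {R : ℕ} (hR : μ.colLen 0 ≤ R) (f : ℕ × ℕ → ℕ) :
    ∏ c ∈ μ.cells, f c = ∏ i ∈ Finset.range R, ∏ j ∈ Finset.range (μ.rowLen i), f (i, j) := by
  have hcells : μ.cells = (Finset.range R).biUnion (fun i => μ.row i) := by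
    ext ⟨i, j⟩
    simp only [Finset.mem_biUnion, Finset.mem_range, YoungDiagram.mem_cells,
      YoungDiagram.mem_row_iff]
    constructor
    · intro h
      have : (i, 0) ∈ μ := μ.up_left_mem le_rfl (Nat.zero_le _) h
      rw [YoungDiagram.mem_iff_lt_colLen] at this
      exact ⟨i, by omega, h, rfl⟩
    · rintro ⟨a, _, h, rfl⟩; exact h
  rw [hcells, Finset.prod_biUnion]
  · refine Finset.prod_congr rfl fun i _ => ?_
    rw [YoungDiagram.row_eq_prod, Finset.singleton_product, Finset.prod_map]
    rfl
  · intro a _ b _ hab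
    simp only [Finset.disjoint_left]
    intro c hc hc'
    rw [YoungDiagram.mem_row_iff] at hc hc'
    exact hab (hc.2 ▸ hc'.2 ▸ rfl)

/-- Telescoping identity in each row. -/
theorem tele (i m : ℕ) :
    (i + 1) * ∏ j ∈ Finset.range m, (i + j + 2) =
      (i + m + 1) * ∏ j ∈ Finset.range m, (i + j + 1) := by
  induction m with
  | zero => simp
  | succ m ih =>
    rw [Finset.prod_range_succ, Finset.prod_range_succ, ← mul_assoc, ih]
    ring

/-- Rearrangement inequality for an antitone sequence. -/
theorem rearr : ∀ (r : ℕ) (a : ℕ → ℕ), (∀ i j, i ≤ j → a j ≤ a i) →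
    ∏ i ∈ Finset.range r, (a i + (r - i)) ≤ ∏ i ∈ Finset.range r, (a i + (i + 1)) := by
  intro r
  induction r using Nat.strong_induction_on with
  | _ r ih =>
    match r with
    | 0 => intro a _; simp
    | 1 => intro a _; simp
    | (n + 2) =>
      intro a ha
      have key := ih n (by omega) (fun i => a (i + 1) + 1)
        (fun i j h => by
          show a (j + 1) + 1 ≤ a (i + 1) + 1
          have := ha (i + 1) (j + 1) (by omega); omega)
      rw [Finset.prod_range_succ, Finset.prod_range_succ', Finset.prod_range_succ,
        Finset.prod_range_succ']
      have e1 : ∏ i ∈ Finset.range n, (a (i + 1) + (n + 2 - (i + 1))) =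
          ∏ i ∈ Finset.range n, (a (i + 1) + 1 + (n - i)) := by
        refine Finset.prod_congr rfl fun i hi => ?_
        rw [Finset.mem_range] at hi; omega
      have e2 : ∏ i ∈ Finset.range n, (a (i + 1) + (i + 1 + 1)) =
          ∏ i ∈ Finset.range n, (a (i + 1) + 1 + (i + 1)) := by
        refine Finset.prod_congr rfl fun i hi => ?_
        omega
      rw [e1, e2]
      have hend : (a 0 + (n + 2 - 0)) * (a (n + 1) + (n + 2 - (n + 1))) ≤
          (a 0 + (0 + 1)) * (a (n + 1) + (n + 1 + 1)) := by
        have h0 : a (n + 1) ≤ a 0 := ha 0 (n + 1) (by omega)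
        have : n + 2 - 0 = n + 2 := by omega
        rw [this]
        have : n + 2 - (n + 1) = 1 := by omega
        rw [this]
        nlinarith [h0]
      calc (∏ i ∈ Finset.range n, (a (i + 1) + 1 + (n - i))) * (a 0 + (n + 2 - 0))
            * (a (n + 1) + (n + 2 - (n + 1)))
          ≤ (∏ i ∈ Finset.range n, (a (i + 1) + 1 + (i + 1))) * (a 0 + (n + 2 - 0))
            * (a (n + 1) + (n + 2 - (n + 1))) := by
            exact Nat.mul_le_mul_right _ (Nat.mul_le_mul_right _ key)
        _ ≤ (∏ i ∈ Finset.range n, (a (i + 1) + 1 + (i + 1))) * (a 0 + (0 + 1))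
            * (a (n + 1) + (n + 1 + 1)) := by
            rw [mul_assoc, mul_assoc]
            exact Nat.mul_le_mul_left _ hend

theorem image_shift (μ : YoungDiagram) :
    (eraseCol μ).cells.image (fun c => (c.1, c.2 + 1)) =
      μ.cells.filter (fun c => c.2 ≠ 0) := by
  ext ⟨i, j⟩
  simp only [Finset.mem_image, Finset.mem_filter, YoungDiagram.mem_cells, Prod.mk.injEq]
  constructor
  · rintro ⟨⟨a, b⟩, hm, h1, h2⟩
    simp only at h1 h2
    subst h1
    have : j = b + 1 := by omega
    subst this
    exact ⟨mem_eraseCol.1 hm, by omega⟩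
  · rintro ⟨hm, hj⟩
    refine ⟨(i, j - 1), mem_eraseCol.2 ?_, rfl, by omega⟩
    have : j - 1 + 1 = j := by omega
    rw [this]; exact hm

theorem shift_inj : Function.Injective (fun c : ℕ × ℕ => (c.1, c.2 + 1)) := by
  rintro ⟨a, b⟩ ⟨c, d⟩ h
  simp only [Prod.mk.injEq] at h
  simp [Prod.ext_iff]; omega

theorem prod_split (μ : YoungDiagram) (f : ℕ × ℕ → ℕ) :
    ∏ c ∈ μ.cells, f c =
      (∏ i ∈ Finset.range (μ.colLen 0), f (i, 0)) *
        ∏ c ∈ (eraseCol μ).cells, f (c.1, c.2 + 1) := by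
  rw [← Finset.prod_filter_mul_prod_filter_not μ.cells (fun c => c.2 = 0) f]
  congr 1
  · have h0 : μ.cells.filter (fun c => c.2 = 0) = μ.col 0 := rfl
    rw [h0, YoungDiagram.col_eq_prod, Finset.prod_product]
    simp
  · rw [← image_shift, Finset.prod_image (fun a _ b _ h => shift_inj h)]

theorem main_aux : ∀ (n : ℕ) (μ : YoungDiagram), μ.cells.card ≤ n →
    ∏ c ∈ μ.cells, hookLen μ c ≤ ∏ c ∈ μ.cells, antiHookLen c := by
  intro n
  induction n with
  | zero =>
    intro μ h
    have : μ.cells = ∅ := Finset.card_eq_zero.1 (by omega)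
    rw [this]; simp
  | succ n ih =>
    intro μ hcard
    by_cases hemp : μ.cells = ∅
    · rw [hemp]; simp
    · set ν := eraseCol μ with hν
      set r := μ.colLen 0 with hr
      obtain ⟨⟨a, b⟩, hab⟩ := Finset.nonempty_iff_ne_empty.2 hemp
      have h00 : (0, 0) ∈ μ :=
        μ.up_left_mem (Nat.zero_le _) (Nat.zero_le _) ((YoungDiagram.mem_cells _).1 hab)
      have hrpos : 0 < r := YoungDiagram.mem_iff_lt_colLen.1 h00
      have hsub : μ.cells.filter (fun c => c.2 ≠ 0) ⊂ μ.cells := by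
        refine Finset.filter_ssubset.2 ⟨(0, 0), ?_, by simp⟩
        simpa using h00
      have hcards : ν.cells.card < μ.cells.card := by
        rw [← Finset.card_image_of_injective ν.cells shift_inj, image_shift]
        exact Finset.card_lt_card hsub
      have ihν := ih ν (by omega)
      have hhook : ∀ c : ℕ × ℕ, hookLen μ (c.1, c.2 + 1) = hookLen ν c := by
        rintro ⟨i, j⟩
        simp only [hookLen, hν, rowLen_eraseCol, colLen_eraseCol]
        omega
      have hhook0 : ∀ i ∈ Finset.range r, hookLen μ (i, 0) = ν.rowLen i + (r - i) := by
        intro i hi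
        rw [Finset.mem_range] at hi
        have hi0 : (i, 0) ∈ μ := YoungDiagram.mem_iff_lt_colLen.2 hi
        have hrow : 1 ≤ μ.rowLen i := YoungDiagram.mem_iff_lt_rowLen.1 hi0
        simp only [hookLen, hν, rowLen_eraseCol]
        omega
      have hRν : ν.colLen 0 ≤ r := by
        rw [hν, colLen_eraseCol]
        exact μ.colLen_anti 0 1 (by omega)
      have E : (∏ i ∈ Finset.range r, (ν.rowLen i + (i + 1))) *
            ∏ c ∈ ν.cells, antiHookLen c =
          (∏ i ∈ Finset.range r, (i + 1)) *
            ∏ c ∈ ν.cells, antiHookLen (c.1, c.2 + 1) := by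
        rw [prod_cells_eq ν hRν antiHookLen,
          prod_cells_eq ν hRν (fun c => antiHookLen (c.1, c.2 + 1)),
          ← Finset.prod_mul_distrib, ← Finset.prod_mul_distrib]
        refine Finset.prod_congr rfl fun i _ => ?_
        show (ν.rowLen i + (i + 1)) * ∏ j ∈ Finset.range (ν.rowLen i), (i + j + 1) =
          (i + 1) * ∏ j ∈ Finset.range (ν.rowLen i), (i + j + 2)
        rw [tele i (ν.rowLen i)]
        ring_nf
      calc ∏ c ∈ μ.cells, hookLen μ c
          = (∏ i ∈ Finset.range r, (ν.rowLen i + (r - i))) *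
              ∏ c ∈ ν.cells, hookLen ν c := by
            rw [prod_split μ (hookLen μ)]
            congr 1
            · exact Finset.prod_congr rfl hhook0
            · exact Finset.prod_congr rfl fun c _ => hhook c
        _ ≤ (∏ i ∈ Finset.range r, (ν.rowLen i + (i + 1))) *
              ∏ c ∈ ν.cells, antiHookLen c :=
            Nat.mul_le_mul (rearr r ν.rowLen (fun i j h => ν.rowLen_anti i j h)) ihν
        _ = (∏ i ∈ Finset.range r, (i + 1)) *
              ∏ c ∈ ν.cells, antiHookLen (c.1, c.2 + 1) := E
        _ = ∏ c ∈ μ.cells, antiHookLen c := by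
            rw [prod_split μ antiHookLen]
            congr 1

theorem prod_hook_le_prod_antiHook (μ : YoungDiagram) :
    ∏ c ∈ μ.cells, hookLen μ c ≤ ∏ c ∈ μ.cells, antiHookLen c :=
  main_aux μ.cells.card μ le_rfl
end

section
/- For a Young diagram λ, the product of hook lengths equals the product of anti-hook lengths, ∏_{u∈λ} h(u) = ∏_{u∈λ} h*(u), if and only if λ is a rectangle (all parts equal). -/
namespace HookAux

/-- Vertical reflection within each column. -/
def psi (μ : YoungDiagram) (c : ℕ × ℕ) : ℕ × ℕ := (μ.colLen c.2 - 1 - c.1, c.2)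

/-- Horizontal reflection within each row. -/
def phi (μ : YoungDiagram) (c : ℕ × ℕ) : ℕ × ℕ := (c.1, μ.rowLen c.1 - 1 - c.2)

/-- The row-reversed anti-hook length. -/
def gg (μ : YoungDiagram) (c : ℕ × ℕ) : ℕ := μ.rowLen c.1 + c.1 - c.2

lemma mem_facts (μ : YoungDiagram) {c : ℕ × ℕ} (hc : c ∈ μ.cells) :
    c.2 < μ.rowLen c.1 ∧ c.1 < μ.colLen c.2 := by
  obtain ⟨i, j⟩ := c
  rw [YoungDiagram.mem_cells] at hc
  exact ⟨YoungDiagram.mem_iff_lt_rowLen.mp hc, YoungDiagram.mem_iff_lt_colLen.mp hc⟩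

lemma psi_mem (μ : YoungDiagram) {c : ℕ × ℕ} (hc : c ∈ μ.cells) : psi μ c ∈ μ.cells := by
  obtain ⟨hr, hcol⟩ := mem_facts μ hc
  obtain ⟨i, j⟩ := c
  rw [YoungDiagram.mem_cells]
  rw [psi]
  exact YoungDiagram.mem_iff_lt_colLen.mpr (by simp at hcol ⊢; omega)

lemma psi_psi (μ : YoungDiagram) {c : ℕ × ℕ} (hc : c ∈ μ.cells) : psi μ (psi μ c) = c := by
  obtain ⟨hr, hcol⟩ := mem_facts μ hc
  obtain ⟨i, j⟩ := c
  simp only [psi] at *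
  congr 1
  omega

lemma phi_mem (μ : YoungDiagram) {c : ℕ × ℕ} (hc : c ∈ μ.cells) : phi μ c ∈ μ.cells := by
  obtain ⟨hr, hcol⟩ := mem_facts μ hc
  obtain ⟨i, j⟩ := c
  rw [YoungDiagram.mem_cells]
  rw [phi]
  exact YoungDiagram.mem_iff_lt_rowLen.mpr (by simp at hr ⊢; omega)

lemma phi_phi (μ : YoungDiagram) {c : ℕ × ℕ} (hc : c ∈ μ.cells) : phi μ (phi μ c) = c := by
  obtain ⟨hr, hcol⟩ := mem_facts μ hc
  obtain ⟨i, j⟩ := c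
  simp only [phi] at *
  congr 1
  omega

lemma prod_psi (μ : YoungDiagram) (F : ℕ × ℕ → ℕ) :
    ∏ c ∈ μ.cells, F (psi μ c) = ∏ c ∈ μ.cells, F c :=
  Finset.prod_nbij' (psi μ) (psi μ) (fun a ha => psi_mem μ ha) (fun a ha => psi_mem μ ha)
    (fun a ha => psi_psi μ ha) (fun a ha => psi_psi μ ha) (fun a _ => rfl)

/-- The product of anti-hook lengths equals the product of the reversed values `gg`. -/
lemma prod_anti_eq_prod_gg (μ : YoungDiagram) :
    ∏ c ∈ μ.cells, antiHookLen c = ∏ c ∈ μ.cells, gg μ c := by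
  refine Finset.prod_nbij' (phi μ) (phi μ) (fun a ha => phi_mem μ ha) (fun a ha => phi_mem μ ha)
    (fun a ha => phi_phi μ ha) (fun a ha => phi_phi μ ha) (fun a ha => ?_)
  obtain ⟨hr, hcol⟩ := mem_facts μ ha
  obtain ⟨i, j⟩ := a
  simp only [antiHookLen, gg, phi] at *
  omega

lemma hook_eval (μ : YoungDiagram) {c : ℕ × ℕ} (hc : c ∈ μ.cells) :
    hookLen μ c = (μ.rowLen c.1 - c.2) + (μ.colLen c.2 - 1 - c.1) := by
  obtain ⟨hr, hcol⟩ := mem_facts μ hc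
  obtain ⟨i, j⟩ := c
  simp only [hookLen] at *
  omega

lemma hook_psi_eval (μ : YoungDiagram) {c : ℕ × ℕ} (hc : c ∈ μ.cells) :
    hookLen μ (psi μ c) = (μ.rowLen (μ.colLen c.2 - 1 - c.1) - c.2) + c.1 := by
  obtain ⟨hr, hcol⟩ := mem_facts μ hc
  have h2 := mem_facts μ (psi_mem μ hc)
  obtain ⟨i, j⟩ := c
  simp only [psi, hookLen] at *
  omega

lemma gg_eval (μ : YoungDiagram) {c : ℕ × ℕ} (hc : c ∈ μ.cells) :
    gg μ c = (μ.rowLen c.1 - c.2) + c.1 := by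
  obtain ⟨hr, hcol⟩ := mem_facts μ hc
  obtain ⟨i, j⟩ := c
  simp only [gg] at *
  omega

lemma gg_psi_eval (μ : YoungDiagram) {c : ℕ × ℕ} (hc : c ∈ μ.cells) :
    gg μ (psi μ c) = (μ.rowLen (μ.colLen c.2 - 1 - c.1) - c.2) + (μ.colLen c.2 - 1 - c.1) := by
  have h2 := mem_facts μ (psi_mem μ hc)
  obtain ⟨i, j⟩ := c
  simp only [psi, gg] at *
  omega

lemma rearrange {A B x y : ℕ} (h : (x ≤ y ∧ B ≤ A) ∨ (y ≤ x ∧ A ≤ B)) :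
    (A + y) * (B + x) ≤ (A + x) * (B + y) := by
  rcases h with ⟨h1, h2⟩ | ⟨h1, h2⟩
  · obtain ⟨d, rfl⟩ := Nat.exists_eq_add_of_le h2
    obtain ⟨e, rfl⟩ := Nat.exists_eq_add_of_le h1
    ring_nf
    nlinarith
  · obtain ⟨d, rfl⟩ := Nat.exists_eq_add_of_le h2
    obtain ⟨e, rfl⟩ := Nat.exists_eq_add_of_le h1
    ring_nf
    nlinarith

lemma rearrange_strict {A B x y : ℕ} (h1 : x < y) (h2 : B < A) :
    (A + y) * (B + x) < (A + x) * (B + y) := by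
  obtain ⟨d, rfl⟩ := Nat.exists_eq_add_of_le h2.le
  obtain ⟨e, rfl⟩ := Nat.exists_eq_add_of_le h1.le
  have hd : 1 ≤ d := by omega
  have he : 1 ≤ e := by omega
  ring_nf
  nlinarith

/-- The key pointwise inequality: the product of the hooks at a cell and its vertical
reflection is at most the product of the `gg`-values there. -/
lemma pointwise (μ : YoungDiagram) {c : ℕ × ℕ} (hc : c ∈ μ.cells) :
    hookLen μ c * hookLen μ (psi μ c) ≤ gg μ c * gg μ (psi μ c) := by
  obtain ⟨hr, hcol⟩ := mem_facts μ hc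
  have h2 := mem_facts μ (psi_mem μ hc)
  rw [hook_eval μ hc, hook_psi_eval μ hc, gg_eval μ hc, gg_psi_eval μ hc]
  set i := c.1
  set j := c.2
  set i' := μ.colLen c.2 - 1 - c.1 with hi'
  set A := μ.rowLen i - j
  set B := μ.rowLen i' - j
  have base : (A + i') * (B + i) ≤ (A + i) * (B + i') := by
    apply rearrange
    rcases le_total i i' with h | h
    · exact Or.inl ⟨h, by have := μ.rowLen_anti i i' h; simp only [A, B]; omega⟩
    · exact Or.inr ⟨h, by have := μ.rowLen_anti i' i h; simp only [A, B]; omega⟩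
  exact base

lemma hook_pos (μ : YoungDiagram) {c : ℕ × ℕ} (hc : c ∈ μ.cells) : 0 < hookLen μ c := by
  obtain ⟨hr, hcol⟩ := mem_facts μ hc
  obtain ⟨i, j⟩ := c
  simp only [hookLen] at *
  omega

/-- Squared inequality between the two products. -/
lemma sq_le (μ : YoungDiagram) :
    (∏ c ∈ μ.cells, hookLen μ c) * (∏ c ∈ μ.cells, hookLen μ c) ≤
      (∏ c ∈ μ.cells, gg μ c) * (∏ c ∈ μ.cells, gg μ c) := by
  calc (∏ c ∈ μ.cells, hookLen μ c) * (∏ c ∈ μ.cells, hookLen μ c)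
      = (∏ c ∈ μ.cells, hookLen μ c) * (∏ c ∈ μ.cells, hookLen μ (psi μ c)) := by
        rw [prod_psi]
    _ = ∏ c ∈ μ.cells, (hookLen μ c * hookLen μ (psi μ c)) := by
        rw [Finset.prod_mul_distrib]
    _ ≤ ∏ c ∈ μ.cells, (gg μ c * gg μ (psi μ c)) := by
        exact Finset.prod_le_prod (fun c _ => Nat.zero_le _) (fun c hc => pointwise μ hc)
    _ = (∏ c ∈ μ.cells, gg μ c) * (∏ c ∈ μ.cells, gg μ (psi μ c)) := by
        rw [Finset.prod_mul_distrib]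
    _ = (∏ c ∈ μ.cells, gg μ c) * (∏ c ∈ μ.cells, gg μ c) := by
        rw [prod_psi]

/-- Strict squared inequality for non-rectangular diagrams. -/
lemma sq_lt (μ : YoungDiagram) {r j : ℕ} (hrj : (r, j) ∈ μ.cells)
    (hne : μ.rowLen r ≠ μ.rowLen 0) :
    (∏ c ∈ μ.cells, hookLen μ c) * (∏ c ∈ μ.cells, hookLen μ c) <
      (∏ c ∈ μ.cells, gg μ c) * (∏ c ∈ μ.cells, gg μ c) := by
  have hrj' := (YoungDiagram.mem_cells _).mp hrj
  have hr0 : (r, 0) ∈ μ := μ.up_left_mem le_rfl (Nat.zero_le _) hrj'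
  have h00 : (0, 0) ∈ μ := μ.up_left_mem (Nat.zero_le _) le_rfl hr0
  have h00c : ((0 : ℕ), (0 : ℕ)) ∈ μ.cells := (YoungDiagram.mem_cells _).mpr h00
  have hrpos : 0 < r := by
    rcases Nat.eq_zero_or_pos r with h | h
    · exact absurd (by rw [h]) hne
    · exact h
  have hrltL : r < μ.colLen 0 := YoungDiagram.mem_iff_lt_colLen.mp hr0
  -- strictness at (0,0)
  have hstrict : hookLen μ ((0 : ℕ), (0 : ℕ)) * hookLen μ (psi μ (0, 0)) <
      gg μ ((0 : ℕ), (0 : ℕ)) * gg μ (psi μ (0, 0)) := by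
    have h2 := mem_facts μ (psi_mem μ h00c)
    have h1 := mem_facts μ h00c
    rw [hook_eval μ h00c, hook_psi_eval μ h00c, gg_eval μ h00c, gg_psi_eval μ h00c]
    simp only [Nat.sub_zero] at *
    set i' := μ.colLen 0 - 1 - 0 with hi'
    have hi'eq : i' = μ.colLen 0 - 1 := by simp [hi']
    have hii : (0 : ℕ) < i' := by omega
    have hBA : μ.rowLen i' < μ.rowLen 0 := by
      have hle : μ.rowLen i' ≤ μ.rowLen r := by
        apply μ.rowLen_anti
        omega
      have hle2 : μ.rowLen r ≤ μ.rowLen 0 := μ.rowLen_anti 0 r (Nat.zero_le _)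
      omega
    have := rearrange_strict (A := μ.rowLen 0) (B := μ.rowLen i') hii hBA
    simpa [hi'eq] using this
  calc (∏ c ∈ μ.cells, hookLen μ c) * (∏ c ∈ μ.cells, hookLen μ c)
      = (∏ c ∈ μ.cells, hookLen μ c) * (∏ c ∈ μ.cells, hookLen μ (psi μ c)) := by
        rw [prod_psi]
    _ = ∏ c ∈ μ.cells, (hookLen μ c * hookLen μ (psi μ c)) := by
        rw [Finset.prod_mul_distrib]
    _ < ∏ c ∈ μ.cells, (gg μ c * gg μ (psi μ c)) := by
        apply Finset.prod_lt_prod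
        · exact fun c hc => Nat.mul_pos (hook_pos μ hc) (hook_pos μ (psi_mem μ hc))
        · exact fun c hc => pointwise μ hc
        · exact ⟨((0 : ℕ), (0 : ℕ)), h00c, hstrict⟩
    _ = (∏ c ∈ μ.cells, gg μ c) * (∏ c ∈ μ.cells, gg μ (psi μ c)) := by
        rw [Finset.prod_mul_distrib]
    _ = (∏ c ∈ μ.cells, gg μ c) * (∏ c ∈ μ.cells, gg μ c) := by
        rw [prod_psi]

end HookAux

/-- The product of hooks equals the product of anti-hooks iff the diagram is a rectangle
(all nonempty rows have the same length). -/
theorem prod_hook_eq_prod_antiHook_iff_rect (μ : YoungDiagram) :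
    (∏ c ∈ μ.cells, hookLen μ c = ∏ c ∈ μ.cells, antiHookLen c) ↔
      ∀ c ∈ μ.cells, μ.rowLen c.1 = μ.rowLen 0 := by
  rw [HookAux.prod_anti_eq_prod_gg]
  constructor
  · intro heq c hc
    by_contra hne
    obtain ⟨r, j⟩ := c
    have hlt := HookAux.sq_lt μ hc hne
    rw [heq] at hlt
    exact lt_irrefl _ hlt
  · intro hrect
    have key : ∀ c ∈ μ.cells, hookLen μ c = HookAux.gg μ (HookAux.psi μ c) := by
      intro c hc
      have h1 := HookAux.mem_facts μ hc
      have h2 := HookAux.mem_facts μ (HookAux.psi_mem μ hc)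
      have e1 : μ.rowLen c.1 = μ.rowLen 0 := hrect c hc
      have e2 : μ.rowLen (HookAux.psi μ c).1 = μ.rowLen 0 :=
        hrect _ (HookAux.psi_mem μ hc)
      rw [HookAux.hook_eval μ hc, HookAux.gg_psi_eval μ hc]
      simp only [HookAux.psi] at *
      omega
    calc ∏ c ∈ μ.cells, hookLen μ c
        = ∏ c ∈ μ.cells, HookAux.gg μ (HookAux.psi μ c) := Finset.prod_congr rfl key
      _ = ∏ c ∈ μ.cells, HookAux.gg μ c := HookAux.prod_psi μ _
end

section
/- For every Young diagram λ, the sum of squared hook lengths is at least the sum of squared anti-hook lengths: ∑_{u∈λ} h(u)² ≥ ∑_{u∈λ} h*(u)². -/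
lemma transfer_row (μ : YoungDiagram) (f : ℕ → ℕ) :
    ∑ u ∈ μ.cells, f (μ.rowLen u.1 - u.2 - 1) = ∑ u ∈ μ.cells, f u.2 := by
  apply Finset.sum_nbij' (i := fun u => (u.1, μ.rowLen u.1 - u.2 - 1))
    (j := fun u => (u.1, μ.rowLen u.1 - u.2 - 1))
  · intro a ha
    rw [YoungDiagram.mem_cells] at *
    rw [YoungDiagram.mem_iff_lt_rowLen]
    have := (YoungDiagram.mem_iff_lt_rowLen (μ := μ) (i := a.1) (j := a.2)).1 (by simpa using ha)
    omega
  · intro a ha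
    rw [YoungDiagram.mem_cells] at *
    rw [YoungDiagram.mem_iff_lt_rowLen]
    have := (YoungDiagram.mem_iff_lt_rowLen (μ := μ) (i := a.1) (j := a.2)).1 (by simpa using ha)
    omega
  · intro a ha
    rw [YoungDiagram.mem_cells] at ha
    have := (YoungDiagram.mem_iff_lt_rowLen (μ := μ) (i := a.1) (j := a.2)).1 (by simpa using ha)
    ext <;> simp <;> omega
  · intro a ha
    rw [YoungDiagram.mem_cells] at ha
    have := (YoungDiagram.mem_iff_lt_rowLen (μ := μ) (i := a.1) (j := a.2)).1 (by simpa using ha)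
    ext <;> simp <;> omega
  · intro a ha
    rfl

lemma transfer_col (μ : YoungDiagram) (f : ℕ → ℕ) :
    ∑ u ∈ μ.cells, f (μ.colLen u.2 - u.1 - 1) = ∑ u ∈ μ.cells, f u.1 := by
  apply Finset.sum_nbij' (i := fun u => (μ.colLen u.2 - u.1 - 1, u.2))
    (j := fun u => (μ.colLen u.2 - u.1 - 1, u.2))
  · intro a ha
    rw [YoungDiagram.mem_cells] at *
    rw [YoungDiagram.mem_iff_lt_colLen]
    have := (YoungDiagram.mem_iff_lt_colLen (μ := μ) (i := a.1) (j := a.2)).1 (by simpa using ha)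
    omega
  · intro a ha
    rw [YoungDiagram.mem_cells] at *
    rw [YoungDiagram.mem_iff_lt_colLen]
    have := (YoungDiagram.mem_iff_lt_colLen (μ := μ) (i := a.1) (j := a.2)).1 (by simpa using ha)
    omega
  · intro a ha
    rw [YoungDiagram.mem_cells] at ha
    have := (YoungDiagram.mem_iff_lt_colLen (μ := μ) (i := a.1) (j := a.2)).1 (by simpa using ha)
    ext <;> simp <;> omega
  · intro a ha
    rw [YoungDiagram.mem_cells] at ha
    have := (YoungDiagram.mem_iff_lt_colLen (μ := μ) (i := a.1) (j := a.2)).1 (by simpa using ha)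
    ext <;> simp <;> omega
  · intro a ha
    rfl

lemma key_ineq (μ : YoungDiagram) :
    ∑ u ∈ μ.cells, u.1 * u.2 ≤
      ∑ u ∈ μ.cells, (μ.rowLen u.1 - u.2 - 1) * (μ.colLen u.2 - u.1 - 1) := by
  have h1 : ∑ u ∈ μ.cells, u.1 * u.2 =
      (μ.cells.sigma fun u => Finset.range u.1 ×ˢ Finset.range u.2).card := by
    rw [Finset.card_sigma]
    simp
  have h2 : ∑ u ∈ μ.cells, (μ.rowLen u.1 - u.2 - 1) * (μ.colLen u.2 - u.1 - 1) =
      (μ.cells.sigma fun u =>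
        Finset.range (μ.rowLen u.1 - u.2 - 1) ×ˢ Finset.range (μ.colLen u.2 - u.1 - 1)).card := by
    rw [Finset.card_sigma]
    simp
  rw [h1, h2]
  apply Finset.card_le_card_of_injOn
    (fun a => ⟨(a.2.1, a.2.2), (a.1.2 - a.2.2 - 1, a.1.1 - a.2.1 - 1)⟩)
  · rintro ⟨u, p⟩ h
    simp only [Finset.mem_coe, Finset.mem_sigma, Finset.mem_product, Finset.mem_range,
      YoungDiagram.mem_cells] at h ⊢
    obtain ⟨hu, hp1, hp2⟩ := h
    have hmem : (p.1, p.2) ∈ μ := by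
      apply μ.up_left_mem (le_of_lt hp1) (le_of_lt hp2)
      simpa using hu
    refine ⟨hmem, ?_, ?_⟩
    · have h3 : (p.1, u.2) ∈ μ := μ.up_left_mem (le_of_lt hp1) le_rfl (by simpa using hu)
      have := YoungDiagram.mem_iff_lt_rowLen.1 h3
      omega
    · have h3 : (u.1, p.2) ∈ μ := μ.up_left_mem le_rfl (le_of_lt hp2) (by simpa using hu)
      have := YoungDiagram.mem_iff_lt_colLen.1 h3
      omega
  · rintro ⟨u, p⟩ h ⟨u', p'⟩ h' heq
    simp only [Finset.mem_coe, Finset.mem_sigma, Finset.mem_product, Finset.mem_range] at h h'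
    have efst : ((p.1, p.2) : ℕ × ℕ) = (p'.1, p'.2) := congrArg Sigma.fst heq
    have esnd : ((u.2 - p.2 - 1, u.1 - p.1 - 1) : ℕ × ℕ)
        = (u'.2 - p'.2 - 1, u'.1 - p'.1 - 1) := by
      have h2 := (Sigma.ext_iff.1 heq).2
      exact eq_of_heq h2
    have e1 : p.1 = p'.1 := congrArg Prod.fst efst
    have e2 : p.2 = p'.2 := congrArg Prod.snd efst
    have e3 : u.2 - p.2 - 1 = u'.2 - p'.2 - 1 := congrArg Prod.fst esnd
    have e4 : u.1 - p.1 - 1 = u'.1 - p'.1 - 1 := congrArg Prod.snd esnd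
    obtain ⟨hu, hp1, hp2⟩ := h
    obtain ⟨hu', hp1', hp2'⟩ := h'
    have hu12 : u = u' := by ext <;> omega
    have hp12 : p = p' := by ext <;> omega
    subst hu12; subst hp12; rfl

theorem sum_sq_antiHook_le_sum_sq_hook (μ : YoungDiagram) :
    ∑ c ∈ μ.cells, (antiHookLen c) ^ 2 ≤ ∑ c ∈ μ.cells, (hookLen μ c) ^ 2 := by
  have hhook : ∀ u ∈ μ.cells, hookLen μ u =
      (μ.rowLen u.1 - u.2 - 1) + (μ.colLen u.2 - u.1 - 1) + 1 := by
    intro u hu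
    rw [YoungDiagram.mem_cells] at hu
    have h1 := YoungDiagram.mem_iff_lt_rowLen.1 (by simpa using hu)
    have h2 := YoungDiagram.mem_iff_lt_colLen.1 (by simpa using hu)
    unfold hookLen
    omega
  -- expand both sides
  have expand1 : ∑ c ∈ μ.cells, (antiHookLen c) ^ 2 =
      (∑ c ∈ μ.cells, c.1 ^ 2) + (∑ c ∈ μ.cells, c.2 ^ 2) + μ.cells.card
        + 2 * (∑ c ∈ μ.cells, c.1 * c.2) + 2 * (∑ c ∈ μ.cells, c.1)
        + 2 * (∑ c ∈ μ.cells, c.2) := by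
    have : ∀ c ∈ μ.cells, (antiHookLen c) ^ 2 =
        c.1 ^ 2 + c.2 ^ 2 + 1 + 2 * (c.1 * c.2) + 2 * c.1 + 2 * c.2 := by
      intro c _; unfold antiHookLen; ring
    rw [Finset.sum_congr rfl this]
    simp [Finset.sum_add_distrib, Finset.mul_sum]
  have expand2 : ∑ c ∈ μ.cells, (hookLen μ c) ^ 2 =
      (∑ c ∈ μ.cells, (μ.rowLen c.1 - c.2 - 1) ^ 2)
        + (∑ c ∈ μ.cells, (μ.colLen c.2 - c.1 - 1) ^ 2) + μ.cells.card
        + 2 * (∑ c ∈ μ.cells, (μ.rowLen c.1 - c.2 - 1) * (μ.colLen c.2 - c.1 - 1))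
        + 2 * (∑ c ∈ μ.cells, (μ.rowLen c.1 - c.2 - 1))
        + 2 * (∑ c ∈ μ.cells, (μ.colLen c.2 - c.1 - 1)) := by
    have : ∀ c ∈ μ.cells, (hookLen μ c) ^ 2 =
        (μ.rowLen c.1 - c.2 - 1) ^ 2 + (μ.colLen c.2 - c.1 - 1) ^ 2 + 1
          + 2 * ((μ.rowLen c.1 - c.2 - 1) * (μ.colLen c.2 - c.1 - 1))
          + 2 * (μ.rowLen c.1 - c.2 - 1) + 2 * (μ.colLen c.2 - c.1 - 1) := by
      intro c hc; rw [hhook c hc]; ring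
    rw [Finset.sum_congr rfl this]
    simp [Finset.sum_add_distrib, Finset.mul_sum]
  rw [expand1, expand2]
  rw [transfer_row μ (fun x => x ^ 2), transfer_col μ (fun x => x ^ 2),
    transfer_row μ (fun x => x), transfer_col μ (fun x => x)]
  have := key_ineq μ
  omega
end

section
/- For every Young diagram λ, the product of area numbers is at most the product of anti-area numbers: ∏_{u∈λ} a(u) ≤ ∏_{u∈λ} a*(u). -/
/-- Area number of a cell: the number of cells of the diagram weakly below and to the right. -/
def areaNum (μ : YoungDiagram) (c : ℕ × ℕ) : ℕ :=
  (μ.cells.filter fun d => c.1 ≤ d.1 ∧ c.2 ≤ d.2).card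

/-- Anti-area number of a cell `(i,j)` (0-indexed): `(i+1)·(j+1)`, the number of cells
weakly above and to the left. -/
def antiAreaNum (c : ℕ × ℕ) : ℕ := (c.1 + 1) * (c.2 + 1)

lemma areaNum_le (μ : YoungDiagram) (c : ℕ × ℕ) (hc : c ∈ μ.cells) :
    areaNum μ c ≤ (μ.colLen c.2 - c.1) * (μ.rowLen c.1 - c.2) := by
  have h : (μ.cells.filter fun d => c.1 ≤ d.1 ∧ c.2 ≤ d.2) ⊆
      Finset.Ico c.1 (μ.colLen c.2) ×ˢ Finset.Ico c.2 (μ.rowLen c.1) := by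
    intro d hd
    simp only [Finset.mem_filter, YoungDiagram.mem_cells] at hd
    obtain ⟨hdμ, h1, h2⟩ := hd
    have hrow : d.2 < μ.rowLen c.1 :=
      lt_of_lt_of_le (YoungDiagram.mem_iff_lt_rowLen.mp (by simpa using hdμ))
        (μ.rowLen_anti _ _ h1)
    have hcol : d.1 < μ.colLen c.2 :=
      lt_of_lt_of_le (YoungDiagram.mem_iff_lt_colLen.mp (by simpa using hdμ))
        (μ.colLen_anti _ _ h2)
    simp [h1, h2, hrow, hcol]
  calc areaNum μ c ≤ (Finset.Ico c.1 (μ.colLen c.2) ×ˢ Finset.Ico c.2 (μ.rowLen c.1)).card :=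
        Finset.card_le_card h
    _ = (μ.colLen c.2 - c.1) * (μ.rowLen c.1 - c.2) := by
        simp [Finset.card_product, Nat.card_Ico]

lemma prod_rowLen (μ : YoungDiagram) :
    ∏ c ∈ μ.cells, (μ.rowLen c.1 - c.2) = ∏ c ∈ μ.cells, (c.2 + 1) := by
  apply Finset.prod_nbij' (fun c => (c.1, μ.rowLen c.1 - 1 - c.2))
    (fun c => (c.1, μ.rowLen c.1 - 1 - c.2))
  · intro c hc
    simp only [YoungDiagram.mem_cells] at *
    have := YoungDiagram.mem_iff_lt_rowLen.mp (show (c.1, c.2) ∈ μ by simpa using hc)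
    exact YoungDiagram.mem_iff_lt_rowLen.mpr (by omega)
  · intro c hc
    simp only [YoungDiagram.mem_cells] at *
    have := YoungDiagram.mem_iff_lt_rowLen.mp (show (c.1, c.2) ∈ μ by simpa using hc)
    exact YoungDiagram.mem_iff_lt_rowLen.mpr (by omega)
  · intro c hc
    simp only [YoungDiagram.mem_cells] at hc
    have := YoungDiagram.mem_iff_lt_rowLen.mp (show (c.1, c.2) ∈ μ by simpa using hc)
    ext <;> simp <;> omega
  · intro c hc
    simp only [YoungDiagram.mem_cells] at hc
    have := YoungDiagram.mem_iff_lt_rowLen.mp (show (c.1, c.2) ∈ μ by simpa using hc)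
    ext <;> simp <;> omega
  · intro c hc
    simp only [YoungDiagram.mem_cells] at hc
    have := YoungDiagram.mem_iff_lt_rowLen.mp (show (c.1, c.2) ∈ μ by simpa using hc)
    simp only
    omega

lemma prod_colLen (μ : YoungDiagram) :
    ∏ c ∈ μ.cells, (μ.colLen c.2 - c.1) = ∏ c ∈ μ.cells, (c.1 + 1) := by
  apply Finset.prod_nbij' (fun c => (μ.colLen c.2 - 1 - c.1, c.2))
    (fun c => (μ.colLen c.2 - 1 - c.1, c.2))
  · intro c hc
    simp only [YoungDiagram.mem_cells] at *
    have := YoungDiagram.mem_iff_lt_colLen.mp (show (c.1, c.2) ∈ μ by simpa using hc)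
    exact YoungDiagram.mem_iff_lt_colLen.mpr (by omega)
  · intro c hc
    simp only [YoungDiagram.mem_cells] at *
    have := YoungDiagram.mem_iff_lt_colLen.mp (show (c.1, c.2) ∈ μ by simpa using hc)
    exact YoungDiagram.mem_iff_lt_colLen.mpr (by omega)
  · intro c hc
    simp only [YoungDiagram.mem_cells] at hc
    have := YoungDiagram.mem_iff_lt_colLen.mp (show (c.1, c.2) ∈ μ by simpa using hc)
    ext <;> simp <;> omega
  · intro c hc
    simp only [YoungDiagram.mem_cells] at hc
    have := YoungDiagram.mem_iff_lt_colLen.mp (show (c.1, c.2) ∈ μ by simpa using hc)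
    ext <;> simp <;> omega
  · intro c hc
    simp only [YoungDiagram.mem_cells] at hc
    have := YoungDiagram.mem_iff_lt_colLen.mp (show (c.1, c.2) ∈ μ by simpa using hc)
    simp only
    omega

theorem prod_area_le_prod_antiArea (μ : YoungDiagram) :
    ∏ c ∈ μ.cells, areaNum μ c ≤ ∏ c ∈ μ.cells, antiAreaNum c := by
  calc ∏ c ∈ μ.cells, areaNum μ c
      ≤ ∏ c ∈ μ.cells, (μ.colLen c.2 - c.1) * (μ.rowLen c.1 - c.2) :=
        Finset.prod_le_prod' fun c hc => areaNum_le μ c hc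
    _ = (∏ c ∈ μ.cells, (μ.colLen c.2 - c.1)) * ∏ c ∈ μ.cells, (μ.rowLen c.1 - c.2) :=
        Finset.prod_mul_distrib
    _ = (∏ c ∈ μ.cells, (c.1 + 1)) * ∏ c ∈ μ.cells, (c.2 + 1) := by
        rw [prod_rowLen, prod_colLen]
    _ = ∏ c ∈ μ.cells, antiAreaNum c := by
        rw [← Finset.prod_mul_distrib]; rfl
end

section
/- For every finite rooted tree τ, the product of branch sizes is at most the product of distances: ∏_{v∈τ} b(v) ≤ ∏_{v∈τ} d(v). -/
/-- Branch size of `v` in a tree with root `R`: the number of vertices `w` whose unique path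
to `R` passes through `v` (i.e. the size of the subtree rooted at `v`). -/
noncomputable def branchSize {V : Type*} (G : SimpleGraph V) (R v : V) : ℕ :=
  ({w : V | G.dist w R = G.dist w v + G.dist v R} : Set V).ncard

/-- Distance number of `v`: the number of vertices on the path from `v` to the root `R`,
including both endpoints. -/
noncomputable def distNum {V : Type*} (G : SimpleGraph V) (R v : V) : ℕ :=
  G.dist v R + 1

-- auxiliary lemmas
open Finset

/-- Chain product lemma: if `ρ` is injective on `C` with values in `[1, |C|]` and `ρ ≤ x`,
then `∏ (x+1) ≤ (|C|+1) ∏ x`. -/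
lemma chainProd {α : Type*} [DecidableEq α] (C : Finset α) (x ρ : α → ℕ)
    (hinj : Set.InjOn ρ C) (h1 : ∀ a ∈ C, 1 ≤ ρ a) (hc : ∀ a ∈ C, ρ a ≤ C.card)
    (hx : ∀ a ∈ C, ρ a ≤ x a) :
    ∏ a ∈ C, (x a + 1) ≤ (C.card + 1) * ∏ a ∈ C, x a := by
  induction C using Finset.strongInduction with
  | _ C IH =>
    rcases C.eq_empty_or_nonempty with rfl | hne
    · simp
    · have himg : C.image ρ = Finset.Icc 1 C.card := by
        apply Finset.eq_of_subset_of_card_le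
        · intro n hn
          simp only [Finset.mem_image] at hn
          obtain ⟨a, ha, rfl⟩ := hn
          exact Finset.mem_Icc.2 ⟨h1 a ha, hc a ha⟩
        · rw [Finset.card_image_of_injOn hinj, Nat.card_Icc]
          simp
      have hmem : C.card ∈ C.image ρ := by
        rw [himg]
        exact Finset.mem_Icc.2 ⟨hne.card_pos, le_rfl⟩
      simp only [Finset.mem_image] at hmem
      obtain ⟨a0, ha0, ha0c⟩ := hmem
      set C' := C.erase a0 with hC'
      have hsub : C' ⊂ C := Finset.erase_ssubset ha0
      have hcard' : C'.card = C.card - 1 := Finset.card_erase_of_mem ha0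
      have hIH : ∏ a ∈ C', (x a + 1) ≤ (C'.card + 1) * ∏ a ∈ C', x a := by
        apply IH C' hsub
        · exact hinj.mono (by exact_mod_cast Finset.erase_subset _ _)
        · exact fun a ha => h1 a (Finset.mem_of_mem_erase ha)
        · intro a ha
          have h1' : ρ a ≤ C.card := hc a (Finset.mem_of_mem_erase ha)
          have h2' : ρ a ≠ C.card := by
            rw [← ha0c]
            intro h
            exact (Finset.ne_of_mem_erase ha) (hinj (Finset.mem_of_mem_erase ha) ha0 h)
          omega
        · exact fun a ha => hx a (Finset.mem_of_mem_erase ha)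
      have hsplit : ∏ a ∈ C, (x a + 1) = (x a0 + 1) * ∏ a ∈ C', (x a + 1) :=
        (Finset.mul_prod_erase C _ ha0).symm
      have hsplit2 : ∏ a ∈ C, x a = x a0 * ∏ a ∈ C', x a :=
        (Finset.mul_prod_erase C _ ha0).symm
      have hxa0 : C.card ≤ x a0 := ha0c ▸ hx a0 ha0
      have hn1 : 1 ≤ C.card := hne.card_pos
      calc ∏ a ∈ C, (x a + 1) = (x a0 + 1) * ∏ a ∈ C', (x a + 1) := hsplit
        _ ≤ (x a0 + 1) * ((C'.card + 1) * ∏ a ∈ C', x a) := by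
            exact Nat.mul_le_mul_left _ hIH
        _ = ((x a0 + 1) * (C'.card + 1)) * ∏ a ∈ C', x a := by ring
        _ ≤ ((C.card + 1) * x a0) * ∏ a ∈ C', x a := by
            apply Nat.mul_le_mul_right
            have : C'.card + 1 = C.card := by omega
            rw [this]
            nlinarith
        _ = (C.card + 1) * ∏ a ∈ C, x a := by rw [hsplit2]; ring

/-- Abstract forest-poset counting lemma: if every principal down-set of `r` is a chain,
then the product of up-set sizes is at most the product of down-set sizes. -/
lemma poset_prod {α : Type*} [DecidableEq α] (r : α → α → Prop) [DecidableRel r] (d : α → ℕ)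
    (hrefl : ∀ a, r a a)
    (htrans : ∀ a b c, r a b → r b c → r a c)
    (hd : ∀ a b, r a b → a ≠ b → d a < d b)
    (hchain : ∀ v a b, r a v → r b v → r a b ∨ r b a)
    (s : Finset α) :
    ∏ a ∈ s, (s.filter fun b => r a b).card ≤ ∏ a ∈ s, (s.filter fun b => r b a).card := by
  have antisymm : ∀ a b, r a b → r b a → a = b := by
    intro a b hab hba
    by_contra hne
    exact absurd (hd a b hab hne) (by have := hd b a hba (Ne.symm hne); omega)
  induction s using Finset.strongInduction with
  | _ s IH =>
    rcases s.eq_empty_or_nonempty with rfl | hne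
    · simp
    · obtain ⟨m, hm, hmax⟩ := s.exists_max_image d hne
      have hmaxm : ∀ b ∈ s, r m b → b = m := by
        intro b hb hmb
        by_contra hbm
        exact absurd (hd m b hmb (Ne.symm hbm)) (by have := hmax b hb; omega)
      set s' := s.erase m with hs'
      have hms' : m ∉ s' := Finset.notMem_erase _ _
      have hins : s = insert m s' := (Finset.insert_erase hm).symm
      set C := s'.filter (fun a => r a m) with hC
      have hCs' : C ⊆ s' := Finset.filter_subset _ _
      -- up-set of m in s is {m}
      have hupm : (s.filter fun b => r m b) = {m} := by
        ext b
        simp only [Finset.mem_filter, Finset.mem_singleton]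
        constructor
        · rintro ⟨hb, hrb⟩; exact hmaxm b hb hrb
        · rintro rfl; exact ⟨hm, hrefl _⟩
      -- down-set of m in s has card C.card + 1
      have hdownm : (s.filter fun b => r b m).card = C.card + 1 := by
        rw [hins, Finset.filter_insert, if_pos (hrefl m),
          Finset.card_insert_of_notMem (fun h => hms' (Finset.filter_subset _ _ h))]
      -- up-sets within s vs s'
      have hup : ∀ a ∈ s', (s.filter fun b => r a b).card
          = (s'.filter fun b => r a b).card + (if r a m then 1 else 0) := by
        intro a _
        rw [hins, Finset.filter_insert]
        split_ifs with h
        · rw [Finset.card_insert_of_notMem (fun h' => hms' (Finset.filter_subset _ _ h'))]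
        · rfl
      -- LHS decomposition
      have hLHS : ∏ a ∈ s, (s.filter fun b => r a b).card
          = (∏ a ∈ C, ((s'.filter fun b => r a b).card + 1))
            * ∏ a ∈ s'.filter (fun a => ¬ r a m), (s'.filter fun b => r a b).card := by
        rw [hins, Finset.prod_insert hms', ← hins, hupm, Finset.card_singleton, one_mul]
        rw [Finset.prod_congr rfl hup]
        rw [← Finset.prod_filter_mul_prod_filter_not s' (fun a => r a m)]
        congr 1
        · exact Finset.prod_congr rfl (fun a ha => by
            rw [if_pos (Finset.mem_filter.1 ha).2])
        · exact Finset.prod_congr rfl (fun a ha => by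
            rw [if_neg (Finset.mem_filter.1 ha).2, add_zero])
      -- apply chainProd on C
      have hkey : ∏ a ∈ C, ((s'.filter fun b => r a b).card + 1)
          ≤ (C.card + 1) * ∏ a ∈ C, (s'.filter fun b => r a b).card := by
        apply chainProd C _ (fun a => (C.filter fun b => r a b).card)
        · -- injectivity
          intro a ha b hb hab
          by_contra hne
          have ha' : a ∈ C := ha
          have hb' : b ∈ C := hb
          have hram : r a m := (Finset.mem_filter.1 ha').2
          have hrbm : r b m := (Finset.mem_filter.1 hb').2
          have key : ∀ u v, u ∈ C → v ∈ C → r u v → u ≠ v →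
              (C.filter fun c => r v c).card < (C.filter fun c => r u c).card := by
            intro u v hu hv huv hneq
            apply Finset.card_lt_card
            constructor
            · intro c hc
              obtain ⟨hcC, hvc⟩ := Finset.mem_filter.1 hc
              exact Finset.mem_filter.2 ⟨hcC, htrans u v c huv hvc⟩
            · intro hsub
              have : u ∈ C.filter fun c => r v c := hsub (Finset.mem_filter.2 ⟨hu, hrefl u⟩)
              exact hneq (antisymm u v huv (Finset.mem_filter.1 this).2)
          have hab' : (C.filter fun c => r a c).card = (C.filter fun c => r b c).card := hab
          rcases hchain m a b hram hrbm with h | h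
          · have := key a b ha' hb' h hne; omega
          · have := key b a hb' ha' h (Ne.symm hne); omega
        · intro a ha
          have : a ∈ C.filter fun b => r a b := Finset.mem_filter.2 ⟨ha, hrefl a⟩
          exact Finset.card_pos.2 ⟨a, this⟩
        · intro a _
          exact Finset.card_le_card (Finset.filter_subset _ _)
        · intro a _
          exact Finset.card_le_card (Finset.filter_subset_filter _ hCs')
      -- RHS lower bound
      have hRHS : (C.card + 1) * ∏ a ∈ s', (s'.filter fun b => r b a).card
          ≤ ∏ a ∈ s, (s.filter fun b => r b a).card := by
        rw [hins, Finset.prod_insert hms', ← hins, hdownm]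
        apply Nat.mul_le_mul_left
        apply Finset.prod_le_prod'
        intro a _
        exact Finset.card_le_card (Finset.filter_subset_filter _ (Finset.erase_subset _ _))
      calc ∏ a ∈ s, (s.filter fun b => r a b).card
          = (∏ a ∈ C, ((s'.filter fun b => r a b).card + 1))
            * ∏ a ∈ s'.filter (fun a => ¬ r a m), (s'.filter fun b => r a b).card := hLHS
        _ ≤ ((C.card + 1) * ∏ a ∈ C, (s'.filter fun b => r a b).card)
            * ∏ a ∈ s'.filter (fun a => ¬ r a m), (s'.filter fun b => r a b).card :=
            Nat.mul_le_mul_right _ hkey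
        _ = (C.card + 1) * ∏ a ∈ s', (s'.filter fun b => r a b).card := by
            rw [mul_assoc, Finset.prod_filter_mul_prod_filter_not s' (fun a => r a m)]
        _ ≤ (C.card + 1) * ∏ a ∈ s', (s'.filter fun b => r b a).card :=
            Nat.mul_le_mul_left _ (IH s' (Finset.erase_ssubset hm))
        _ ≤ ∏ a ∈ s, (s.filter fun b => r b a).card := hRHS

open SimpleGraph Walk

/-- In a tree, every path realizes the distance between its endpoints. -/
lemma tree_path_length_eq_dist {V : Type*} [DecidableEq V] {G : SimpleGraph V} (hG : G.IsTree) {a b : V}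
    (p : G.Walk a b) (hp : p.IsPath) : p.length = G.dist a b := by
  refine le_antisymm ?_ (SimpleGraph.dist_le p)
  obtain ⟨w, hw⟩ := hG.isConnected.exists_walk_length_eq_dist a b
  have heq := hG.IsAcyclic.path_unique ⟨p, hp⟩ ⟨w.bypass, w.bypass_isPath⟩
  calc p.length = w.bypass.length := congrArg (fun q : G.Path a b => q.1.length) heq
    _ ≤ w.length := w.length_bypass_le
    _ = G.dist a b := hw

/-- In a tree there is a geodesic path between any two vertices. -/
lemma exists_geodesic {V : Type*} [DecidableEq V] {G : SimpleGraph V} (hG : G.IsTree) (a b : V) :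
    ∃ p : G.Walk a b, p.IsPath ∧ p.length = G.dist a b := by
  obtain ⟨w⟩ := hG.isConnected.preconnected a b
  exact ⟨w.bypass, w.bypass_isPath, tree_path_length_eq_dist hG _ w.bypass_isPath⟩

/-- Splitting distances along a path in a tree. -/
lemma split_dist {V : Type*} [DecidableEq V] {G : SimpleGraph V} (hG : G.IsTree) {x y : V} (p : G.Walk x y)
    (hp : p.IsPath) {u : V} (hu : u ∈ p.support) :
    G.dist x y = G.dist x u + G.dist u y := by
  have hsplit := p.take_spec hu
  have h1 : (p.takeUntil u hu).IsPath := hp.takeUntil hu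
  have h2 : (p.dropUntil u hu).IsPath := hp.dropUntil hu
  have hl : (p.takeUntil u hu).length + (p.dropUntil u hu).length = p.length := by
    rw [← SimpleGraph.Walk.length_append, hsplit]
  have e0 := tree_path_length_eq_dist hG p hp
  have e1 := tree_path_length_eq_dist hG _ h1
  have e2 := tree_path_length_eq_dist hG _ h2
  omega

/-- If `u` is an ancestor of `v` (metrically), then `u` lies on any path from `v` to the root. -/
lemma anc_mem_support {V : Type*} [DecidableEq V] {G : SimpleGraph V} (hG : G.IsTree) {R u : V} :
    ∀ (n : ℕ) {v : V} (p : G.Walk v R), p.IsPath → G.dist v u = n →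
      G.dist v R = G.dist v u + G.dist u R → u ∈ p.support := by
  intro n
  induction n using Nat.strong_induction_on with
  | _ n IH =>
    intro v p hp hn hanc
    by_cases hvu : v = u
    · subst hvu; exact p.start_mem_support
    · have hpos : 0 < G.dist v u := hG.isConnected.pos_dist_of_ne hvu
      obtain ⟨q, hq, hqlen⟩ := exists_geodesic hG v u
      cases q with
      | nil => exact absurd rfl hvu
      | @cons _ w _ h q' =>
        have hq' : q'.IsPath := hq.of_cons
        have hq'len : q'.length = G.dist w u := tree_path_length_eq_dist hG q' hq'
        have hdvu : G.dist v u = G.dist w u + 1 := by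
          rw [Walk.length_cons] at hqlen; omega
        have tri1 : G.dist v R ≤ G.dist v w + G.dist w R := hG.isConnected.dist_triangle
        have hvw : G.dist v w ≤ 1 := by
          have := SimpleGraph.dist_le (Walk.cons h Walk.nil)
          simpa using this
        have tri2 : G.dist w R ≤ G.dist w u + G.dist u R := hG.isConnected.dist_triangle
        have hanc' : G.dist w R = G.dist w u + G.dist u R := by omega
        have hvwR : G.dist v R = G.dist w R + 1 := by omega
        obtain ⟨p', hp', hp'len⟩ := exists_geodesic hG w R
        have hu' : u ∈ p'.support := IH (G.dist w u) (by omega) p' hp' rfl hanc'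
        have hvp' : v ∉ p'.support := by
          intro hv
          have := split_dist hG p' hp' hv
          omega
        have hpath : (Walk.cons h p').IsPath := hp'.cons hvp'
        have heq := hG.IsAcyclic.path_unique ⟨Walk.cons h p', hpath⟩ ⟨p, hp⟩
        have hs : (Walk.cons h p').support = p.support :=
          congrArg (fun q : G.Path v R => q.1.support) heq
        rw [← hs, Walk.support_cons]
        exact List.mem_cons_of_mem _ hu'

/-- Two vertices on a common root path are comparable. -/
lemma support_comparable {V : Type*} [DecidableEq V] {G : SimpleGraph V} (hG : G.IsTree) {R v : V}
    (p : G.Walk v R) (hp : p.IsPath) {a b : V} (ha : a ∈ p.support) (hb : b ∈ p.support) :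
    G.dist b R = G.dist b a + G.dist a R ∨ G.dist a R = G.dist a b + G.dist b R := by
  have hb' := hb
  rw [← p.take_spec ha, Walk.mem_support_append_iff] at hb'
  rcases hb' with hbt | hbd
  · left
    have h1 : G.dist v a = G.dist v b + G.dist b a :=
      split_dist hG _ (hp.takeUntil ha) hbt
    have h2 : G.dist v R = G.dist v a + G.dist a R := split_dist hG p hp ha
    have h3 : G.dist v R = G.dist v b + G.dist b R := split_dist hG p hp hb
    have tri : G.dist b R ≤ G.dist b a + G.dist a R := hG.isConnected.dist_triangle
    omega
  · right
    exact split_dist hG _ (hp.dropUntil ha) hbd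

theorem prod_branch_le_prod_dist {V : Type*} [Fintype V] (G : SimpleGraph V)
    (hG : G.IsTree) (R : V) :
    ∏ v : V, branchSize G R v ≤ ∏ v : V, distNum G R v := by
  classical
  have hconn := hG.isConnected
  set r : V → V → Prop := fun a b => G.dist b R = G.dist b a + G.dist a R with hr
  -- rewrite branchSize as a filter card
  have hb : ∀ v, branchSize G R v = (Finset.univ.filter fun w => r v w).card := by
    intro v
    rw [branchSize, Set.ncard_eq_toFinset_card']
    congr 1
    ext w
    simp [hr]
  -- down-set cardinality
  have hdown : ∀ v, (Finset.univ.filter fun u => r u v).card = G.dist v R + 1 := by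
    intro v
    obtain ⟨p, hp, hplen⟩ := exists_geodesic hG v R
    have hset : (Finset.univ.filter fun u => r u v) = p.support.toFinset := by
      ext u
      simp only [Finset.mem_filter, Finset.mem_univ, true_and, List.mem_toFinset, hr]
      constructor
      · intro h
        exact anc_mem_support hG (G.dist v u) p hp rfl h
      · intro h
        exact split_dist hG p hp h
    rw [hset, List.toFinset_card_of_nodup hp.support_nodup, Walk.length_support, hplen]
  -- main inequality
  have hmain := poset_prod r (fun a => G.dist a R)
    (by intro a; simp [hr])
    (by
      intro a b c hab hbc
      have t1 : G.dist c a ≤ G.dist c b + G.dist b a := hconn.dist_triangle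
      have t2 : G.dist c R ≤ G.dist c a + G.dist a R := hconn.dist_triangle
      simp only [hr] at *
      omega)
    (by
      intro a b hab hne
      have hpos : 0 < G.dist b a := hconn.pos_dist_of_ne (Ne.symm hne)
      simp only [hr] at hab
      show G.dist a R < G.dist b R
      omega)
    (by
      intro v a b hav hbv
      obtain ⟨p, hp, hplen⟩ := exists_geodesic hG v R
      have ha : a ∈ p.support := anc_mem_support hG (G.dist v a) p hp rfl hav
      have hb' : b ∈ p.support := anc_mem_support hG (G.dist v b) p hp rfl hbv
      exact support_comparable hG p hp ha hb')
    Finset.univ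
  calc ∏ v : V, branchSize G R v
      = ∏ v ∈ Finset.univ, (Finset.univ.filter fun w => r v w).card := by
        exact Finset.prod_congr rfl (fun v _ => hb v)
    _ ≤ ∏ v ∈ Finset.univ, (Finset.univ.filter fun w => r w v).card := hmain
    _ = ∏ v : V, distNum G R v := by
        exact Finset.prod_congr rfl (fun v _ => by rw [hdown v]; rfl)
end

section
/- For a finite rooted tree τ on n vertices, the product of branch sizes equals the product of distances, ∏_{v∈τ} b(v) = ∏_{v∈τ} d(v), if and only if τ is a path with one endpoint at the root. -/
set_option linter.unusedSectionVars false

open Finset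

namespace TreeProdAux

variable {V : Type*} [DecidableEq V]

/-- Descendants of `v` within `s`, for parent map `f` and depth map `h`. -/
def desc (f : V → V) (h : V → ℕ) (s : Finset V) (v : V) : Finset V :=
  s.filter (fun w => f^[h w - h v] w = v)

/-- `s` is a valid rooted tree structure for parent map `f`, depth `h`, root `R`. -/
structure Good (f : V → V) (h : V → ℕ) (R : V) (s : Finset V) : Prop where
  hR : R ∈ s
  mem : ∀ v ∈ s, v ≠ R → f v ∈ s
  zero : ∀ v ∈ s, (h v = 0 ↔ v = R)
  step : ∀ v ∈ s, v ≠ R → h (f v) + 1 = h v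

variable {f : V → V} {h : V → ℕ} {R : V} {s : Finset V}

lemma Good.hRzero (G : Good f h R s) : h R = 0 := (G.zero R G.hR).mpr rfl

lemma Good.iter_spec (G : Good f h R s) {w : V} (hw : w ∈ s) :
    ∀ k, k ≤ h w → f^[k] w ∈ s ∧ h (f^[k] w) = h w - k := by
  intro k
  induction k with
  | zero => intro _; simpa using hw
  | succ k ih =>
    intro hk
    obtain ⟨hm, hh⟩ := ih (by omega)
    have hne : f^[k] w ≠ R := by
      intro e
      have := G.hRzero
      rw [e] at hh
      omega
    rw [Function.iterate_succ_apply']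
    refine ⟨G.mem _ hm hne, ?_⟩
    have := G.step _ hm hne
    omega

lemma Good.iter_root (G : Good f h R s) {w : V} (hw : w ∈ s) : f^[h w] w = R := by
  obtain ⟨hm, hh⟩ := G.iter_spec hw (h w) le_rfl
  have : h (f^[h w] w) = 0 := by omega
  exact (G.zero _ hm).mp this

lemma mem_desc {v w : V} : w ∈ desc f h s v ↔ w ∈ s ∧ f^[h w - h v] w = v := by
  simp [desc]

lemma self_mem_desc {v : V} (hv : v ∈ s) : v ∈ desc f h s v := by
  simp [mem_desc, hv]

lemma card_desc_pos {v : V} (hv : v ∈ s) : 1 ≤ (desc f h s v).card :=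
  Finset.card_pos.mpr ⟨v, self_mem_desc hv⟩

lemma Good.desc_root (G : Good f h R s) : desc f h s R = s := by
  ext w
  simp only [mem_desc, and_iff_left_iff_imp]
  intro hw
  rw [G.hRzero, Nat.sub_zero]
  exact G.iter_root hw

lemma desc_erase (x v : V) : desc f h (s.erase x) v = (desc f h s v).erase x := by
  simp [desc, Finset.filter_erase]

/-- Telescoping product bound. -/
lemma tel (b : ℕ → ℕ) : ∀ m : ℕ, (∀ i < m, i + 1 ≤ b i) →
    ((∏ i ∈ range m, (b i + 1)) ≤ (m + 1) * ∏ i ∈ range m, b i ∧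
      ((∏ i ∈ range m, (b i + 1)) = (m + 1) * ∏ i ∈ range m, b i →
        ∀ i < m, b i = i + 1)) := by
  intro m
  induction m with
  | zero => simp
  | succ m ih =>
    intro hb
    obtain ⟨ih1, ih2⟩ := ih (fun i hi => hb i (by omega))
    have hbm : m + 1 ≤ b m := hb m (by omega)
    have hQ : 0 < ∏ i ∈ range m, b i :=
      Finset.prod_pos (fun i hi => by
        have h' := mem_range.mp hi
        have := hb i (by omega); omega)
    rw [prod_range_succ, prod_range_succ]
    have key : (m + 1) * (b m + 1) ≤ (m + 2) * b m := by nlinarith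
    constructor
    · calc (∏ i ∈ range m, (b i + 1)) * (b m + 1)
          ≤ ((m + 1) * ∏ i ∈ range m, b i) * (b m + 1) := by
            exact Nat.mul_le_mul_right _ ih1
        _ = (∏ i ∈ range m, b i) * ((m + 1) * (b m + 1)) := by ring
        _ ≤ (∏ i ∈ range m, b i) * ((m + 2) * b m) := Nat.mul_le_mul_left _ key
        _ = (m + 1 + 1) * ((∏ i ∈ range m, b i) * b m) := by ring
    · intro he
      have h1 : (∏ i ∈ range m, (b i + 1)) * (b m + 1)
          ≤ ((m + 1) * ∏ i ∈ range m, b i) * (b m + 1) :=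
        Nat.mul_le_mul_right _ ih1
      have h2 : ((m + 1) * ∏ i ∈ range m, b i) * (b m + 1)
          ≤ (m + 1 + 1) * ((∏ i ∈ range m, b i) * b m) := by
        calc ((m + 1) * ∏ i ∈ range m, b i) * (b m + 1)
            = (∏ i ∈ range m, b i) * ((m + 1) * (b m + 1)) := by ring
          _ ≤ (∏ i ∈ range m, b i) * ((m + 2) * b m) := Nat.mul_le_mul_left _ key
          _ = (m + 1 + 1) * ((∏ i ∈ range m, b i) * b m) := by ring
      have e1 : (∏ i ∈ range m, (b i + 1)) * (b m + 1)
          = ((m + 1) * ∏ i ∈ range m, b i) * (b m + 1) := by omega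
      have e2 : ((m + 1) * ∏ i ∈ range m, b i) * (b m + 1)
          = (m + 1 + 1) * ((∏ i ∈ range m, b i) * b m) := by omega
      have eP : (∏ i ∈ range m, (b i + 1)) = (m + 1) * ∏ i ∈ range m, b i :=
        Nat.eq_of_mul_eq_mul_right (by omega) e1
      have ebm : b m = m + 1 := by nlinarith [e2, hQ]
      intro i hi
      rcases Nat.lt_succ_iff_lt_or_eq.mp hi with hi' | rfl
      · exact ih2 eP i hi'
      · omega

end TreeProdAux

namespace TreeProdAux

variable {V : Type*} [DecidableEq V] {f : V → V} {h : V → ℕ} {R : V}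

theorem main : ∀ (n : ℕ) (s : Finset V), s.card = n → Good f h R s →
    ((∏ v ∈ s, (desc f h s v).card) ≤ ∏ v ∈ s, (h v + 1)) ∧
    ((∏ v ∈ s, (desc f h s v).card) = (∏ v ∈ s, (h v + 1)) → Set.InjOn h ↑s) := by
  intro n
  induction n using Nat.strong_induction_on with
  | _ n IH =>
  intro s hcard G
  obtain ⟨x, hxs, hxmax⟩ := Finset.exists_max_image s h ⟨R, G.hR⟩
  by_cases hm0 : h x = 0
  · -- s = {R}
    have hsR : s = {R} := by
      apply Finset.eq_singleton_iff_unique_mem.mpr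
      refine ⟨G.hR, fun v hv => ?_⟩
      have : h v = 0 := by have := hxmax v hv; omega
      exact (G.zero v hv).mp this
    subst hsR
    rw [Finset.prod_singleton, Finset.prod_singleton, G.desc_root,
      Finset.card_singleton, G.hRzero]
    exact ⟨le_rfl, fun _ => by simp [Set.InjOn]⟩
  · -- main case: h x = m > 0
    have hxR : x ≠ R := by
      intro e; rw [e, G.hRzero] at hm0; exact hm0 rfl
    have hRx : R ≠ x := Ne.symm hxR
    have hxnotin : x ∉ s.erase x := Finset.notMem_erase _ _
    have hRs' : R ∈ s.erase x := Finset.mem_erase.mpr ⟨hRx, G.hR⟩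
    have G' : Good f h R (s.erase x) := by
      refine ⟨hRs', fun v hv hvR => ?_, fun v hv => G.zero v (Finset.mem_of_mem_erase hv),
        fun v hv => G.step v (Finset.mem_of_mem_erase hv)⟩
      have hvs : v ∈ s := Finset.mem_of_mem_erase hv
      refine Finset.mem_erase.mpr ⟨?_, G.mem v hvs hvR⟩
      intro e
      have h1 := G.step v hvs hvR
      have h2 := hxmax v hvs
      rw [e] at h1
      omega
    have hcard' : (s.erase x).card + 1 = n := by
      rw [Finset.card_erase_of_mem hxs]
      have : 0 < s.card := Finset.card_pos.mpr ⟨x, hxs⟩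
      omega
    have hu : ∀ j ≤ h x, f^[j] x ∈ s ∧ h (f^[j] x) = h x - j :=
      fun j hj => G.iter_spec hxs j hj
    have hus' : ∀ j, 1 ≤ j → j ≤ h x → f^[j] x ∈ s.erase x := by
      intro j h1 h2
      obtain ⟨hmem, hh⟩ := hu j h2
      refine Finset.mem_erase.mpr ⟨?_, hmem⟩
      intro e; rw [e] at hh; omega
    set A : Finset V := (Finset.range (h x)).image (fun i => f^[i + 1] x) with hA
    have hinj : ∀ i ∈ Finset.range (h x), ∀ j ∈ Finset.range (h x),
        f^[i + 1] x = f^[j + 1] x → i = j := by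
      intro i hi j hj e
      have hi' := Finset.mem_range.mp hi
      have hj' := Finset.mem_range.mp hj
      have h1 := (hu (i + 1) (by omega)).2
      have h2 := (hu (j + 1) (by omega)).2
      rw [e] at h1
      omega
    have hAcard : A.card = h x := by
      rw [hA, Finset.card_image_of_injOn (fun a ha b hb => hinj a ha b hb), Finset.card_range]
    have hAs' : A ⊆ s.erase x := by
      intro v hv
      obtain ⟨i, hi, rfl⟩ := Finset.mem_image.mp hv
      exact hus' (i + 1) (by omega) (by have := Finset.mem_range.mp hi; omega)
    have desc_x : desc f h s x = {x} := by
      ext w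
      rw [Finset.mem_singleton, mem_desc]
      constructor
      · rintro ⟨hw, he⟩
        have hle := hxmax w hw
        have h0 : h w - h x = 0 := by omega
        rwa [h0, Function.iterate_zero_apply] at he
      · rintro rfl
        exact ⟨hxs, by simp⟩
    have mem_A_iff : ∀ v ∈ s.erase x, (x ∈ desc f h s v ↔ v ∈ A) := by
      intro v hv
      have hvx : v ≠ x := (Finset.mem_erase.mp hv).1
      constructor
      · intro hxv
        obtain ⟨-, he⟩ := mem_desc.mp hxv
        have hhv : h v < h x := by
          by_contra hc
          have h0 : h x - h v = 0 := by omega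
          rw [h0, Function.iterate_zero_apply] at he
          exact hvx he.symm
        refine Finset.mem_image.mpr ⟨h x - h v - 1, Finset.mem_range.mpr (by omega), ?_⟩
        have harith : h x - h v - 1 + 1 = h x - h v := by omega
        rw [harith]; exact he
      · intro hvA
        obtain ⟨i, hi, rfl⟩ := Finset.mem_image.mp hvA
        have hi' := Finset.mem_range.mp hi
        have hh := (hu (i + 1) (by omega)).2
        rw [mem_desc]
        refine ⟨hxs, ?_⟩
        have harith : h x - h (f^[i + 1] x) = i + 1 := by omega
        rw [harith]
    have card_rel : ∀ v ∈ s.erase x, (desc f h s v).card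
        = if v ∈ A then (desc f h (s.erase x) v).card + 1 else (desc f h (s.erase x) v).card := by
      intro v hv
      rw [desc_erase]
      by_cases hxv : x ∈ desc f h s v
      · rw [if_pos ((mem_A_iff v hv).mp hxv), Finset.card_erase_of_mem hxv]
        have : 1 ≤ (desc f h s v).card := Finset.card_pos.mpr ⟨x, hxv⟩
        omega
      · rw [if_neg (fun hA' => hxv ((mem_A_iff v hv).mpr hA')), Finset.erase_eq_of_notMem hxv]
    -- chain lower bound
    have hBbound : ∀ i < h x, i + 1 ≤ (desc f h (s.erase x) (f^[i + 1] x)).card := by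
      intro i hi
      have hsub : (Finset.range (i + 1)).image (fun j => f^[j + 1] x)
          ⊆ desc f h (s.erase x) (f^[i + 1] x) := by
        intro w hw
        obtain ⟨j, hj, rfl⟩ := Finset.mem_image.mp hw
        have hj' := Finset.mem_range.mp hj
        rw [mem_desc]
        refine ⟨hus' (j + 1) (by omega) (by omega), ?_⟩
        have hhj := (hu (j + 1) (by omega)).2
        have hhi := (hu (i + 1) (by omega)).2
        have harith : h (f^[j + 1] x) - h (f^[i + 1] x) = i - j := by omega
        rw [harith, ← Function.iterate_add_apply]
        have harith2 : i - j + (j + 1) = i + 1 := by omega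
        rw [harith2]
      have hcardC : ((Finset.range (i + 1)).image (fun j => f^[j + 1] x)).card = i + 1 := by
        rw [Finset.card_image_of_injOn, Finset.card_range]
        intro a ha b hb e
        have ha' := Finset.mem_range.mp ha
        have hb' := Finset.mem_range.mp hb
        exact hinj a (Finset.mem_range.mpr (by omega)) b (Finset.mem_range.mpr (by omega)) e
      calc i + 1 = _ := hcardC.symm
        _ ≤ _ := Finset.card_le_card hsub
    -- product computations
    have prod_b_split : ∏ v ∈ s, (desc f h s v).card
        = ∏ v ∈ s.erase x, (desc f h s v).card := by
      rw [← Finset.mul_prod_erase s _ hxs, desc_x, Finset.card_singleton, one_mul]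
    have prod_s'_eq : ∏ v ∈ s.erase x, (desc f h s v).card
        = (∏ v ∈ A, ((desc f h (s.erase x) v).card + 1))
          * ∏ v ∈ (s.erase x) \ A, (desc f h (s.erase x) v).card := by
      rw [Finset.prod_congr rfl card_rel, Finset.prod_ite,
        Finset.filter_mem_eq_inter, Finset.inter_eq_right.mpr hAs', ← Finset.sdiff_eq_filter]
    have prod_b' : ∏ v ∈ s.erase x, (desc f h (s.erase x) v).card
        = (∏ v ∈ A, (desc f h (s.erase x) v).card)
          * ∏ v ∈ (s.erase x) \ A, (desc f h (s.erase x) v).card :=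
      by rw [← Finset.prod_sdiff hAs', mul_comm]
    have prodA1 : ∏ v ∈ A, ((desc f h (s.erase x) v).card + 1)
        = ∏ i ∈ Finset.range (h x), ((desc f h (s.erase x) (f^[i + 1] x)).card + 1) := by
      rw [hA, Finset.prod_image hinj]
    have prodA2 : ∏ v ∈ A, (desc f h (s.erase x) v).card
        = ∏ i ∈ Finset.range (h x), (desc f h (s.erase x) (f^[i + 1] x)).card := by
      rw [hA, Finset.prod_image hinj]
    obtain ⟨tel1, tel2⟩ := tel (fun i => (desc f h (s.erase x) (f^[i + 1] x)).card) (h x) hBbound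
    have prod_d : ∏ v ∈ s, (h v + 1) = (h x + 1) * ∏ v ∈ s.erase x, (h v + 1) :=
      (Finset.mul_prod_erase s _ hxs).symm
    obtain ⟨ih1, ih2⟩ := IH (s.erase x).card (by omega) (s.erase x) rfl G'
    have hQrest_pos : 0 < ∏ v ∈ (s.erase x) \ A, (desc f h (s.erase x) v).card :=
      Finset.prod_pos (fun v hv => card_desc_pos (Finset.mem_sdiff.mp hv).1)
    -- master inequality chain
    have chain1 : ∏ v ∈ s, (desc f h s v).card
        ≤ (h x + 1) * ∏ v ∈ s.erase x, (desc f h (s.erase x) v).card := by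
      rw [prod_b_split, prod_s'_eq, prodA1, prod_b', prodA2, ← mul_assoc]
      exact Nat.mul_le_mul_right _ tel1
    have chain2 : (h x + 1) * ∏ v ∈ s.erase x, (desc f h (s.erase x) v).card
        ≤ (h x + 1) * ∏ v ∈ s.erase x, (h v + 1) :=
      Nat.mul_le_mul_left _ ih1
    constructor
    · calc ∏ v ∈ s, (desc f h s v).card ≤ _ := chain1
        _ ≤ _ := chain2
        _ = ∏ v ∈ s, (h v + 1) := prod_d.symm
    · intro E
      have e3 : (h x + 1) * ∏ v ∈ s.erase x, (desc f h (s.erase x) v).card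
          = (h x + 1) * ∏ v ∈ s.erase x, (h v + 1) := by
        rw [prod_d] at E
        omega
      have eb' : ∏ v ∈ s.erase x, (desc f h (s.erase x) v).card
          = ∏ v ∈ s.erase x, (h v + 1) :=
        Nat.eq_of_mul_eq_mul_left (by omega) e3
      have injOn' := ih2 eb'
      -- telescoping equality
      have e4 : ∏ v ∈ s, (desc f h s v).card
          = (h x + 1) * ∏ v ∈ s.erase x, (desc f h (s.erase x) v).card := by
        rw [E, prod_d, ← e3]
      rw [prod_b_split, prod_s'_eq, prodA1, prod_b', prodA2] at e4
      have ePA : (∏ i ∈ Finset.range (h x), ((desc f h (s.erase x) (f^[i + 1] x)).card + 1))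
          = (h x + 1) * ∏ i ∈ Finset.range (h x), (desc f h (s.erase x) (f^[i + 1] x)).card :=
        Nat.eq_of_mul_eq_mul_right hQrest_pos (by rw [e4]; ring)
      have hBeq := tel2 ePA
      -- card of s.erase x equals h x
      have humR : f^[h x] x = R := G.iter_root hxs
      have hdesc_full : desc f h (s.erase x) (f^[h x] x) = s.erase x := by
        rw [humR]; exact G'.desc_root
      have hcards' : (s.erase x).card = h x := by
        have h1 : h x - 1 + 1 = h x := by omega
        have h2 := hBeq (h x - 1) (by omega)
        simp only [h1] at h2
        rw [hdesc_full] at h2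
        omega
      -- no vertex of depth h x in s.erase x
      have hnodepth : ∀ v ∈ s.erase x, h v ≠ h x := by
        intro v hv hvm
        have hvs := Finset.mem_of_mem_erase hv
        have hvx : v ≠ x := (Finset.mem_erase.mp hv).1
        have hCsub : (Finset.range (h x + 1)).image (fun j => f^[j] v) ⊆ s.erase x := by
          intro w hw
          obtain ⟨j, hj, rfl⟩ := Finset.mem_image.mp hw
          have hj' := Finset.mem_range.mp hj
          obtain ⟨hmem, hh⟩ := G.iter_spec hvs j (by omega)
          refine Finset.mem_erase.mpr ⟨?_, hmem⟩
          intro e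
          rw [e] at hh
          have hj0 : j = 0 := by omega
          rw [hj0, Function.iterate_zero_apply] at e
          exact hvx e
        have hCcard : ((Finset.range (h x + 1)).image (fun j => f^[j] v)).card = h x + 1 := by
          rw [Finset.card_image_of_injOn, Finset.card_range]
          intro a ha b hb e
          have ha' := Finset.mem_range.mp ha
          have hb' := Finset.mem_range.mp hb
          have e' : f^[a] v = f^[b] v := e
          have h1 := (G.iter_spec hvs a (by omega)).2
          have h2 := (G.iter_spec hvs b (by omega)).2
          rw [e'] at h1
          omega
        have := Finset.card_le_card hCsub
        omega
      -- final injectivity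
      intro a ha b hb hab
      rw [Finset.mem_coe] at ha hb
      by_cases hax : a = x <;> by_cases hbx : b = x
      · rw [hax, hbx]
      · exfalso
        subst hax
        exact hnodepth b (Finset.mem_erase.mpr ⟨hbx, hb⟩) hab.symm
      · exfalso
        subst hbx
        exact hnodepth a (Finset.mem_erase.mpr ⟨hax, ha⟩) hab
      · exact injOn' (Finset.mem_coe.mpr (Finset.mem_erase.mpr ⟨hax, ha⟩))
          (Finset.mem_coe.mpr (Finset.mem_erase.mpr ⟨hbx, hb⟩)) hab

end TreeProdAux

namespace TreeProdAux

variable {V : Type*} [DecidableEq V] {f : V → V} {h : V → ℕ} {R : V} {s : Finset V}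

theorem main_rev (G : Good f h R s) (hinj : Set.InjOn h ↑s) :
    ∏ v ∈ s, (desc f h s v).card = ∏ v ∈ s, (h v + 1) := by
  set n := s.card with hn
  -- every depth is < n
  have hlt : ∀ v ∈ s, h v < n := by
    intro v hv
    have hCsub : (Finset.range (h v + 1)).image (fun j => f^[j] v) ⊆ s := by
      intro w hw
      obtain ⟨j, hj, rfl⟩ := Finset.mem_image.mp hw
      exact (G.iter_spec hv j (by have := Finset.mem_range.mp hj; omega)).1
    have hCcard : ((Finset.range (h v + 1)).image (fun j => f^[j] v)).card = h v + 1 := by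
      rw [Finset.card_image_of_injOn, Finset.card_range]
      intro a ha b hb e
      have ha' := Finset.mem_range.mp ha
      have hb' := Finset.mem_range.mp hb
      have e' : f^[a] v = f^[b] v := e
      have h1 := (G.iter_spec hv a (by omega)).2
      have h2 := (G.iter_spec hv b (by omega)).2
      rw [e'] at h1
      omega
    have := Finset.card_le_card hCsub
    omega
  have himg : s.image h = Finset.range n := by
    apply Finset.eq_of_subset_of_card_le
    · intro k hk
      obtain ⟨v, hv, rfl⟩ := Finset.mem_image.mp hk
      exact Finset.mem_range.mpr (hlt v hv)
    · rw [Finset.card_range, Finset.card_image_of_injOn hinj]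
  have hdesc : ∀ v ∈ s, desc f h s v = s.filter (fun w => h v ≤ h w) := by
    intro v hv
    ext w
    rw [mem_desc, Finset.mem_filter]
    constructor
    · rintro ⟨hw, he⟩
      refine ⟨hw, ?_⟩
      by_contra hc
      have h0 : h w - h v = 0 := by omega
      rw [h0, Function.iterate_zero_apply] at he
      subst he
      omega
    · rintro ⟨hw, hle⟩
      refine ⟨hw, ?_⟩
      obtain ⟨hmem, hh⟩ := G.iter_spec hw (h w - h v) (by omega)
      apply hinj hmem hv
      omega
  have hdcard : ∀ v ∈ s, (desc f h s v).card = n - h v := by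
    intro v hv
    rw [hdesc v hv]
    have h1 : (s.filter (fun w => h v ≤ h w)).card
        = ((s.filter (fun w => h v ≤ h w)).image h).card := by
      rw [Finset.card_image_of_injOn (hinj.mono (by intro w hw; simp only [Finset.coe_filter, Set.mem_setOf_eq] at hw; exact hw.1))]
    rw [h1]
    have h2 : (s.filter (fun w => h v ≤ h w)).image h
        = (Finset.range n).filter (fun k => h v ≤ k) := by
      rw [← himg, Finset.filter_image]
    rw [h2]
    have h3 : (Finset.range n).filter (fun k => h v ≤ k) = Finset.Ico (h v) n := by
      ext k
      simp only [Finset.mem_filter, Finset.mem_range, Finset.mem_Ico]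
      omega
    rw [h3, Nat.card_Ico]
  calc ∏ v ∈ s, (desc f h s v).card = ∏ v ∈ s, (n - h v) :=
        Finset.prod_congr rfl hdcard
    _ = ∏ k ∈ s.image h, (n - k) := (Finset.prod_image (fun a ha b hb => hinj ha hb)).symm
    _ = ∏ k ∈ Finset.range n, (n - k) := by rw [himg]
    _ = ∏ k ∈ Finset.range n, (k + 1) := by
        rw [← Finset.prod_range_reflect]
        exact Finset.prod_congr rfl (fun k hk => by
          have := Finset.mem_range.mp hk; omega)
    _ = ∏ k ∈ s.image h, (k + 1) := by rw [himg]
    _ = ∏ v ∈ s, (h v + 1) := Finset.prod_image (fun a ha b hb => hinj ha hb)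

end TreeProdAux

namespace TreeProdAux

open SimpleGraph

variable {V : Type*} {G : SimpleGraph V} {R : V}

lemma exists_parent (hc : G.Connected) {v : V} (hv : v ≠ R) :
    ∃ u, G.Adj v u ∧ G.dist u R + 1 = G.dist v R := by
  have hd : 0 < G.dist v R := hc.pos_dist_of_ne hv
  obtain ⟨p, hp⟩ := hc.exists_walk_length_eq_dist v R
  cases p with
  | nil => exact absurd rfl hv
  | @cons _ u _ ha q =>
    have hq : q.length + 1 = G.dist v R := by simpa using hp
    have h1 : G.dist u R ≤ q.length := dist_le q
    have h2 : G.dist v R ≤ G.dist v u + G.dist u R := hc.dist_triangle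
    have h3 : G.dist v u = 1 := dist_eq_one_iff_adj.mpr ha
    exact ⟨u, ha, by omega⟩

open Classical in
/-- The parent map toward the root `R`. -/
noncomputable def par (G : SimpleGraph V) (hc : G.Connected) (R : V) (v : V) : V :=
  if hv : v = R then R else (exists_parent hc hv).choose

open Classical in
lemma par_spec (hc : G.Connected) {v : V} (hv : v ≠ R) :
    G.Adj v (par G hc R v) ∧ G.dist (par G hc R v) R + 1 = G.dist v R := by
  rw [par, dif_neg hv]
  exact (exists_parent hc hv).choose_spec

lemma parent_unique (hG : G.IsTree) {w a b : V}
    (ha : G.Adj w a) (hb : G.Adj w b) (hda : G.dist a R + 1 = G.dist w R)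
    (hdb : G.dist b R + 1 = G.dist w R) : a = b := by
  have hc := hG.isConnected
  obtain ⟨pa, hpa⟩ := hc.exists_walk_length_eq_dist a R
  obtain ⟨pb, hpb⟩ := hc.exists_walk_length_eq_dist b R
  have hPa : (Walk.cons ha pa).IsPath :=
    Walk.isPath_of_length_eq_dist _ (by simp [hpa, hda])
  have hPb : (Walk.cons hb pb).IsPath :=
    Walk.isPath_of_length_eq_dist _ (by simp [hpb, hdb])
  obtain ⟨p, -, hu⟩ := hG.existsUnique_path w R
  have hpp : Walk.cons ha pa = Walk.cons hb pb := (hu _ hPa).trans (hu _ hPb).symm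
  have := congrArg (fun p : G.Walk w R => p.getVert 1) hpp
  simpa [Walk.getVert_cons_succ, Walk.getVert_zero] using this

lemma par_iter (hc : G.Connected) :
    ∀ (j : ℕ) (w : V), j ≤ G.dist w R →
      G.dist ((par G hc R)^[j] w) R + j = G.dist w R ∧ G.dist w ((par G hc R)^[j] w) ≤ j := by
  intro j
  induction j with
  | zero => intro w _; simp [SimpleGraph.dist_self]
  | succ j ih =>
    intro w hj
    obtain ⟨ih1, ih2⟩ := ih w (by omega)
    have hcR : (par G hc R)^[j] w ≠ R := by
      intro e
      rw [e, SimpleGraph.dist_self] at ih1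
      omega
    obtain ⟨hadj, hd⟩ := par_spec hc hcR
    rw [Function.iterate_succ_apply']
    constructor
    · omega
    · have h1 : G.dist w (par G hc R ((par G hc R)^[j] w))
          ≤ G.dist w ((par G hc R)^[j] w)
            + G.dist ((par G hc R)^[j] w) (par G hc R ((par G hc R)^[j] w)) :=
        hc.dist_triangle
      have h2 : G.dist ((par G hc R)^[j] w) (par G hc R ((par G hc R)^[j] w)) = 1 :=
        dist_eq_one_iff_adj.mpr hadj
      omega

lemma anc_of_dist (hG : G.IsTree) :
    ∀ (k : ℕ) (w v : V), G.dist w v = k →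
      G.dist w R = G.dist w v + G.dist v R → (par G hG.isConnected R)^[k] w = v := by
  have hc := hG.isConnected
  intro k
  induction k with
  | zero =>
    intro w v h0 _
    simpa using (hc.dist_eq_zero_iff).mp h0
  | succ k ih =>
    intro w v hk hd
    have hwv : w ≠ v := by
      intro e
      rw [e, SimpleGraph.dist_self] at hk
      omega
    have hwR : w ≠ R := by
      intro e
      subst e
      rw [SimpleGraph.dist_self] at hd
      have h0 : G.dist w v = 0 := by omega
      exact hwv ((hc.dist_eq_zero_iff).mp h0)
    obtain ⟨p, hp⟩ := hc.exists_walk_length_eq_dist w v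
    obtain ⟨q, hq⟩ := hc.exists_walk_length_eq_dist v R
    cases p with
    | nil => exact absurd rfl hwv
    | @cons _ u _ ha p' =>
      have hp' : p'.length = k := by
        simp only [Walk.length_cons] at hp
        omega
      have hduv : G.dist u v ≤ k := hp' ▸ dist_le p'
      have hupper : G.dist u R ≤ k + G.dist v R := by
        have := dist_le (p'.append q)
        rwa [Walk.length_append, hp', hq] at this
      have hlower : G.dist w R ≤ G.dist w u + G.dist u R := hc.dist_triangle
      have hwu : G.dist w u = 1 := dist_eq_one_iff_adj.mpr ha
      have hduR : G.dist u R + 1 = G.dist w R := by omega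
      have hu_eq : u = par G hc R w :=
        parent_unique hG ha (par_spec hc hwR).1 hduR (par_spec hc hwR).2
      have htri : G.dist u R ≤ G.dist u v + G.dist v R := hc.dist_triangle
      have hduv' : G.dist u v = k := by omega
      have hrec : G.dist u R = G.dist u v + G.dist v R := by omega
      have hres := ih u v hduv' hrec
      rw [Function.iterate_succ_apply, ← hu_eq]
      exact hres

lemma dist_eq_iff_anc (hG : G.IsTree) (v w : V) :
    G.dist w R = G.dist w v + G.dist v R
      ↔ (par G hG.isConnected R)^[G.dist w R - G.dist v R] w = v := by
  have hc := hG.isConnected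
  constructor
  · intro hd
    have harith : G.dist w R - G.dist v R = G.dist w v := by omega
    rw [harith]
    exact anc_of_dist hG _ w v rfl hd
  · intro he
    by_cases hle : G.dist v R ≤ G.dist w R
    · obtain ⟨h1, h2⟩ := par_iter (R := R) hc (G.dist w R - G.dist v R) w (by omega)
      rw [he] at h1 h2
      have h3 : G.dist w R ≤ G.dist w v + G.dist v R := hc.dist_triangle
      omega
    · have h0 : G.dist w R - G.dist v R = 0 := by omega
      rw [h0, Function.iterate_zero_apply] at he
      subst he
      simp [SimpleGraph.dist_self]

end TreeProdAux

/-- Equality of the two products holds iff the tree is a path with one endpoint at the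
root `R`, equivalently iff distances to `R` are pairwise distinct. -/
theorem prod_branch_eq_prod_dist_iff_path {V : Type*} [Fintype V] (G : SimpleGraph V)
    (hG : G.IsTree) (R : V) :
    (∏ v : V, branchSize G R v = ∏ v : V, distNum G R v) ↔
      Function.Injective (fun v : V => G.dist v R) := by
  classical
  have hc := hG.isConnected
  set f : V → V := TreeProdAux.par G hc R with hf
  set h : V → ℕ := fun v => G.dist v R with hh
  have Gd : TreeProdAux.Good f h R Finset.univ := by
    refine ⟨Finset.mem_univ _, fun v _ _ => Finset.mem_univ _,
      fun v _ => hc.dist_eq_zero_iff, fun v _ hv => (TreeProdAux.par_spec hc hv).2⟩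
  have hbranch : ∀ v, branchSize G R v = (TreeProdAux.desc f h Finset.univ v).card := by
    intro v
    rw [branchSize]
    have hset : {w : V | G.dist w R = G.dist w v + G.dist v R}
        = ↑(TreeProdAux.desc f h Finset.univ v) := by
      ext w
      rw [Set.mem_setOf_eq, Finset.mem_coe, TreeProdAux.mem_desc]
      simp only [Finset.mem_univ, true_and]
      exact TreeProdAux.dist_eq_iff_anc hG v w
    rw [hset, Set.ncard_coe_finset]
  have hB : (∏ v : V, branchSize G R v)
      = ∏ v ∈ Finset.univ, (TreeProdAux.desc f h Finset.univ v).card :=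
    Finset.prod_congr rfl (fun v _ => hbranch v)
  have hD : (∏ v : V, distNum G R v) = ∏ v ∈ Finset.univ, (h v + 1) := rfl
  rw [hB, hD]
  constructor
  · intro E
    have hinjOn := (TreeProdAux.main Finset.univ.card Finset.univ rfl Gd).2 E
    rw [Finset.coe_univ] at hinjOn
    exact Set.injOn_univ.mp hinjOn
  · intro hinj
    apply TreeProdAux.main_rev Gd
    rw [Finset.coe_univ]
    exact Set.injOn_univ.mpr hinj
end

section
/- For every finite poset P on n elements, the number of linear extensions of P is at least n! / ∏_{x∈P} b(x), where b(x) = |{y : y ≥ x}| is the size of the upper order ideal generated by x. -/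
universe u

def stanleyExt {α : Type u} [DecidableEq α] {m : ℕ} (x : α) (g : {y : α // y ≠ x} ≃ Fin m) :
    α ≃ Fin (m + 1) where
  toFun y := if h : y = x then 0 else (g ⟨y, h⟩).succ
  invFun i := if h : i = 0 then x else (g.symm (i.pred h)).1
  left_inv y := by
    by_cases h : y = x
    · simp [h]
    · simp [h, Fin.succ_ne_zero]
  right_inv i := by
    by_cases h : i = 0
    · simp [h]
    · simp [h, (g.symm (i.pred h)).2]

theorem stanley_aux (n : ℕ) : ∀ (α : Type u) [Fintype α] [PartialOrder α],
    Fintype.card α = n →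
    n.factorial ≤ Nat.card {f : α ≃ Fin n // ∀ x y : α, x < y → f x < f y} *
      ∏ x : α, Nat.card {y : α // x ≤ y} := by
  induction n using Nat.strong_induction_on with
  | _ n ih =>
  rcases n with _ | m
  · intro α _ _ hcard
    haveI : IsEmpty α := Fintype.card_eq_zero_iff.mp hcard
    haveI : Nonempty {f : α ≃ Fin 0 // ∀ x y : α, x < y → f x < f y} :=
      ⟨⟨Equiv.equivOfIsEmpty α (Fin 0), fun x => isEmptyElim x⟩⟩
    have h1 : 0 < Nat.card {f : α ≃ Fin 0 // ∀ x y : α, x < y → f x < f y} := Nat.card_pos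
    have h2 : (∏ x : α, Nat.card {y : α // x ≤ y}) = 1 := by simp
    simp only [Nat.factorial, h2, mul_one]
    exact h1
  · intro α _ _ hcard
    classical
    set b : α → ℕ := fun x => Nat.card {y : α // x ≤ y} with hb
    -- cardinality of the complement subtype
    have hcardβ : ∀ x : α, Fintype.card {y : α // y ≠ x} = m := by
      intro x
      have h1 : Fintype.card {y : α // ¬ (y = x)} =
          Fintype.card α - Fintype.card {y : α // y = x} := Fintype.card_subtype_compl _
      simpa [Fintype.card_subtype_eq, hcard] using h1
    -- the key injection
    set M := {x : α // IsMin x} with hM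
    set LEβ : M → Type u := fun x =>
      {g : {y : α // y ≠ x.1} ≃ Fin m // ∀ u v : {y : α // y ≠ x.1}, u < v → g u < g v}
      with hLEβ
    set S := {f : α ≃ Fin (m + 1) // ∀ x y : α, x < y → f x < f y} with hS
    have hΦ : ∃ Φ : (Σ x : M, LEβ x) → S, Function.Injective Φ := by
      refine ⟨fun p => ⟨stanleyExt p.1.1 p.2.1, ?_⟩, ?_⟩
      · intro u v huv
        by_cases hv : v = p.1.1
        · exact absurd (hv ▸ huv) p.1.2.not_lt
        by_cases hu : u = p.1.1
        · simp only [stanleyExt, Equiv.coe_fn_mk, dif_pos hu, dif_neg hv]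
          exact Fin.succ_pos _
        · simp only [stanleyExt, Equiv.coe_fn_mk, dif_neg hu, dif_neg hv, Fin.succ_lt_succ_iff]
          exact p.2.2 ⟨u, hu⟩ ⟨v, hv⟩ (Subtype.mk_lt_mk.mpr huv)
      · rintro ⟨x, g⟩ ⟨x', g'⟩ h
        have heq : stanleyExt x.1 g.1 = stanleyExt x'.1 g'.1 := Subtype.ext_iff.mp h
        have hx : x.1 = x'.1 := by
          have h0 := congrArg (fun e : α ≃ Fin (m + 1) => e.symm 0) heq
          simpa [stanleyExt] using h0
        have hx' : x = x' := Subtype.ext hx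
        subst hx'
        have hg : g = g' := by
          apply Subtype.ext; apply Equiv.ext; intro y
          have hy := congrArg (fun e : α ≃ Fin (m + 1) => e y.1) heq
          simp only [stanleyExt, Equiv.coe_fn_mk, dif_neg y.2] at hy
          exact Fin.succ_injective _ (by simpa using hy)
        exact congrArg (Sigma.mk x) hg
    obtain ⟨Φ, hΦinj⟩ := hΦ
    letI : Fintype M := Fintype.ofFinite M
    -- sum over minimal elements bounds card S
    have hSsum : (∑ x : M, Nat.card (LEβ x)) ≤ Nat.card S := by
      have := Nat.card_le_card_of_injective Φ hΦinj
      rwa [show Nat.card (Σ x : M, LEβ x) = ∑ x : M, Nat.card (LEβ x) by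
        letI : ∀ x : M, Fintype (LEβ x) := fun x => Fintype.ofFinite _
        simp [Nat.card_eq_fintype_card]] at this
    -- up-set sizes are unchanged when removing a minimal element
    have htransfer : ∀ (x : M) (y : {y : α // y ≠ x.1}),
        Nat.card {y' : {y : α // y ≠ x.1} // y ≤ y'} = b y.1 := by
      intro x y
      refine Nat.card_congr ⟨fun z => ⟨z.1.1, z.2⟩, fun z => ⟨⟨z.1, fun hzx => ?_⟩, z.2⟩,
        fun z => rfl, fun z => rfl⟩
      have h0 : y.1 ≤ z.1 := z.2
      have h1 : y.1 ≤ x.1 := le_of_le_of_eq h0 hzx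
      exact y.2 (le_antisymm h1 (x.2 h1))
    -- covering: every element is above some minimal element
    have hcov : m + 1 ≤ ∑ x : M, b x.1 := by
      have H : ∀ z : α, ∃ w, w ≤ z ∧ Minimal (fun _ => True) w := fun z =>
        Finite.exists_le_minimal trivial
      choose w hwle hwmin using H
      have hj : Function.Injective (fun z : α =>
          (⟨⟨w z, fun c hc => (hwmin z).2 trivial hc⟩, ⟨z, hwle z⟩⟩ : Σ x : M, {y : α // x.1 ≤ y})) := by
        intro z z' h
        exact congrArg (fun s : (Σ x : M, {y : α // x.1 ≤ y}) => s.2.1) h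
      have h1 := Nat.card_le_card_of_injective _ hj
      rw [Nat.card_eq_fintype_card (α := α), hcard] at h1
      refine h1.trans (le_of_eq ?_)
      letI : ∀ x : M, Fintype {y : α // x.1 ≤ y} := fun x => Fintype.ofFinite _
      simp only [Nat.card_eq_fintype_card, Fintype.card_sigma]
      exact Finset.sum_congr rfl fun x _ => (Nat.card_eq_fintype_card).symm
    -- final arithmetic
    have keystep : ∀ x : M, b x.1 * m.factorial ≤ Nat.card (LEβ x) * ∏ y : α, b y := by
      intro x
      have ihx := ih m (Nat.lt_succ_self m) {y : α // y ≠ x.1} (hcardβ x.1)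
      have hprod : (∏ y : {y : α // y ≠ x.1}, Nat.card {y' : {y : α // y ≠ x.1} // y ≤ y'}) =
          ∏ y : {y : α // y ≠ x.1}, b y.1 :=
        Finset.prod_congr rfl fun y _ => htransfer x y
      rw [hprod] at ihx
      have hsplit : b x.1 * ∏ y : {y : α // y ≠ x.1}, b y.1 = ∏ y : α, b y := by
        rw [show (∏ y : {y : α // y ≠ x.1}, b y.1) = ∏ y ∈ Finset.univ.erase x.1, b y from
          (Finset.prod_subtype (Finset.univ.erase x.1) (fun y => by simp) b).symm]
        exact Finset.mul_prod_erase Finset.univ b (Finset.mem_univ x.1)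
      calc b x.1 * m.factorial
          ≤ b x.1 * (Nat.card (LEβ x) * ∏ y : {y : α // y ≠ x.1}, b y.1) :=
            Nat.mul_le_mul_left _ ihx
        _ = Nat.card (LEβ x) * (b x.1 * ∏ y : {y : α // y ≠ x.1}, b y.1) := by ring
        _ = Nat.card (LEβ x) * ∏ y : α, b y := by rw [hsplit]
    calc (m + 1).factorial = (m + 1) * m.factorial := rfl
      _ ≤ (∑ x : M, b x.1) * m.factorial := Nat.mul_le_mul_right _ hcov
      _ = ∑ x : M, b x.1 * m.factorial := Finset.sum_mul ..
      _ ≤ ∑ x : M, Nat.card (LEβ x) * ∏ y : α, b y := Finset.sum_le_sum fun x _ => keystep x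
      _ = (∑ x : M, Nat.card (LEβ x)) * ∏ y : α, b y := (Finset.sum_mul ..).symm
      _ ≤ Nat.card S * ∏ y : α, b y := Nat.mul_le_mul_right _ hSsum

/-- Stanley's lower bound (Hammett–Pittel): the number of linear extensions of a finite
poset `α` on `n` elements satisfies `|LE(P)| · ∏_x b(x) ≥ n!`, i.e.
`|LE(P)| ≥ n! / ∏_x b(x)`, where `b(x) = |{y : x ≤ y}|`. -/
theorem linearExtensions_lower_bound {α : Type*} [Fintype α] [PartialOrder α] :
    Nat.factorial (Fintype.card α) ≤
      ({f : α ≃ Fin (Fintype.card α) | ∀ x y : α, x < y → f x < f y} : Set _).ncard *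
        ∏ x : α, ({y : α | x ≤ y} : Set α).ncard := by
  have h := stanley_aux (Fintype.card α) α rfl
  simpa [← Nat.card_coe_set_eq, Set.coe_setOf] using h
end

section
/- Karamata's inequality: if a₁ ≥ ... ≥ aₙ and b₁ ≥ ... ≥ bₙ are real sequences with a₁+...+a_k ≥ b₁+...+b_k for all k < n and a₁+...+aₙ = b₁+...+bₙ, and φ : ℝ → ℝ is convex, then ∑ φ(aᵢ) ≥ ∑ φ(bᵢ). -/
/-- Karamata's inequality: if the non-increasing sequence `a` majorizes the non-increasing
sequence `b` (dominating partial sums and equal total sums) and `φ` is convex, then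
`∑ φ(aᵢ) ≥ ∑ φ(bᵢ)`. -/
theorem karamata (n : ℕ) (a b : ℕ → ℝ) (φ : ℝ → ℝ)
    (ha : ∀ i j, i ≤ j → j < n → a j ≤ a i)
    (hb : ∀ i j, i ≤ j → j < n → b j ≤ b i)
    (hmaj : ∀ k < n, ∑ i ∈ Finset.range k, b i ≤ ∑ i ∈ Finset.range k, a i)
    (hsum : ∑ i ∈ Finset.range n, a i = ∑ i ∈ Finset.range n, b i)
    (hφ : ConvexOn ℝ Set.univ φ) :
    ∑ i ∈ Finset.range n, φ (b i) ≤ ∑ i ∈ Finset.range n, φ (a i) := by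
  rcases Nat.eq_zero_or_pos n with rfl | hn
  · simp
  -- three-chord lemma
  have key : ∀ s t u : ℝ, s < t → t < u →
      (φ t - φ s) / (t - s) ≤ (φ u - φ t) / (u - t) := by
    intro s t u hst htu
    have := hφ.secant_mono (Set.mem_univ t) (Set.mem_univ s) (Set.mem_univ u)
      (ne_of_lt hst) (ne_of_gt htu) (le_of_lt (hst.trans htu))
    calc (φ t - φ s) / (t - s) = (φ s - φ t) / (s - t) := by
          rw [← neg_div_neg_eq]; ring_nf
      _ ≤ (φ u - φ t) / (u - t) := this
  -- left slope supremum
  set S : ℝ → Set ℝ := fun t => (fun s => (φ t - φ s) / (t - s)) '' Set.Iio t with hS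
  have hne : ∀ t, (S t).Nonempty := fun t => ⟨_, ⟨t - 1, by simp, rfl⟩⟩
  have hbdd : ∀ t, BddAbove (S t) := by
    intro t
    refine ⟨(φ (t + 1) - φ t) / (t + 1 - t), ?_⟩
    rintro _ ⟨s, hs, rfl⟩
    exact key s t (t + 1) hs (by linarith)
  set L : ℝ → ℝ := fun t => sSup (S t) with hL
  have hle_L : ∀ s t : ℝ, s < t → (φ t - φ s) / (t - s) ≤ L t := by
    intro s t hst
    exact le_csSup (hbdd t) ⟨s, hst, rfl⟩
  have hL_le : ∀ t u : ℝ, t < u → L t ≤ (φ u - φ t) / (u - t) := by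
    intro t u htu
    apply csSup_le (hne t)
    rintro _ ⟨s, hs, rfl⟩
    exact key s t u hs htu
  have subgrad : ∀ t x : ℝ, φ t + L t * (x - t) ≤ φ x := by
    intro t x
    rcases lt_trichotomy x t with hlt | rfl | hgt
    · have h1 := hle_L x t hlt
      have h2 : 0 < t - x := by linarith
      rw [div_le_iff₀ h2] at h1 <;> nlinarith
    · simp
    · have h1 := hL_le t x hgt
      have h2 : 0 < x - t := by linarith
      rw [le_div_iff₀ h2] at h1 <;> nlinarith
  have Lmono : ∀ s t : ℝ, s ≤ t → L s ≤ L t := by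
    intro s t hst
    rcases eq_or_lt_of_le hst with rfl | hst
    · exact le_rfl
    apply csSup_le (hne s)
    rintro _ ⟨r, hr, rfl⟩
    exact (key r s t hr hst).trans (hle_L s t hst)
  -- Abel summation
  set c : ℕ → ℝ := fun i => L (b i) with hc
  set d : ℕ → ℝ := fun i => a i - b i with hd
  have habel := Finset.sum_range_by_parts c d n
  have hDn : ∑ j ∈ Finset.range n, d j = 0 := by
    simp only [hd, Finset.sum_sub_distrib]; linarith
  have hterm : ∀ i ∈ Finset.range (n - 1), (c (i + 1) - c i) • (∑ j ∈ Finset.range (i + 1), d j) ≤ 0 := by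
    intro i hi
    rw [Finset.mem_range] at hi
    have hi1 : i + 1 < n := by omega
    have h1 : c (i + 1) - c i ≤ 0 := by
      have := Lmono (b (i + 1)) (b i) (hb i (i + 1) (by omega) hi1)
      simp only [hc]; linarith
    have h2 : 0 ≤ ∑ j ∈ Finset.range (i + 1), d j := by
      have := hmaj (i + 1) hi1
      simp only [hd, Finset.sum_sub_distrib]; linarith
    exact mul_nonpos_of_nonpos_of_nonneg h1 h2
  have hcd : 0 ≤ ∑ i ∈ Finset.range n, c i • d i := by
    rw [habel, hDn, smul_zero, zero_sub, neg_nonneg]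
    exact Finset.sum_nonpos hterm
  have hmain : ∑ i ∈ Finset.range n, (φ (b i) + c i * d i) ≤ ∑ i ∈ Finset.range n, φ (a i) := by
    apply Finset.sum_le_sum
    intro i _
    simpa [hd] using subgrad (b i) (a i)
  simp only [Finset.sum_add_distrib] at hmain
  simp only [smul_eq_mul] at hcd
  linarith
end

section
/- Strict Karamata: if a₁ ≥ ... ≥ aₙ majorizes b₁ ≥ ... ≥ bₙ, φ : ℝ → ℝ is strictly convex, and ∑ φ(aᵢ) = ∑ φ(bᵢ), then aᵢ = bᵢ for all i. -/
section aux

variable {φ : ℝ → ℝ}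

private lemma adjx (hφ : StrictConvexOn ℝ Set.univ φ) {x y z : ℝ} (hxy : x < y) (hyz : y < z) :
    (φ y - φ x) / (y - x) < (φ z - φ y) / (z - y) :=
  hφ.slope_strict_mono_adjacent (Set.mem_univ x) (Set.mem_univ z) hxy hyz

private lemma left_ltx (hφ : StrictConvexOn ℝ Set.univ φ) {x y z : ℝ} (hxy : x < y) (hyz : y < z) :
    (φ y - φ x) / (y - x) < (φ z - φ x) / (z - x) := by
  have h := adjx hφ hxy hyz
  have hyx : (0:ℝ) < y - x := sub_pos.2 hxy
  have hzy : (0:ℝ) < z - y := sub_pos.2 hyz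
  have hzx : (0:ℝ) < z - x := sub_pos.2 (hxy.trans hyz)
  rw [div_lt_div_iff₀ hyx hzy] at h
  rw [div_lt_div_iff₀ hyx hzx]
  nlinarith [h]

private lemma lt_rightx (hφ : StrictConvexOn ℝ Set.univ φ) {x y z : ℝ} (hxy : x < y) (hyz : y < z) :
    (φ z - φ x) / (z - x) < (φ z - φ y) / (z - y) := by
  have h := adjx hφ hxy hyz
  have hyx : (0:ℝ) < y - x := sub_pos.2 hxy
  have hzy : (0:ℝ) < z - y := sub_pos.2 hyz
  have hzx : (0:ℝ) < z - x := sub_pos.2 (hxy.trans hyz)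
  rw [div_lt_div_iff₀ hyx hzy] at h
  rw [div_lt_div_iff₀ hzx hzy]
  nlinarith [h]

/-- right derivative as inf of forward slopes -/
noncomputable def rd (φ : ℝ → ℝ) (y : ℝ) : ℝ :=
  sInf ((fun z => (φ z - φ y) / (z - y)) '' Set.Ioi y)

private lemma rd_bdd (hφ : StrictConvexOn ℝ Set.univ φ) (y : ℝ) :
    BddBelow ((fun z => (φ z - φ y) / (z - y)) '' Set.Ioi y) := by
  refine ⟨(φ y - φ (y - 1)) / (y - (y - 1)), ?_⟩
  rintro w ⟨z, hz, rfl⟩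
  exact (adjx hφ (by linarith) hz).le

private lemma rd_le (hφ : StrictConvexOn ℝ Set.univ φ) {y z : ℝ} (hyz : y < z) :
    rd φ y ≤ (φ z - φ y) / (z - y) :=
  csInf_le (rd_bdd hφ y) ⟨z, hyz, rfl⟩

private lemma le_rd (hφ : StrictConvexOn ℝ Set.univ φ) {x y : ℝ} (hxy : x < y) :
    (φ y - φ x) / (y - x) ≤ rd φ y := by
  refine le_csInf ⟨_, ⟨y + 1, by simp, rfl⟩⟩ ?_
  rintro w ⟨z, hz, rfl⟩
  exact (adjx hφ hxy hz).le

private lemma rd_mono (hφ : StrictConvexOn ℝ Set.univ φ) {x y : ℝ} (h : x ≤ y) :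
    rd φ x ≤ rd φ y := by
  rcases h.eq_or_lt with rfl | h
  · exact le_rfl
  · exact (rd_le hφ h).trans (le_rd hφ h)

private lemma subgrad_strict (hφ : StrictConvexOn ℝ Set.univ φ) {x y : ℝ} (hxy : x ≠ y) :
    φ y + rd φ y * (x - y) < φ x := by
  rcases hxy.lt_or_gt with h | h
  · -- x < y
    set m := (x + y) / 2 with hm
    have hxm : x < m := by simp [hm]; linarith
    have hmy : m < y := by simp [hm]; linarith
    have h1 : (φ y - φ x) / (y - x) < rd φ y :=
      (lt_rightx hφ hxm hmy).trans_le (le_rd hφ hmy)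
    have hyx : (0:ℝ) < y - x := sub_pos.2 h
    have := mul_lt_mul_of_pos_right h1 hyx
    rw [div_mul_cancel₀ _ (ne_of_gt hyx)] at this
    nlinarith [this]
  · -- y < x
    set m := (y + x) / 2 with hm
    have hym : y < m := by simp [hm]; linarith
    have hmx : m < x := by simp [hm]; linarith
    have h1 : rd φ y < (φ x - φ y) / (x - y) :=
      (rd_le hφ hym).trans_lt (left_ltx hφ hym hmx)
    have hxy' : (0:ℝ) < x - y := sub_pos.2 h
    have := mul_lt_mul_of_pos_right h1 hxy'
    rw [div_mul_cancel₀ _ (ne_of_gt hxy')] at this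
    linarith

private lemma subgrad (hφ : StrictConvexOn ℝ Set.univ φ) (x y : ℝ) :
    φ y + rd φ y * (x - y) ≤ φ x := by
  rcases eq_or_ne x y with rfl | h
  · simp
  · exact (subgrad_strict hφ h).le

end aux

/-- Strict Karamata: if the non-increasing sequence `a` majorizes the non-increasing
sequence `b`, `φ` is strictly convex, and `∑ φ(aᵢ) = ∑ φ(bᵢ)`, then `a = b`. -/
theorem karamata_strict (n : ℕ) (a b : ℕ → ℝ) (φ : ℝ → ℝ)
    (ha : ∀ i j, i ≤ j → j < n → a j ≤ a i)
    (hb : ∀ i j, i ≤ j → j < n → b j ≤ b i)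
    (hmaj : ∀ k < n, ∑ i ∈ Finset.range k, b i ≤ ∑ i ∈ Finset.range k, a i)
    (hsum : ∑ i ∈ Finset.range n, a i = ∑ i ∈ Finset.range n, b i)
    (hφ : StrictConvexOn ℝ Set.univ φ)
    (heq : ∑ i ∈ Finset.range n, φ (a i) = ∑ i ∈ Finset.range n, φ (b i)) :
    ∀ i < n, a i = b i := by
  set c : ℕ → ℝ := fun i => rd φ (b i) with hc
  set g : ℕ → ℝ := fun i => a i - b i with hg
  -- partial sums of g are nonnegative
  have hE : ∀ k ≤ n, 0 ≤ ∑ i ∈ Finset.range k, g i := by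
    intro k hk
    have : ∑ i ∈ Finset.range k, g i
        = ∑ i ∈ Finset.range k, a i - ∑ i ∈ Finset.range k, b i := by
      simp [hg, Finset.sum_sub_distrib]
    rw [this]
    rcases hk.eq_or_lt with rfl | hk'
    · linarith [hsum.ge]
    · linarith [hmaj k hk']
  have hEn : ∑ i ∈ Finset.range n, g i = 0 := by
    simp [hg, Finset.sum_sub_distrib, hsum]
  -- Abel summation: T := ∑ c i * g i ≥ 0
  have habel := Finset.sum_range_by_parts c g n
  simp only [smul_eq_mul, hEn, mul_zero, zero_sub] at habel
  have hT : 0 ≤ ∑ i ∈ Finset.range n, c i * g i := by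
    rw [habel, ← Finset.sum_neg_distrib]
    apply Finset.sum_nonneg
    intro i hi
    rw [Finset.mem_range] at hi
    have hi' : i + 1 < n := by omega
    have h1 : c (i + 1) ≤ c i :=
      rd_mono hφ (hb i (i + 1) (Nat.le_succ i) hi')
    have h2 : 0 ≤ ∑ j ∈ Finset.range (i + 1), g j := hE (i + 1) hi'.le
    have : -(c (i + 1) - c i) ≥ 0 := by linarith
    nlinarith [h2, this]
  -- d i ≥ 0 and ∑ d ≤ 0
  set d : ℕ → ℝ := fun i => φ (a i) - φ (b i) - c i * g i with hd
  have hdnn : ∀ i ∈ Finset.range n, 0 ≤ d i := by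
    intro i _
    have := subgrad hφ (a i) (b i)
    simp only [hd, hc, hg]
    linarith
  have hdsum : ∑ i ∈ Finset.range n, d i = 0 := by
    have h0 : ∑ i ∈ Finset.range n, d i
        = (∑ i ∈ Finset.range n, φ (a i)) - (∑ i ∈ Finset.range n, φ (b i))
          - ∑ i ∈ Finset.range n, c i * g i := by
      simp [hd, Finset.sum_sub_distrib]
    have h1 : 0 ≤ ∑ i ∈ Finset.range n, d i := Finset.sum_nonneg hdnn
    rw [h0] at h1 ⊢
    linarith [hT, heq.le, heq.ge]
  have hall := (Finset.sum_eq_zero_iff_of_nonneg hdnn).1 hdsum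
  intro i hi
  by_contra hne
  have := subgrad_strict hφ (show a i ≠ b i from hne)
  have hz := hall i (Finset.mem_range.2 hi)
  simp only [hd, hc, hg] at hz
  linarith
end

section
/- For every Young diagram λ, the multiset of hook lengths {h(u) : u ∈ λ} majorizes the multiset of anti-hook lengths {h*(u) : u ∈ λ}. -/
/-- The sum of the `k` largest elements of a multiset of naturals. -/
def topSum (M : Multiset ℕ) (k : ℕ) : ℕ :=
  ((M.sort (· ≤ ·)).reverse.take k).sum

open Finset

/-! ### Arithmetic helpers -/

lemma succ_tsub (a t : ℕ) : (a + 1) - t = (a - t) + (if t ≤ a then 1 else 0) := by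
  split <;> omega

lemma add_tsub_count (x m t : ℕ) :
    (x + m) - t = (x - t) + ∑ r ∈ range m, (if t ≤ x + r then 1 else 0) := by
  induction m with
  | zero => simp
  | succ m ih =>
    rw [Finset.sum_range_succ]
    split <;> omega

/-! ### Removing the first row of a Young diagram -/

def shed (μ : YoungDiagram) : YoungDiagram where
  cells := (μ.cells.filter (fun c => c.1 ≠ 0)).image (fun c => (c.1 - 1, c.2))
  isLowerSet := by
    intro a b hba hb
    simp only [Finset.coe_image, Finset.coe_filter, Set.mem_image, Set.mem_setOf_eq,
      Finset.mem_coe, YoungDiagram.mem_cells] at hb ⊢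
    obtain ⟨d, ⟨hd, hd1⟩, hde⟩ := hb
    have ha1 : a.1 = d.1 - 1 := by rw [← hde]
    have ha2 : a.2 = d.2 := by rw [← hde]
    have hb1 := hba.1
    have hb2 := hba.2
    refine ⟨(b.1 + 1, b.2), ⟨μ.up_left_mem (by omega) (by omega) hd, by simp⟩, by simp⟩

lemma mem_shed {μ : YoungDiagram} {c : ℕ × ℕ} : c ∈ shed μ ↔ (c.1 + 1, c.2) ∈ μ := by
  constructor
  · intro h
    rw [← YoungDiagram.mem_cells] at h
    simp only [shed, YoungDiagram.mem_mk, Finset.mem_image, Finset.mem_filter,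
      YoungDiagram.mem_cells] at h
    obtain ⟨d, ⟨hd, hd1⟩, hde⟩ := h
    rw [Prod.ext_iff] at hde
    simp only at hde
    have : d = (c.1 + 1, c.2) := by
      rw [Prod.ext_iff]
      constructor
      · simp; omega
      · simpa using hde.2
    rwa [this] at hd
  · intro h
    rw [← YoungDiagram.mem_cells]
    simp only [shed, YoungDiagram.mem_mk, Finset.mem_image, Finset.mem_filter,
      YoungDiagram.mem_cells]
    exact ⟨(c.1 + 1, c.2), ⟨h, by simp⟩, by simp⟩

lemma rowLen_shed (μ : YoungDiagram) (i : ℕ) : (shed μ).rowLen i = μ.rowLen (i + 1) := by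
  apply eq_of_forall_lt_iff
  intro k
  rw [← YoungDiagram.mem_iff_lt_rowLen, ← YoungDiagram.mem_iff_lt_rowLen]
  exact mem_shed

lemma colLen_shed (μ : YoungDiagram) (j : ℕ) : (shed μ).colLen j = μ.colLen j - 1 := by
  apply eq_of_forall_lt_iff
  intro k
  rw [← YoungDiagram.mem_iff_lt_colLen]
  rw [show ((k:ℕ) < μ.colLen j - 1 ↔ k + 1 < μ.colLen j) by omega]
  rw [← YoungDiagram.mem_iff_lt_colLen]
  exact mem_shed

/-! ### Sum decompositions -/

lemma sum_cells_split (μ : YoungDiagram) (f : ℕ × ℕ → ℕ) :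
    ∑ c ∈ μ.cells, f c =
      (∑ j ∈ range (μ.rowLen 0), f (0, j)) + ∑ c ∈ (shed μ).cells, f (c.1 + 1, c.2) := by
  rw [← Finset.sum_filter_add_sum_filter_not μ.cells (fun c => c.1 = 0)]
  congr 1
  · apply Finset.sum_bij' (i := fun (c : ℕ × ℕ) _ => c.2) (j := fun j _ => ((0 : ℕ), j))
    · intro a ha
      simp only [Finset.mem_filter, YoungDiagram.mem_cells] at ha
      obtain ⟨ha, h0⟩ := ha
      rw [Finset.mem_range, ← YoungDiagram.mem_iff_lt_rowLen]
      have : a = (0, a.2) := by rw [Prod.ext_iff]; exact ⟨h0, rfl⟩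
      rwa [← this]
    · intro a ha
      simp only [Finset.mem_filter, YoungDiagram.mem_cells]
      rw [Finset.mem_range, ← YoungDiagram.mem_iff_lt_rowLen] at ha
      exact ⟨ha, trivial⟩
    · intro a ha
      simp only [Finset.mem_filter] at ha
      rw [Prod.ext_iff]
      exact ⟨ha.2.symm, rfl⟩
    · intro a _; rfl
    · intro a ha
      simp only [Finset.mem_filter] at ha
      have : a = (0, a.2) := by rw [Prod.ext_iff]; exact ⟨ha.2, rfl⟩
      conv_lhs => rw [this]
  · apply Finset.sum_bij' (i := fun (c : ℕ × ℕ) _ => (c.1 - 1, c.2))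
      (j := fun (c : ℕ × ℕ) _ => (c.1 + 1, c.2))
    · intro a ha
      simp only [Finset.mem_filter, YoungDiagram.mem_cells] at ha
      rw [YoungDiagram.mem_cells, mem_shed]
      have : ((a.1 - 1 : ℕ), a.2).1 + 1 = a.1 := by simp; omega
      rw [this]
      exact ha.1
    · intro a ha
      rw [YoungDiagram.mem_cells, mem_shed] at ha
      simp only [Finset.mem_filter, YoungDiagram.mem_cells]
      exact ⟨ha, by simp⟩
    · intro a ha
      simp only [Finset.mem_filter] at ha
      rw [Prod.ext_iff]
      constructor
      · simp; omega
      · rfl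
    · intro a _
      rw [Prod.ext_iff]
      exact ⟨by simp, rfl⟩
    · intro a ha
      simp only [Finset.mem_filter] at ha
      have : ((a.1 - 1 + 1 : ℕ), a.2) = a := by
        rw [Prod.ext_iff]; constructor
        · simp; omega
        · rfl
      rw [this]

lemma sum_cells_cols (ν : YoungDiagram) (J : ℕ) (hJ : ν.rowLen 0 ≤ J) (g : ℕ × ℕ → ℕ) :
    ∑ c ∈ ν.cells, g c = ∑ j ∈ range J, ∑ r ∈ range (ν.colLen j), g (r, j) := by
  rw [Finset.sum_sigma']
  apply Finset.sum_bij' (i := fun (c : ℕ × ℕ) _ => (⟨c.2, c.1⟩ : Σ _ : ℕ, ℕ))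
    (j := fun p _ => ((p.2, p.1) : ℕ × ℕ))
  · intro a ha
    rw [YoungDiagram.mem_cells] at ha
    simp only [Finset.mem_sigma, Finset.mem_range]
    constructor
    · have h1 : a.2 < ν.rowLen a.1 := YoungDiagram.mem_iff_lt_rowLen.mp ha
      have h2 : ν.rowLen a.1 ≤ ν.rowLen 0 := ν.rowLen_anti 0 a.1 (Nat.zero_le _)
      omega
    · exact YoungDiagram.mem_iff_lt_colLen.mp ha
  · intro p hp
    simp only [Finset.mem_sigma, Finset.mem_range] at hp
    rw [YoungDiagram.mem_cells]
    exact YoungDiagram.mem_iff_lt_colLen.mpr hp.2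
  · intro a _; rfl
  · intro a _; rfl
  · intro a _; rfl

lemma sum_cells_rows (ν : YoungDiagram) (I : ℕ) (hI : ν.colLen 0 ≤ I) (g : ℕ × ℕ → ℕ) :
    ∑ c ∈ ν.cells, g c = ∑ r ∈ range I, ∑ j ∈ range (ν.rowLen r), g (r, j) := by
  rw [Finset.sum_sigma']
  apply Finset.sum_bij' (i := fun (c : ℕ × ℕ) _ => (⟨c.1, c.2⟩ : Σ _ : ℕ, ℕ))
    (j := fun p _ => ((p.1, p.2) : ℕ × ℕ))
  · intro a ha
    rw [YoungDiagram.mem_cells] at ha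
    simp only [Finset.mem_sigma, Finset.mem_range]
    constructor
    · have h1 : a.1 < ν.colLen a.2 := YoungDiagram.mem_iff_lt_colLen.mp ha
      have h2 : ν.colLen a.2 ≤ ν.colLen 0 := ν.colLen_anti 0 a.2 (Nat.zero_le _)
      omega
    · exact YoungDiagram.mem_iff_lt_rowLen.mp ha
  · intro p hp
    simp only [Finset.mem_sigma, Finset.mem_range] at hp
    rw [YoungDiagram.mem_cells]
    exact YoungDiagram.mem_iff_lt_rowLen.mpr hp.2
  · intro a _; rfl
  · intro a _; rfl
  · intro a _; rfl

/-! ### Hook lengths behave well under `shed` -/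

lemma hook_shed (μ : YoungDiagram) (c : ℕ × ℕ) :
    hookLen μ (c.1 + 1, c.2) = hookLen (shed μ) c := by
  simp only [hookLen, rowLen_shed, colLen_shed]
  omega

/-! ### The main induction -/

lemma main_ineq : ∀ (N : ℕ) (μ : YoungDiagram), μ.cells.card ≤ N →
    (∑ c ∈ μ.cells, hookLen μ c = ∑ c ∈ μ.cells, antiHookLen c) ∧
      ∀ t, (∑ c ∈ μ.cells, (antiHookLen c - t)) ≤ ∑ c ∈ μ.cells, (hookLen μ c - t) := by
  intro N
  induction N with
  | zero =>
    intro μ hμ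
    have h : μ.cells = ∅ := Finset.card_eq_zero.mp (Nat.le_zero.mp hμ)
    simp [h]
  | succ N ih =>
    intro μ hμ
    by_cases hemp : μ.cells.card = 0
    · have h : μ.cells = ∅ := Finset.card_eq_zero.mp hemp
      simp [h]
    set ν := shed μ with hν
    set n := μ.rowLen 0 with hn
    have hn0 : 0 < n := by
      obtain ⟨c, hc⟩ := Finset.card_pos.mp (Nat.pos_of_ne_zero hemp)
      rw [YoungDiagram.mem_cells] at hc
      have h00 : (0, 0) ∈ μ := μ.up_left_mem (Nat.zero_le c.1) (Nat.zero_le c.2) hc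
      have := YoungDiagram.mem_iff_lt_rowLen.mp h00
      omega
    have hcard : μ.cells.card = n + ν.cells.card := by
      have h := sum_cells_split μ (fun _ => 1)
      simpa using h
    have hνcard : ν.cells.card ≤ N := by omega
    obtain ⟨ihEq, ihTail⟩ := ih ν hνcard
    have hrow : ∀ r, ν.rowLen r ≤ n := by
      intro r
      rw [hν, rowLen_shed]
      exact μ.rowLen_anti 0 (r + 1) (Nat.zero_le _)
    have hookRow0 : ∀ j ∈ range n, hookLen μ (0, j) = (n - j) + ν.colLen j := by
      intro j hj
      rw [Finset.mem_range] at hj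
      have hjμ : (0, j) ∈ μ := YoungDiagram.mem_iff_lt_rowLen.mpr hj
      have hcl : 0 < μ.colLen j := by
        have := YoungDiagram.mem_iff_lt_colLen.mp hjμ
        omega
      simp only [hookLen, hν, colLen_shed]
      omega
    have antiRow0 : ∀ j ∈ range n, antiHookLen (0, j) = j + 1 := by
      intro j _; simp [antiHookLen]
    have antiShift : ∀ c : ℕ × ℕ, antiHookLen (c.1 + 1, c.2) = antiHookLen c + 1 := by
      intro c; simp [antiHookLen]; omega
    have hreflect : ∀ g : ℕ → ℕ, ∑ j ∈ range n, g (n - j) = ∑ j ∈ range n, g (j + 1) := by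
      intro g
      rw [← Finset.sum_range_reflect (fun j => g (j + 1)) n]
      apply Finset.sum_congr rfl
      intro j hj
      rw [Finset.mem_range] at hj
      congr 1
      omega
    have hcolsum : ∑ j ∈ range n, ν.colLen j = ν.cells.card := by
      have h := sum_cells_cols ν n (hrow 0) (fun _ => 1)
      simpa using h.symm
    have hrefl1 : ∑ j ∈ range n, (n - j) = ∑ j ∈ range n, (j + 1) := hreflect (fun x => x)
    constructor
    · -- sum equality
      have hA : ∑ j ∈ range n, ((n - j) + ν.colLen j)
          = (∑ j ∈ range n, (j + 1)) + ν.cells.card := by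
        rw [Finset.sum_add_distrib, hcolsum, hrefl1]
      have hB : ∑ c ∈ ν.cells, (antiHookLen c + 1)
          = (∑ c ∈ ν.cells, antiHookLen c) + ν.cells.card := by
        rw [Finset.sum_add_distrib]
        simp
      rw [sum_cells_split μ (hookLen μ), sum_cells_split μ antiHookLen,
        Finset.sum_congr rfl hookRow0, Finset.sum_congr rfl antiRow0,
        Finset.sum_congr rfl (fun c (_ : c ∈ ν.cells) => hook_shed μ c),
        Finset.sum_congr rfl (fun c (_ : c ∈ ν.cells) => antiShift c),
        hA, hB, ihEq]
      omega
    · -- tail inequality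
      intro t
      rw [sum_cells_split μ (fun c => antiHookLen c - t),
        sum_cells_split μ (fun c => hookLen μ c - t)]
      have e1 : ∑ j ∈ range n, (antiHookLen (0, j) - t) = ∑ j ∈ range n, ((j + 1) - t) :=
        Finset.sum_congr rfl (fun j hj => by rw [antiRow0 j hj])
      have e2 : ∑ c ∈ ν.cells, (antiHookLen (c.1 + 1, c.2) - t)
          = (∑ c ∈ ν.cells, (antiHookLen c - t))
            + ∑ c ∈ ν.cells, (if t ≤ antiHookLen c then 1 else 0) := by
        rw [← Finset.sum_add_distrib]
        apply Finset.sum_congr rfl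
        intro c _
        rw [antiShift c]
        exact succ_tsub _ t
      have e3 : ∑ j ∈ range n, (hookLen μ (0, j) - t)
          = (∑ j ∈ range n, ((n - j) - t))
            + ∑ j ∈ range n, ∑ r ∈ range (ν.colLen j), (if t ≤ (n - j) + r then 1 else 0) := by
        rw [← Finset.sum_add_distrib]
        apply Finset.sum_congr rfl
        intro j hj
        rw [hookRow0 j hj]
        exact add_tsub_count _ _ t
      have e4 : ∑ c ∈ ν.cells, (hookLen μ (c.1 + 1, c.2) - t)
          = ∑ c ∈ ν.cells, (hookLen ν c - t) :=
        Finset.sum_congr rfl (fun c _ => by rw [hook_shed μ c])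
      have e5 : ∑ j ∈ range n, ((n - j) - t) = ∑ j ∈ range n, ((j + 1) - t) :=
        hreflect (fun x => x - t)
      -- the key counting inequality
      have key : ∑ c ∈ ν.cells, (if t ≤ antiHookLen c then 1 else 0)
          ≤ ∑ j ∈ range n, ∑ r ∈ range (ν.colLen j), (if t ≤ (n - j) + r then 1 else 0) := by
        have hL : ∑ c ∈ ν.cells, (if t ≤ antiHookLen c then 1 else 0)
            = ∑ r ∈ range (ν.colLen 0), ∑ j ∈ range (ν.rowLen r),
                (if t ≤ antiHookLen (r, j) then 1 else 0) :=
          sum_cells_rows ν (ν.colLen 0) (le_refl _) _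
        have hR : ∑ j ∈ range n, ∑ r ∈ range (ν.colLen j), (if t ≤ (n - j) + r then 1 else 0)
            = ∑ r ∈ range (ν.colLen 0), ∑ j ∈ range (ν.rowLen r),
                (if t ≤ (n - j) + r then 1 else 0) := by
          rw [← sum_cells_cols ν n (hrow 0) (fun c => if t ≤ (n - c.2) + c.1 then 1 else 0)]
          rw [sum_cells_rows ν (ν.colLen 0) (le_refl _) (fun c => if t ≤ (n - c.2) + c.1 then 1 else 0)]
        rw [hL, hR]
        apply Finset.sum_le_sum
        intro r _
        set L := ν.rowLen r with hLdef
        have hLn : L ≤ n := hrow r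
        rw [← Finset.sum_range_reflect (fun j => if t ≤ antiHookLen (r, j) then 1 else 0) L]
        apply Finset.sum_le_sum
        intro j hj
        rw [Finset.mem_range] at hj
        simp only [antiHookLen]
        by_cases h1 : t ≤ r + (L - 1 - j) + 1 <;> by_cases h2 : t ≤ n - j + r <;>
          simp only [h1, h2, if_true, if_false] <;> omega
      calc (∑ j ∈ range n, (antiHookLen (0, j) - t))
            + ∑ c ∈ ν.cells, (antiHookLen (c.1 + 1, c.2) - t)
          = (∑ j ∈ range n, ((j + 1) - t)) + ((∑ c ∈ ν.cells, (antiHookLen c - t))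
              + ∑ c ∈ ν.cells, (if t ≤ antiHookLen c then 1 else 0)) := by rw [e1, e2]
        _ ≤ (∑ j ∈ range n, ((j + 1) - t)) + ((∑ c ∈ ν.cells, (hookLen ν c - t))
              + ∑ j ∈ range n, ∑ r ∈ range (ν.colLen j), (if t ≤ (n - j) + r then 1 else 0)) := by
            have := ihTail t
            omega
        _ = (∑ j ∈ range n, (hookLen μ (0, j) - t))
              + ∑ c ∈ ν.cells, (hookLen μ (c.1 + 1, c.2) - t) := by
            rw [e3, e4, e5]
            omega

/-! ### topSum lemmas -/

lemma list_sum_le_mul_add (L : List ℕ) (t : ℕ) :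
    L.sum ≤ L.length * t + (L.map (· - t)).sum := by
  induction L with
  | nil => simp
  | cons a L ih =>
    simp only [List.sum_cons, List.length_cons, List.map_cons]
    rw [Nat.succ_mul]
    omega

lemma list_mul_add_sum_eq (L : List ℕ) (t : ℕ) (h : ∀ x ∈ L, t ≤ x) :
    L.length * t + (L.map (· - t)).sum = L.sum := by
  induction L with
  | nil => simp
  | cons a L ih =>
    simp only [List.sum_cons, List.length_cons, List.map_cons]
    rw [Nat.succ_mul]
    have ha := h a (by simp)
    have hL := ih (fun x hx => h x (by simp [hx]))
    omega

lemma list_map_sub_sum_zero (L : List ℕ) (t : ℕ) (h : ∀ x ∈ L, x ≤ t) :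
    (L.map (· - t)).sum = 0 := by
  apply List.sum_eq_zero
  intro x hx
  rw [List.mem_map] at hx
  obtain ⟨y, hy, rfl⟩ := hx
  have := h y hy
  omega

lemma sorted_pivot (L : List ℕ) (hL : L.Pairwise (· ≥ ·)) (k : ℕ) :
    (∀ x ∈ L.take k, L.getD k 0 ≤ x) ∧ (∀ x ∈ L.drop k, x ≤ L.getD k 0) := by
  induction L generalizing k with
  | nil => simp
  | cons a L ih =>
    rcases List.pairwise_cons.mp hL with ⟨ha, hL'⟩
    cases k with
    | zero =>
      refine ⟨by simp, ?_⟩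
      intro x hx
      simp only [List.drop_zero] at hx
      rcases List.mem_cons.mp hx with rfl | hx
      · simp [List.getD]
      · simpa [List.getD] using ha x hx
    | succ k =>
      obtain ⟨h1, h2⟩ := ih hL' k
      have hgd : (a :: L).getD (k + 1) 0 = L.getD k 0 := by simp [List.getD]
      constructor
      · intro x hx
        rw [List.take_succ_cons] at hx
        rw [hgd]
        rcases List.mem_cons.mp hx with rfl | hx
        · by_cases hk : k < L.length
          · have : L.getD k 0 = L[k] := by
              simp [List.getD, List.getElem?_eq_getElem hk]
            rw [this]
            exact ha _ (List.getElem_mem hk)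
          · rw [List.getD_eq_getElem?_getD, List.getElem?_eq_none (by omega), Option.getD_none]
            exact Nat.zero_le _
        · exact h1 x hx
      · intro x hx
        rw [List.drop_succ_cons] at hx
        rw [hgd]
        exact h2 x hx

lemma sum_sort (M : Multiset ℕ) (f : ℕ → ℕ) :
    ((M.sort (· ≤ ·)).map f).sum = (M.map f).sum := by
  conv_rhs => rw [← Multiset.sort_eq (r := (· ≤ ·)) (s := M)]
  rfl

lemma sum_map_reverse_sort (M : Multiset ℕ) (f : ℕ → ℕ) :
    ((M.sort (· ≤ ·)).reverse.map f).sum = (M.map f).sum := by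
  have h1 : List.Perm ((M.sort (· ≤ ·)).reverse.map f) ((M.sort (· ≤ ·)).map f) :=
    (List.reverse_perm _).map f
  rw [h1.sum_eq]
  exact sum_sort M f

lemma sum_reverse_sort (M : Multiset ℕ) :
    ((M.sort (· ≤ ·)).reverse.sum) = M.sum := by
  rw [List.sum_reverse]
  have h := sum_sort M id
  simpa using h

lemma topSum_le_mul_add (M : Multiset ℕ) (k t : ℕ) :
    topSum M k ≤ k * t + (M.map (· - t)).sum := by
  unfold topSum
  set l := (M.sort (· ≤ ·)).reverse with hl
  have h1 : (l.take k).sum ≤ (l.take k).length * t + ((l.take k).map (· - t)).sum :=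
    list_sum_le_mul_add _ t
  have h2 : (l.take k).length ≤ k := by
    rw [List.length_take]
    omega
  have h3 : ((l.take k).map (· - t)).sum ≤ (l.map (· - t)).sum := by
    conv_rhs => rw [← List.take_append_drop k l]
    rw [List.map_append, List.sum_append]
    exact Nat.le_add_right _ _
  have h4 : (l.map (· - t)).sum = (M.map (· - t)).sum := sum_map_reverse_sort M _
  calc (l.take k).sum ≤ (l.take k).length * t + ((l.take k).map (· - t)).sum := h1
    _ ≤ k * t + (M.map (· - t)).sum := by
        rw [← h4]
        exact Nat.add_le_add (Nat.mul_le_mul_right t h2) h3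

lemma topSum_eq_sum_of_card_le (M : Multiset ℕ) (k : ℕ) (h : M.card ≤ k) :
    topSum M k = M.sum := by
  unfold topSum
  rw [List.take_of_length_le, sum_reverse_sort]
  rw [List.length_reverse, Multiset.length_sort]
  exact h

lemma exists_pivot (M : Multiset ℕ) (k : ℕ) (hk : k ≤ M.card) :
    ∃ t, k * t + (M.map (· - t)).sum ≤ topSum M k := by
  set l := (M.sort (· ≤ ·)).reverse with hl
  have hsorted : l.Pairwise (· ≥ ·) := by
    have h1 : (M.sort (· ≤ ·)).Pairwise (· ≤ ·) := M.pairwise_sort _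
    exact List.pairwise_reverse.mpr h1
  obtain ⟨htake, hdrop⟩ := sorted_pivot l hsorted k
  refine ⟨l.getD k 0, ?_⟩
  set t := l.getD k 0
  have hlen : l.length = M.card := by
    rw [List.length_reverse, Multiset.length_sort]
  have h1 : (M.map (· - t)).sum = (l.map (· - t)).sum := (sum_map_reverse_sort M _).symm
  have h2 : (l.map (· - t)).sum = ((l.take k).map (· - t)).sum := by
    conv_lhs => rw [← List.take_append_drop k l]
    rw [List.map_append, List.sum_append, list_map_sub_sum_zero _ _ hdrop, Nat.add_zero]
  have h3 : (l.take k).length = k := by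
    rw [List.length_take]
    omega
  have h4 : (l.take k).length * t + ((l.take k).map (· - t)).sum = (l.take k).sum :=
    list_mul_add_sum_eq _ _ htake
  unfold topSum
  rw [h3] at h4
  rw [h1, h2]
  exact h4.le

/-! ### Final assembly -/

/-- The multiset of hook lengths of a Young diagram majorizes the multiset of anti-hook
lengths: equal total sums and dominating partial sums of non-increasing rearrangements. -/
theorem hooks_majorize_antiHooks (μ : YoungDiagram) :
    (μ.cells.val.map (hookLen μ)).sum = (μ.cells.val.map antiHookLen).sum ∧
    ∀ k, topSum (μ.cells.val.map antiHookLen) k ≤ topSum (μ.cells.val.map (hookLen μ)) k := by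
  obtain ⟨hEq, hTail⟩ := main_ineq μ.cells.card μ (le_refl _)
  have hEq' : (μ.cells.val.map (hookLen μ)).sum = (μ.cells.val.map antiHookLen).sum := hEq
  refine ⟨hEq', ?_⟩
  have hcc : Multiset.card μ.cells.val = μ.cells.card := rfl
  intro k
  by_cases hk : k ≤ μ.cells.card
  · have hk' : k ≤ (μ.cells.val.map (hookLen μ)).card := by
      rwa [Multiset.card_map]
    obtain ⟨t, ht⟩ := exists_pivot (μ.cells.val.map (hookLen μ)) k hk'
    have h1 : topSum (μ.cells.val.map antiHookLen) k
        ≤ k * t + ((μ.cells.val.map antiHookLen).map (· - t)).sum :=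
      topSum_le_mul_add _ k t
    have h2 : ((μ.cells.val.map antiHookLen).map (· - t)).sum
        ≤ ((μ.cells.val.map (hookLen μ)).map (· - t)).sum := by
      rw [Multiset.map_map, Multiset.map_map]
      exact hTail t
    omega
  · push_neg at hk
    have hc1 : (μ.cells.val.map antiHookLen).card ≤ k := by
      rw [Multiset.card_map]; omega
    have hc2 : (μ.cells.val.map (hookLen μ)).card ≤ k := by
      rw [Multiset.card_map]; omega
    rw [topSum_eq_sum_of_card_le _ _ hc1, topSum_eq_sum_of_card_le _ _ hc2, hEq']
end

section
/- For every Young diagram λ, the multiset of area numbers {a(u) : u ∈ λ} majorizes the multiset of anti-area numbers {a*(u) : u ∈ λ}. -/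
open Finset

namespace AreaMaj

/-! ### Arithmetic core -/

lemma clip (t x a y : ℕ) (h : y ≤ x) :
    min t (x + a) + min t y ≤ min t x + min t (y + a) := by omega

lemma tele (t w : ℕ) : ∀ h : ℕ,
    min t w + ∑ i ∈ range h, min t ((i + 2) * w)
      = min t ((h + 1) * w) + ∑ i ∈ range h, min t ((i + 1) * w)
  | 0 => by simp
  | h + 1 => by
    rw [Finset.sum_range_succ, Finset.sum_range_succ, ← add_assoc, tele t w h]
    have e1 : h + 1 + 1 = h + 2 := rfl
    rw [e1]
    ring

lemma chunks (t : ℕ) : ∀ (n : ℕ) (f : ℕ → ℕ) (x c : ℕ),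
    (∀ i j, i ≤ j → f j ≤ f i) → (∀ i, i < n → c * f i ≤ x) →
    min t (x + ∑ q ∈ range n, f q) + ∑ i ∈ range n, min t ((c + i) * f i)
      ≤ min t x + ∑ i ∈ range n, min t ((c + i + 1) * f i)
  | 0, f, x, c, _, _ => by simp
  | n + 1, f, x, c, hf, hc => by
    have IH := chunks t n (fun q => f (q + 1)) (x + f 0) (c + 1)
      (fun i j hij => hf (i + 1) (j + 1) (by omega))
      (fun i _ => by
        have h1 : c * f (i + 1) ≤ x := hc (i + 1) (by omega)
        have h2 : f (i + 1) ≤ f 0 := hf 0 (i + 1) (by omega)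
        calc (c + 1) * f (i + 1) = c * f (i + 1) + f (i + 1) := by ring
        _ ≤ x + f 0 := by omega)
    rw [Finset.sum_range_succ' (fun q => f q) n,
        Finset.sum_range_succ' (fun i => min t ((c + i) * f i)) n,
        Finset.sum_range_succ' (fun i => min t ((c + i + 1) * f i)) n]
    have es1 : ∑ i ∈ range n, min t ((c + (i + 1)) * f (i + 1))
        = ∑ i ∈ range n, min t ((c + 1 + i) * f (i + 1)) := by
      refine Finset.sum_congr rfl fun i _ => ?_
      congr 2
      ring
    have es2 : ∑ i ∈ range n, min t ((c + (i + 1) + 1) * f (i + 1))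
        = ∑ i ∈ range n, min t ((c + 1 + i + 1) * f (i + 1)) := by
      refine Finset.sum_congr rfl fun i _ => ?_
      congr 2
      ring
    rw [es1, es2]
    have hx : x + ((∑ q ∈ range n, f (q + 1)) + f 0)
        = (x + f 0) + ∑ q ∈ range n, f (q + 1) := by ring
    rw [hx]
    have hcl : min t (x + f 0) + min t ((c + 0) * f 0)
        ≤ min t x + min t ((c + 0 + 1) * f 0) := by
      have h0 : c * f 0 ≤ x := hc 0 (by omega)
      have e3 : (c + 0) * f 0 = c * f 0 := by ring
      have e4 : (c + 0 + 1) * f 0 = c * f 0 + f 0 := by ring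
      rw [e3, e4]
      exact clip t x (f 0) (c * f 0) h0
    linarith [IH, hcl]

lemma keyIneq (t : ℕ) : ∀ (n : ℕ) (f : ℕ → ℕ), (∀ i j, i ≤ j → f j ≤ f i) →
    ∑ i ∈ range n, min t (∑ q ∈ Finset.Ico i n, f q)
      ≤ ∑ i ∈ range n, min t ((i + 1) * f i)
  | 0, f, _ => by simp
  | n + 1, f, hf => by
    have hf' : ∀ i j : ℕ, i ≤ j → f (j + 1) ≤ f (i + 1) :=
      fun i j hij => hf (i + 1) (j + 1) (by omega)
    have IH := keyIneq t n (fun q => f (q + 1)) hf'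
    have hch := chunks t n (fun q => f (q + 1)) (f 0) 1 hf'
      (fun i _ => by simpa using hf 0 (i + 1) (by omega))
    rw [Finset.sum_range_succ' (fun i => min t (∑ q ∈ Finset.Ico i (n + 1), f q)) n,
        Finset.sum_range_succ' (fun i => min t ((i + 1) * f i)) n]
    have reidx : ∀ i, ∑ q ∈ Finset.Ico (i + 1) (n + 1), f q
        = ∑ q ∈ Finset.Ico i n, f (q + 1) := by
      intro i
      rw [Finset.sum_Ico_eq_sum_range, Finset.sum_Ico_eq_sum_range]
      have e : n + 1 - (i + 1) = n - i := by omega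
      rw [e]
      refine Finset.sum_congr rfl fun j _ => ?_
      congr 1
      ring
    have e0 : ∑ q ∈ Finset.Ico 0 (n + 1), f q
        = f 0 + ∑ q ∈ range n, f (q + 1) := by
      rw [← Finset.range_eq_Ico, Finset.sum_range_succ' (fun q => f q) n]
      ring
    simp only [reidx, e0]
    have es1 : ∑ i ∈ range n, min t ((1 + i) * f (i + 1))
        = ∑ i ∈ range n, min t ((i + 1) * f (i + 1)) := by
      refine Finset.sum_congr rfl fun i _ => ?_
      congr 2
      ring
    have es2 : ∑ i ∈ range n, min t ((1 + i + 1) * f (i + 1))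
        = ∑ i ∈ range n, min t ((i + 1 + 1) * f (i + 1)) := by
      refine Finset.sum_congr rfl fun i _ => ?_
      congr 2
      ring
    rw [es1, es2] at hch
    have e5 : (0 + 1) * f 0 = f 0 := by ring
    rw [e5]
    linarith [IH, hch]

/-! ### Combinatorial helpers -/

lemma downclosed_eq_range {S : Finset ℕ} (h : ∀ a b : ℕ, a ≤ b → b ∈ S → a ∈ S) :
    S = range S.card := by
  ext i
  simp only [Finset.mem_range]
  constructor
  · intro hi
    have hsub : range (i + 1) ⊆ S := by
      intro a ha
      have : a < i + 1 := mem_range.mp ha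
      exact h a i (by omega) hi
    have := Finset.card_le_card hsub
    simpa using this
  · intro hi
    by_contra hns
    have hsub : S ⊆ range i := by
      intro b hb
      simp only [mem_range]
      by_contra hbi
      exact hns (h i b (by omega) hb)
    have := Finset.card_le_card hsub
    simp only [Finset.card_range] at this
    omega

lemma swapSum (n B : ℕ) (v : ℕ → ℕ) (hv : ∀ i, i < n → v i ≤ B) (g : ℕ → ℕ → ℕ) :
    ∑ i ∈ range n, ∑ j ∈ range (v i), g i j
      = ∑ j ∈ range B, ∑ i ∈ (range n).filter (fun i => j < v i), g i j := by
  have h1 : ∀ i ∈ range n, ∑ j ∈ range (v i), g i j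
      = ∑ j ∈ range B, if j < v i then g i j else 0 := by
    intro i hi
    rw [← Finset.sum_filter]
    refine (Finset.sum_congr ?_ fun j _ => rfl)
    ext j
    simp only [mem_filter, mem_range]
    have := hv i (mem_range.mp hi)
    omega
  rw [Finset.sum_congr rfl h1, Finset.sum_comm]
  exact Finset.sum_congr rfl fun j _ => (Finset.sum_filter _ _).symm

lemma conjSum (m B j : ℕ) (l : ℕ → ℕ) (hB : ∀ p, p < m → l p ≤ B) :
    ∑ p ∈ range m, (l p - j)
      = ∑ q ∈ Finset.Ico j B, ((range m).filter (fun p => q < l p)).card := by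
  have h1 : ∀ q ∈ Finset.Ico j B, ((range m).filter (fun p => q < l p)).card
      = ∑ p ∈ range m, if q < l p then 1 else 0 :=
    fun q _ => Finset.card_filter _ _
  rw [Finset.sum_congr rfl h1, Finset.sum_comm]
  refine Finset.sum_congr rfl fun p hp => ?_
  rw [← Finset.sum_filter]
  have hfil : (Finset.Ico j B).filter (fun q => q < l p) = Finset.Ico j (l p) := by
    ext q
    simp only [mem_filter, mem_Ico]
    have := hB p (mem_range.mp hp)
    omega
  rw [hfil, Finset.sum_const, smul_eq_mul, mul_one, Nat.card_Ico]

/-! ### The main per-threshold inequality, in terms of row lengths -/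

lemma star' (t : ℕ) : ∀ (n : ℕ) (l : ℕ → ℕ), (∀ i j, i ≤ j → l j ≤ l i) →
    ∑ i ∈ range n, ∑ j ∈ range (l i), min t (∑ p ∈ Finset.Ico i n, (l p - j))
      ≤ ∑ i ∈ range n, ∑ j ∈ range (l i), min t ((i + 1) * (j + 1))
  | 0, l, _ => by simp
  | n + 1, l, hl => by
    have hl' : ∀ i j : ℕ, i ≤ j → l (j + 1) ≤ l (i + 1) :=
      fun i j hij => hl (i + 1) (j + 1) (by omega)
    have IH := star' t n (fun i => l (i + 1)) hl'
    rw [Finset.sum_range_succ'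
        (fun i => ∑ j ∈ range (l i), min t (∑ p ∈ Finset.Ico i (n + 1), (l p - j))) n,
        Finset.sum_range_succ' (fun i => ∑ j ∈ range (l i), min t ((i + 1) * (j + 1))) n]
    have reidx : ∀ i j, ∑ p ∈ Finset.Ico (i + 1) (n + 1), (l p - j)
        = ∑ p ∈ Finset.Ico i n, (l (p + 1) - j) := by
      intro i j
      rw [Finset.sum_Ico_eq_sum_range, Finset.sum_Ico_eq_sum_range]
      have e : n + 1 - (i + 1) = n - i := by omega
      rw [e]
      refine Finset.sum_congr rfl fun q _ => ?_
      congr 2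
      ring
    simp only [reidx]
    -- bound the shifted part by IH
    have hmain :
        ∑ j ∈ range (l 0), min t (∑ p ∈ Finset.Ico 0 (n + 1), (l p - j))
          + ∑ i ∈ range n, ∑ j ∈ range (l (i + 1)), min t ((i + 1) * (j + 1))
        ≤ ∑ j ∈ range (l 0), min t ((0 + 1) * (j + 1))
          + ∑ i ∈ range n, ∑ j ∈ range (l (i + 1)), min t ((i + 1 + 1) * (j + 1)) := by
      -- swap the double sums to column form
      have hv : ∀ i, i < n → l (i + 1) ≤ l 0 := fun i _ => hl 0 (i + 1) (by omega)
      rw [swapSum n (l 0) (fun i => l (i + 1)) hv (fun i j => min t ((i + 1) * (j + 1))),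
          swapSum n (l 0) (fun i => l (i + 1)) hv (fun i j => min t ((i + 1 + 1) * (j + 1)))]
      set h : ℕ → ℕ := fun j => ((range n).filter (fun i => j < l (i + 1))).card with hh
      have hfil : ∀ j, (range n).filter (fun i => j < l (i + 1)) = range (h j) := by
        intro j
        exact downclosed_eq_range (fun a b hab hb => by
          simp only [mem_filter, mem_range] at hb ⊢
          exact ⟨by omega, lt_of_lt_of_le hb.2 (hl' a b hab)⟩)
      simp only [hfil]
      -- telescope the right-hand inner sums
      have htele : ∀ j, min t ((0 + 1) * (j + 1)) + ∑ i ∈ range (h j), min t ((i + 1 + 1) * (j + 1))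
          = min t ((h j + 1) * (j + 1)) + ∑ i ∈ range (h j), min t ((i + 1) * (j + 1)) := by
        intro j
        have e1 : (0 + 1) * (j + 1) = j + 1 := by ring
        have e2 : ∀ i : ℕ, (i + 1 + 1) * (j + 1) = (i + 2) * (j + 1) := fun i => by ring
        simp only [e1, e2]
        exact tele t (j + 1) (h j)
      rw [← Finset.sum_add_distrib, ← Finset.sum_add_distrib,
          Finset.sum_congr rfl (fun j _ => htele j), Finset.sum_add_distrib,
          Finset.sum_add_distrib]
      have hkey : ∑ j ∈ range (l 0), min t (∑ p ∈ Finset.Ico 0 (n + 1), (l p - j))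
          ≤ ∑ j ∈ range (l 0), min t ((h j + 1) * (j + 1)) := by
        have hB : ∀ p, p < n + 1 → l p ≤ l 0 := fun p _ => hl 0 p (by omega)
        have hA0 : ∀ j ∈ range (l 0), ∑ p ∈ Finset.Ico 0 (n + 1), (l p - j)
            = ∑ q ∈ Finset.Ico j (l 0), (h q + 1) := by
          intro j _
          rw [← Finset.range_eq_Ico, conjSum (n + 1) (l 0) j l hB]
          refine Finset.sum_congr rfl fun q hq => ?_
          have hq0 : q < l 0 := (mem_Ico.mp hq).2
          rw [Finset.card_filter, Finset.sum_range_succ' (fun p => if q < l p then 1 else 0) n]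
          have hone : (if q < l 0 then 1 else 0) = 1 := by simp [hq0]
          rw [hone]
          congr 1
          exact (Finset.card_filter _ _).symm
        have hanti : ∀ i j : ℕ, i ≤ j → h j + 1 ≤ h i + 1 := by
          intro i j hij
          have : ((range n).filter (fun p => j < l (p + 1)))
              ⊆ ((range n).filter (fun p => i < l (p + 1))) := by
            intro p hp
            simp only [mem_filter] at hp ⊢
            exact ⟨hp.1, by omega⟩
          have := Finset.card_le_card this
          show #((range n).filter (fun p => j < l (p + 1))) + 1
            ≤ #((range n).filter (fun p => i < l (p + 1))) + 1
          omega
        calc ∑ j ∈ range (l 0), min t (∑ p ∈ Finset.Ico 0 (n + 1), (l p - j))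
            = ∑ j ∈ range (l 0), min t (∑ q ∈ Finset.Ico j (l 0), (h q + 1)) := by
              refine Finset.sum_congr rfl fun j hj => ?_
              rw [hA0 j hj]
          _ ≤ ∑ j ∈ range (l 0), min t ((j + 1) * (h j + 1)) :=
              keyIneq t (l 0) (fun j => h j + 1) hanti
          _ = ∑ j ∈ range (l 0), min t ((h j + 1) * (j + 1)) :=
              Finset.sum_congr rfl fun j _ => by rw [mul_comm]
      have hsplit := Nat.add_le_add_right hkey
          (∑ j ∈ range (l 0), ∑ i ∈ range (h j), min t ((i + 1) * (j + 1)))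
      linarith [hsplit]
    calc
      (∑ i ∈ range n, ∑ j ∈ range (l (i + 1)),
            min t (∑ p ∈ Finset.Ico i n, (l (p + 1) - j)))
          + ∑ j ∈ range (l 0), min t (∑ p ∈ Finset.Ico 0 (n + 1), (l p - j))
        ≤ (∑ i ∈ range n, ∑ j ∈ range (l (i + 1)), min t ((i + 1) * (j + 1)))
          + ∑ j ∈ range (l 0), min t (∑ p ∈ Finset.Ico 0 (n + 1), (l p - j)) := by
            exact Nat.add_le_add_right IH _
      _ ≤ (∑ i ∈ range n, ∑ j ∈ range (l (i + 1)), min t ((i + 1 + 1) * (j + 1)))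
          + ∑ j ∈ range (l 0), min t ((0 + 1) * (j + 1)) := by linarith [hmain]

/-! ### Transfer to Young diagrams -/

lemma cells_eq_map (μ : YoungDiagram) :
    μ.cells = ((range (μ.colLen 0)).sigma (fun i => range (μ.rowLen i))).map
      ⟨fun p => (p.1, p.2), by
        rintro ⟨a, b⟩ ⟨c, d⟩ h
        simp only [Prod.mk.injEq] at h
        obtain ⟨rfl, rfl⟩ := h
        rfl⟩ := by
  ext ⟨i, j⟩
  simp only [Finset.mem_map, Finset.mem_sigma, Function.Embedding.coeFn_mk,
    YoungDiagram.mem_cells, Finset.mem_range]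
  constructor
  · intro hm
    refine ⟨⟨i, j⟩, ⟨?_, ?_⟩, rfl⟩
    · rw [← YoungDiagram.mem_iff_lt_colLen]
      exact μ.up_left_mem (le_refl i) (Nat.zero_le j) hm
    · rw [← YoungDiagram.mem_iff_lt_rowLen]
      exact hm
  · rintro ⟨⟨a, b⟩, ⟨ha, hb⟩, h⟩
    obtain ⟨rfl, rfl⟩ := h
    rw [YoungDiagram.mem_iff_lt_rowLen]
    exact hb

lemma cells_sum_eq (μ : YoungDiagram) (F : ℕ × ℕ → ℕ) :
    ∑ c ∈ μ.cells, F c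
      = ∑ i ∈ range (μ.colLen 0), ∑ j ∈ range (μ.rowLen i), F (i, j) := by
  rw [cells_eq_map μ, Finset.sum_map, Finset.sum_sigma]
  rfl

lemma area_eq (μ : YoungDiagram) (i j : ℕ) :
    areaNum μ (i, j) = ∑ p ∈ Finset.Ico i (μ.colLen 0), (μ.rowLen p - j) := by
  show (μ.cells.filter fun d => i ≤ d.1 ∧ j ≤ d.2).card = _
  rw [Finset.card_filter,
    cells_sum_eq μ (fun d => if i ≤ d.1 ∧ j ≤ d.2 then 1 else 0)]
  have hinner : ∀ p, ∑ q ∈ range (μ.rowLen p), (if i ≤ p ∧ j ≤ q then 1 else 0)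
      = if i ≤ p then μ.rowLen p - j else 0 := by
    intro p
    by_cases hip : i ≤ p
    · simp only [hip, true_and, if_true]
      rw [← Finset.card_filter]
      have : (range (μ.rowLen p)).filter (fun q => j ≤ q) = Finset.Ico j (μ.rowLen p) := by
        ext q
        simp only [mem_filter, mem_range, mem_Ico]
        omega
      rw [this, Nat.card_Ico]
    · simp [hip]
  rw [Finset.sum_congr rfl (fun p _ => hinner p), ← Finset.sum_filter]
  congr 1
  ext p
  simp only [mem_filter, mem_range, mem_Ico]
  omega

lemma antiArea_card (μ : YoungDiagram) {d : ℕ × ℕ} (hd : d ∈ μ.cells) :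
    (μ.cells.filter fun c => c.1 ≤ d.1 ∧ c.2 ≤ d.2).card = antiAreaNum d := by
  have hrect : μ.cells.filter (fun c => c.1 ≤ d.1 ∧ c.2 ≤ d.2)
      = range (d.1 + 1) ×ˢ range (d.2 + 1) := by
    ext ⟨p, q⟩
    simp only [Finset.mem_filter, Finset.mem_product, Finset.mem_range,
      YoungDiagram.mem_cells]
    constructor
    · rintro ⟨_, h1, h2⟩
      omega
    · rintro ⟨h1, h2⟩
      exact ⟨μ.up_left_mem (by omega) (by omega) ((YoungDiagram.mem_cells d).mp hd),
        by omega, by omega⟩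
  rw [hrect, Finset.card_product, Finset.card_range, Finset.card_range]
  rfl

lemma sum_area_eq (μ : YoungDiagram) :
    ∑ c ∈ μ.cells, areaNum μ c = ∑ c ∈ μ.cells, antiAreaNum c := by
  have h1 : ∀ c ∈ μ.cells, areaNum μ c
      = ∑ d ∈ μ.cells, if c.1 ≤ d.1 ∧ c.2 ≤ d.2 then 1 else 0 :=
    fun c _ => Finset.card_filter _ _
  rw [Finset.sum_congr rfl h1, Finset.sum_comm]
  refine Finset.sum_congr rfl fun d hd => ?_
  rw [← Finset.card_filter]
  exact antiArea_card μ hd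

lemma starYD (μ : YoungDiagram) (t : ℕ) :
    ∑ c ∈ μ.cells, min t (areaNum μ c) ≤ ∑ c ∈ μ.cells, min t (antiAreaNum c) := by
  rw [cells_sum_eq μ (fun c => min t (areaNum μ c)),
      cells_sum_eq μ (fun c => min t (antiAreaNum c))]
  have harea : ∀ i ∈ range (μ.colLen 0), ∀ j ∈ range (μ.rowLen i),
      min t (areaNum μ (i, j)) = min t (∑ p ∈ Finset.Ico i (μ.colLen 0), (μ.rowLen p - j)) :=
    fun i _ j _ => by rw [area_eq]
  calc ∑ i ∈ range (μ.colLen 0), ∑ j ∈ range (μ.rowLen i), min t (areaNum μ (i, j))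
      = ∑ i ∈ range (μ.colLen 0), ∑ j ∈ range (μ.rowLen i),
          min t (∑ p ∈ Finset.Ico i (μ.colLen 0), (μ.rowLen p - j)) := by
        refine Finset.sum_congr rfl fun i hi => Finset.sum_congr rfl fun j hj => ?_
        exact harea i hi j hj
    _ ≤ ∑ i ∈ range (μ.colLen 0), ∑ j ∈ range (μ.rowLen i), min t ((i + 1) * (j + 1)) :=
        star' t (μ.colLen 0) μ.rowLen (fun i j h => μ.rowLen_anti i j h)
    _ = ∑ i ∈ range (μ.colLen 0), ∑ j ∈ range (μ.rowLen i), min t (antiAreaNum (i, j)) := rfl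

/-! ### From per-threshold min-sums to top-k sums -/

lemma list_sum_le (l : List ℕ) (τ : ℕ) :
    l.sum ≤ l.length * τ + (l.map (fun x => x - τ)).sum := by
  induction l with
  | nil => simp
  | cons a l ih =>
    simp only [List.sum_cons, List.map_cons, List.length_cons]
    have h2 : a ≤ τ + (a - τ) := by omega
    have h3 : (l.length + 1) * τ = l.length * τ + τ := by ring
    linarith

lemma list_sum_eq (l : List ℕ) (τ : ℕ) (h : ∀ x ∈ l, τ ≤ x) :
    l.sum = l.length * τ + (l.map (fun x => x - τ)).sum := by
  induction l with
  | nil => simp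
  | cons a l ih =>
    have ha : τ ≤ a := h a (by simp)
    have ih' := ih (fun x hx => h x (by simp [hx]))
    simp only [List.sum_cons, List.map_cons, List.length_cons]
    have h3 : (l.length + 1) * τ = l.length * τ + τ := by ring
    have h4 : a = τ + (a - τ) := by omega
    linarith

lemma list_sub_zero (l : List ℕ) (τ : ℕ) (h : ∀ x ∈ l, x ≤ τ) :
    (l.map (fun x => x - τ)).sum = 0 := by
  induction l with
  | nil => simp
  | cons a l ih =>
    have ha : a - τ = 0 := by have := h a (by simp); omega
    simp only [List.map_cons, List.sum_cons, ha]
    rw [ih (fun x hx => h x (by simp [hx]))]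

lemma mapsum_rev (A : Multiset ℕ) (f : ℕ → ℕ) :
    (((A.sort (· ≤ ·)).reverse).map f).sum = (A.map f).sum := by
  rw [List.map_reverse, List.sum_reverse]
  have h1 : (↑((A.sort (· ≤ ·)).map f) : Multiset ℕ) = A.map f := by
    rw [← Multiset.map_coe, Multiset.sort_eq]
  calc ((A.sort (· ≤ ·)).map f).sum
      = (↑((A.sort (· ≤ ·)).map f) : Multiset ℕ).sum := rfl
    _ = (A.map f).sum := by rw [h1]

lemma rev_sorted (A : Multiset ℕ) :
    ((A.sort (· ≤ ·)).reverse).Pairwise (fun a b => b ≤ a) := by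
  have : (A.sort (· ≤ ·)).Pairwise (· ≤ ·) := Multiset.pairwise_sort ..
  exact List.pairwise_reverse.mpr this

lemma topSum_le (A B : Multiset ℕ)
    (hcard : Multiset.card A = Multiset.card B)
    (hsum : A.sum = B.sum)
    (hmin : ∀ τ : ℕ, (A.map (fun x => min τ x)).sum ≤ (B.map (fun x => min τ x)).sum)
    (k : ℕ) : topSum B k ≤ topSum A k := by
  unfold topSum
  set LA := (A.sort (· ≤ ·)).reverse with hLA
  set LB := (B.sort (· ≤ ·)).reverse with hLB
  have hlenA : LA.length = Multiset.card A := by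
    rw [hLA, List.length_reverse, Multiset.length_sort]
  have hlenB : LB.length = Multiset.card B := by
    rw [hLB, List.length_reverse, Multiset.length_sort]
  have hsumLA : LA.sum = A.sum := by
    have := mapsum_rev A id
    simpa [hLA] using this
  have hsumLB : LB.sum = B.sum := by
    have := mapsum_rev B id
    simpa [hLB] using this
  by_cases hk : k < Multiset.card A
  · have hkA : k < LA.length := by omega
    have hkB : k ≤ LB.length := by omega
    have hdne : LA.drop k ≠ [] := by
      intro h
      have : (LA.drop k).length = LA.length - k := List.length_drop
      rw [h] at this
      simp at this
      omega
    set τ := (LA.drop k).head hdne with hτ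
    have hτmem : τ ∈ LA.drop k := List.head_mem hdne
    have hsorted := rev_sorted A
    rw [← hLA] at hsorted
    have htake : ∀ x ∈ LA.take k, τ ≤ x :=
      fun x hx => hsorted.rel_of_mem_take_of_mem_drop hx hτmem
    have hdropSorted : (LA.drop k).Pairwise (fun a b => b ≤ a) :=
      hsorted.sublist (List.drop_sublist k LA)
    have hdrop : ∀ x ∈ LA.drop k, x ≤ τ := by
      intro x hx
      have e := List.cons_head_tail (l := LA.drop k) hdne
      rw [← hτ] at e
      rw [← e] at hx hdropSorted
      rcases List.mem_cons.mp hx with h | h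
      · omega
      · exact List.rel_of_pairwise_cons hdropSorted h
    have htlen : (LA.take k).length = k := by
      rw [List.length_take]
      omega
    have hA1 : (LA.take k).sum = k * τ + ((LA.take k).map (fun x => x - τ)).sum := by
      have := list_sum_eq (LA.take k) τ htake
      rwa [htlen] at this
    have hA2 : (LA.map (fun x => x - τ)).sum = ((LA.take k).map (fun x => x - τ)).sum := by
      conv_lhs => rw [← List.take_append_drop k LA]
      rw [List.map_append, List.sum_append, list_sub_zero _ τ hdrop]
      omega
    have hB1 : (LB.take k).sum ≤ k * τ + ((LB.take k).map (fun x => x - τ)).sum := by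
      have h1 := list_sum_le (LB.take k) τ
      have h2 : (LB.take k).length ≤ k := by
        rw [List.length_take]
        omega
      have h3 : (LB.take k).length * τ ≤ k * τ := Nat.mul_le_mul_right τ h2
      omega
    have hB2 : ((LB.take k).map (fun x => x - τ)).sum ≤ (LB.map (fun x => x - τ)).sum := by
      conv_rhs => rw [← List.take_append_drop k LB]
      rw [List.map_append, List.sum_append]
      exact Nat.le_add_right _ _
    have hMA : (LA.map (fun x => x - τ)).sum = (A.map (fun x => x - τ)).sum := mapsum_rev A _
    have hMB : (LB.map (fun x => x - τ)).sum = (B.map (fun x => x - τ)).sum := mapsum_rev B _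
    have hsplitA : (A.map (fun x => x - τ)).sum + (A.map (fun x => min τ x)).sum = A.sum := by
      rw [← Multiset.sum_map_add]
      have : A.map (fun x => (x - τ) + min τ x) = A.map id := by
        refine Multiset.map_congr rfl fun x _ => by simp only [id_eq]; omega
      rw [this, Multiset.map_id]
    have hsplitB : (B.map (fun x => x - τ)).sum + (B.map (fun x => min τ x)).sum = B.sum := by
      rw [← Multiset.sum_map_add]
      have : B.map (fun x => (x - τ) + min τ x) = B.map id := by
        refine Multiset.map_congr rfl fun x _ => by simp only [id_eq]; omega
      rw [this, Multiset.map_id]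
    have hcmp : (B.map (fun x => x - τ)).sum ≤ (A.map (fun x => x - τ)).sum := by
      have := hmin τ
      omega
    calc (LB.take k).sum
        ≤ k * τ + ((LB.take k).map (fun x => x - τ)).sum := hB1
      _ ≤ k * τ + (LB.map (fun x => x - τ)).sum := by omega
      _ = k * τ + (B.map (fun x => x - τ)).sum := by rw [hMB]
      _ ≤ k * τ + (A.map (fun x => x - τ)).sum := by omega
      _ = k * τ + ((LA.take k).map (fun x => x - τ)).sum := by rw [← hMA, hA2]
      _ = (LA.take k).sum := hA1.symm
  · push_neg at hk
    have h1 : LB.take k = LB := List.take_of_length_le (by omega)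
    have h2 : LA.take k = LA := List.take_of_length_le (by omega)
    rw [h1, h2, hsumLA, hsumLB, hsum]

end AreaMaj

/-- The multiset of area numbers of a Young diagram majorizes the multiset of anti-area
numbers. -/
theorem areas_majorize_antiAreas (μ : YoungDiagram) :
    (μ.cells.val.map (areaNum μ)).sum = (μ.cells.val.map antiAreaNum).sum ∧
    ∀ k, topSum (μ.cells.val.map antiAreaNum) k ≤ topSum (μ.cells.val.map (areaNum μ)) k := by
  have hsum : (μ.cells.val.map (areaNum μ)).sum = (μ.cells.val.map antiAreaNum).sum := by
    have := AreaMaj.sum_area_eq μ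
    rw [Finset.sum] at this
    rw [Finset.sum] at this
    exact this
  refine ⟨hsum, fun k => ?_⟩
  refine AreaMaj.topSum_le (μ.cells.val.map (areaNum μ)) (μ.cells.val.map antiAreaNum)
    (by simp) hsum ?_ k
  intro τ
  rw [Multiset.map_map, Multiset.map_map]
  have h1 : ((fun x => min τ x) ∘ areaNum μ) = fun c => min τ (areaNum μ c) := rfl
  have h2 : ((fun x => min τ x) ∘ antiAreaNum) = fun c => min τ (antiAreaNum c) := rfl
  rw [h1, h2]
  have := AreaMaj.starYD μ τ
  rw [Finset.sum] at this
  rw [Finset.sum] at this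
  exact this
end

section
/- For every finite rooted tree τ, the multiset of branch sizes {b(v) : v ∈ τ} majorizes the multiset of distance numbers {d(v) : v ∈ τ}. -/
namespace TreeMaj
open SimpleGraph Finset
open scoped Classical

variable {V : Type*} (G : SimpleGraph V) (R : V)

/-- `anc G R u w` : u lies on the geodesic from w to the root R. -/
def anc (u w : V) : Prop := G.dist w R = G.dist w u + G.dist u R

variable {G R}

lemma anc_self (w : V) : anc G R w w := by
  simp [anc, SimpleGraph.dist_self]

lemma anc_dist_le {u w : V} (h : anc G R u w) : G.dist u R ≤ G.dist w R := by
  rw [h]; omega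

lemma anc_trans (hc : G.Connected) {u w x : V} (hux : anc G R u x) (hwu : anc G R w u) :
    anc G R w x := by
  unfold anc at *
  have t1 : G.dist x w ≤ G.dist x u + G.dist u w := hc.dist_triangle
  have t2 : G.dist x R ≤ G.dist x w + G.dist w R := hc.dist_triangle
  have h3 : G.dist u w = G.dist w u := SimpleGraph.dist_comm ..
  omega

/-- On a geodesic walk, every support vertex splits distances additively, and both
pieces are geodesics. -/
lemma geodesic_split {a b u : V} (p : G.Walk a b) (hp : p.length = G.dist a b)
    (hc : G.Connected) (h : u ∈ p.support) :
    G.dist a u + G.dist u b = G.dist a b ∧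
      (p.takeUntil u h).length = G.dist a u ∧ (p.dropUntil u h).length = G.dist u b := by
  classical
  have hsplit : (p.takeUntil u h).length + (p.dropUntil u h).length = p.length := by
    rw [← SimpleGraph.Walk.length_append, SimpleGraph.Walk.take_spec]
  have h1 : G.dist a u ≤ (p.takeUntil u h).length := SimpleGraph.dist_le _
  have h2 : G.dist u b ≤ (p.dropUntil u h).length := SimpleGraph.dist_le _
  have h3 : G.dist a b ≤ G.dist a u + G.dist u b := hc.dist_triangle
  omega

/-- On a geodesic walk, each level `i ≤ length` is achieved by a support vertex. -/
lemma exists_support_dist (hc : G.Connected) :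
    ∀ {w b : V} (p : G.Walk w b), p.length = G.dist w b →
    ∀ i ≤ p.length, ∃ u ∈ p.support, G.dist u b = i := by
  intro w b p
  induction p with
  | nil =>
    intro _ i hi
    simp only [SimpleGraph.Walk.length_nil, Nat.le_zero] at hi
    subst hi
    exact ⟨_, by simp, SimpleGraph.dist_self ..⟩
  | @cons a c b hadj q ih =>
    intro hp i hi
    have hq : q.length = G.dist c b := by
      have h1 : G.dist c b ≤ q.length := SimpleGraph.dist_le q
      have h2 : G.dist a b ≤ G.dist a c + G.dist c b := hc.dist_triangle
      have h3 : G.dist a c ≤ 1 := by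
        simpa using SimpleGraph.dist_le (SimpleGraph.Walk.cons hadj SimpleGraph.Walk.nil)
      simp only [SimpleGraph.Walk.length_cons] at hp
      omega
    rcases Nat.lt_or_ge i (q.length + 1) with hlt | hge
    · obtain ⟨u, hu, hud⟩ := ih hq i (by omega)
      exact ⟨u, by simp [hu], hud⟩
    · refine ⟨a, by simp, ?_⟩
      simp only [SimpleGraph.Walk.length_cons] at hp hi
      omega

/-- existence of an ancestor at every level -/
lemma exists_anc (hc : G.Connected) (w : V) {i : ℕ} (hi : i ≤ G.dist w R) :
    ∃ u, anc G R u w ∧ G.dist u R = i := by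
  obtain ⟨p, hp⟩ := hc.exists_walk_length_eq_dist w R
  obtain ⟨u, hu, hud⟩ := exists_support_dist hc p hp i (by omega)
  have h := geodesic_split p hp hc hu
  exact ⟨u, by rw [anc, ← h.1], hud⟩

/-- on a geodesic, the distance-to-end determines the vertex -/
lemma support_dist_inj (hc : G.Connected) {a b : V} (p : G.Walk a b)
    (hp : p.length = G.dist a b) {u₁ u₂ : V} (h1 : u₁ ∈ p.support) (h2 : u₂ ∈ p.support)
    (hd : G.dist u₁ b = G.dist u₂ b) : u₁ = u₂ := by
  classical
  obtain ⟨hadd, htake, hdrop⟩ := geodesic_split p hp hc h1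
  have hsp := SimpleGraph.Walk.take_spec p h1
  have h2' : u₂ ∈ ((p.takeUntil u₁ h1).append (p.dropUntil u₁ h1)).support := by rw [hsp]; exact h2
  rw [SimpleGraph.Walk.mem_support_append_iff] at h2'
  rcases h2' with h2' | h2'
  · -- u₂ on the geodesic a → u₁
    obtain ⟨hadd', _, _⟩ := geodesic_split (p.takeUntil u₁ h1) htake hc h2'
    have t : G.dist a b ≤ G.dist a u₂ + G.dist u₂ b := hc.dist_triangle
    have : G.dist u₂ u₁ = 0 := by omega
    exact ((hc.dist_eq_zero_iff).mp this).symm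
  · obtain ⟨hadd', _, _⟩ := geodesic_split (p.dropUntil u₁ h1) hdrop hc h2'
    have : G.dist u₁ u₂ = 0 := by omega
    exact (hc.dist_eq_zero_iff).mp this

/-- every ancestor lies on any path from w to R (tree) -/
lemma anc_mem_support (hG : G.IsTree) {u w : V} (h : anc G R u w)
    (p : G.Walk w R) (hp : p.IsPath) : u ∈ p.support := by
  have hc := hG.isConnected
  obtain ⟨q1, hq1⟩ := hc.exists_walk_length_eq_dist w u
  obtain ⟨q2, hq2⟩ := hc.exists_walk_length_eq_dist u R
  have hlen : (q1.append q2).length = G.dist w R := by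
    rw [SimpleGraph.Walk.length_append, hq1, hq2, h]
  have hpath : (q1.append q2).IsPath :=
    SimpleGraph.Walk.isPath_of_length_eq_dist _ (by rw [hlen])
  have := (hG.existsUnique_path w R).unique hpath hp
  rw [← this]
  simp [SimpleGraph.Walk.mem_support_append_iff]

/-- uniqueness of ancestors at a given level -/
lemma anc_unique (hG : G.IsTree) {w u₁ u₂ : V} (h1 : anc G R u₁ w) (h2 : anc G R u₂ w)
    (hd : G.dist u₁ R = G.dist u₂ R) : u₁ = u₂ := by
  have hc := hG.isConnected
  obtain ⟨p, hp⟩ := hc.exists_walk_length_eq_dist w R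
  have hpath : p.IsPath := SimpleGraph.Walk.isPath_of_length_eq_dist _ hp
  exact support_dist_inj hc p hp (anc_mem_support hG h1 p hpath)
    (anc_mem_support hG h2 p hpath) hd

/-- two ancestors of the same vertex are comparable (T2) -/
lemma anc_anc (hG : G.IsTree) {x w u : V} (hw : anc G R w x) (hu : anc G R u x)
    (hle : G.dist w R ≤ G.dist u R) : anc G R w u := by
  have hc := hG.isConnected
  obtain ⟨p, hp⟩ := hc.exists_walk_length_eq_dist x R
  have hpath : p.IsPath := SimpleGraph.Walk.isPath_of_length_eq_dist _ hp
  have hu' : u ∈ p.support := anc_mem_support hG hu p hpath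
  have hw' : w ∈ p.support := anc_mem_support hG hw p hpath
  obtain ⟨hadd, htake, hdrop⟩ := geodesic_split p hp hc hu'
  have hsp := SimpleGraph.Walk.take_spec p hu'
  have hw2 : w ∈ ((p.takeUntil u hu').append (p.dropUntil u hu')).support := by
    rw [hsp]; exact hw'
  rw [SimpleGraph.Walk.mem_support_append_iff] at hw2
  rcases hw2 with hw2 | hw2
  · -- w on geodesic x → u : forces w = u
    obtain ⟨hadd', _, _⟩ := geodesic_split (p.takeUntil u hu') htake hc hw2
    rw [anc] at hw hu ⊢
    have hcm : G.dist w u = G.dist u w := SimpleGraph.dist_comm ..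
    have : G.dist w u = 0 := by omega
    have := (hc.dist_eq_zero_iff).mp this
    subst this
    omega
  · obtain ⟨hadd', _, _⟩ := geodesic_split (p.dropUntil u hu') hdrop hc hw2
    rw [anc]
    omega
variable [Fintype V]

noncomputable def brF (G : SimpleGraph V) (R u : V) : Finset V :=
  univ.filter (fun w => anc G R u w)

/-- L2: the number of ancestors of `w` at level ≥ s. -/
lemma card_anc_level (hG : G.IsTree) (w : V) (s : ℕ) :
    (univ.filter (fun u => anc G R u w ∧ s ≤ G.dist u R)).card = (G.dist w R + 1) - s := by
  have hc := hG.isConnected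
  rw [← Nat.card_Icc s (G.dist w R)]
  apply Finset.card_bij (fun u _ => G.dist u R)
  · intro u hu
    simp only [mem_filter, mem_univ, true_and] at hu
    simp only [Finset.mem_Icc]
    exact ⟨hu.2, anc_dist_le hu.1⟩
  · intro u hu v hv hd
    simp only [mem_filter, mem_univ, true_and] at hu hv
    exact anc_unique hG hu.1 hv.1 hd
  · intro i hi
    simp only [Finset.mem_Icc] at hi
    obtain ⟨u, hu, hud⟩ := exists_anc (R := R) hc w hi.2
    exact ⟨u, by simp [hu, hud, hi.1], hud⟩

/-- L3: double counting. -/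
lemma sum_br_eq (hG : G.IsTree) (s : ℕ) :
    ∑ u ∈ univ.filter (fun u => s ≤ G.dist u R), (brF G R u).card
      = ∑ w : V, ((G.dist w R + 1) - s) := by
  have lhs : ∀ u : V, (brF G R u).card = ∑ w : V, if anc G R u w then 1 else 0 := by
    intro u; rw [brF, Finset.card_filter]
  calc ∑ u ∈ univ.filter (fun u => s ≤ G.dist u R), (brF G R u).card
      = ∑ u : V, if s ≤ G.dist u R then (brF G R u).card else 0 := by
        rw [Finset.sum_filter]
    _ = ∑ u : V, ∑ w : V, if anc G R u w ∧ s ≤ G.dist u R then 1 else 0 := by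
        apply Finset.sum_congr rfl; intro u _
        by_cases h : s ≤ G.dist u R
        · simp only [h, if_true, lhs u, and_true]
        · simp [h]
    _ = ∑ w : V, ∑ u : V, if anc G R u w ∧ s ≤ G.dist u R then 1 else 0 := Finset.sum_comm
    _ = ∑ w : V, ((G.dist w R + 1) - s) := by
        apply Finset.sum_congr rfl; intro w _
        rw [← card_anc_level hG w s, Finset.card_filter]

/-- L4: the key inequality. -/
lemma sum_br_le (hG : G.IsTree) (t : ℕ) :
    ∑ u ∈ univ.filter (fun u => t ≤ G.dist u R), (brF G R u).card
      ≤ ∑ w : V, ((brF G R w).card - t) := by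
  have hc := hG.isConnected
  -- the projection t levels up
  have hex : ∀ u : V, t ≤ G.dist u R → ∃ v, anc G R v u ∧ G.dist v R = G.dist u R - t :=
    fun u hu => exists_anc hc u (by omega)
  set π : V → V := fun u => if h : t ≤ G.dist u R then Classical.choose (hex u h) else u with hπ
  have hπs : ∀ u, t ≤ G.dist u R → anc G R (π u) u ∧ G.dist (π u) R = G.dist u R - t := by
    intro u h
    simp only [hπ, dif_pos h]
    exact Classical.choose_spec (hex u h)
  rw [← Finset.sum_fiberwise_of_maps_to (t := (univ : Finset V)) (g := π)
      (fun x _ => mem_univ _) (fun u => (brF G R u).card)]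
  apply Finset.sum_le_sum
  intro w _
  set F : Finset V := (univ.filter (fun u => t ≤ G.dist u R)).filter (fun u => π u = w) with hF
  have hFmem : ∀ u ∈ F, anc G R w u ∧ G.dist u R = G.dist w R + t := by
    intro u hu
    simp only [hF, mem_filter, mem_univ, true_and] at hu
    obtain ⟨h1, h2⟩ := hu
    obtain ⟨ha, hd⟩ := hπs u h1
    rw [h2] at ha hd
    exact ⟨ha, by omega⟩
  rcases Finset.eq_empty_or_nonempty F with hFe | ⟨u₀, hu₀⟩
  · simp [hFe]
  · -- the fibers' branch sets are disjoint subsets of brF w, and miss t extra vertices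
    obtain ⟨ha₀, hd₀⟩ := hFmem u₀ hu₀
    set E : Finset V :=
      univ.filter (fun y => anc G R y u₀ ∧ G.dist w R ≤ G.dist y R ∧ G.dist y R < G.dist u₀ R)
      with hE
    have hEcard : E.card = t := by
      have : E.card = (Finset.Ico (G.dist w R) (G.dist u₀ R)).card := by
        apply Finset.card_bij (fun y _ => G.dist y R)
        · intro y hy
          simp only [hE, mem_filter, mem_univ, true_and] at hy
          simp only [Finset.mem_Ico]
          exact ⟨hy.2.1, hy.2.2⟩
        · intro y hy z hz hd
          simp only [hE, mem_filter, mem_univ, true_and] at hy hz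
          exact anc_unique hG hy.1 hz.1 hd
        · intro i hi
          simp only [Finset.mem_Ico] at hi
          obtain ⟨y, hy, hyd⟩ := exists_anc (R := R) hc u₀ (le_of_lt (lt_of_lt_of_le hi.2 (le_refl _)))
          exact ⟨y, by simp [hE, hy, hyd, hi.1, hi.2], hyd⟩
      rw [this, Nat.card_Ico]
      omega
    have hEsub : E ⊆ brF G R w := by
      intro y hy
      simp only [hE, mem_filter, mem_univ, true_and] at hy
      simp only [brF, mem_filter, mem_univ, true_and]
      exact anc_anc hG ha₀ hy.1 hy.2.1
    have hBsub : ∀ u ∈ F, brF G R u ⊆ brF G R w := by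
      intro u hu x hx
      simp only [brF, mem_filter, mem_univ, true_and] at hx ⊢
      exact anc_trans hc hx (hFmem u hu).1
    have hdisj : ∀ u₁ ∈ F, ∀ u₂ ∈ F, u₁ ≠ u₂ → Disjoint (brF G R u₁) (brF G R u₂) := by
      intro u₁ h1 u₂ h2 hne
      rw [Finset.disjoint_left]
      intro x hx1 hx2
      simp only [brF, mem_filter, mem_univ, true_and] at hx1 hx2
      exact hne (anc_unique hG hx1 hx2 (by rw [(hFmem u₁ h1).2, (hFmem u₂ h2).2]))
    have hEdisj : Disjoint E (F.biUnion (brF G R)) := by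
      rw [Finset.disjoint_right]
      intro x hx hxE
      simp only [Finset.mem_biUnion] at hx
      obtain ⟨u, hu, hxu⟩ := hx
      simp only [brF, mem_filter, mem_univ, true_and] at hxu
      simp only [hE, mem_filter, mem_univ, true_and] at hxE
      have h1 : G.dist u R ≤ G.dist x R := anc_dist_le hxu
      have h2 := (hFmem u hu).2
      omega
    have hcard : ∑ u ∈ F, (brF G R u).card + t ≤ (brF G R w).card := by
      rw [← Finset.card_biUnion hdisj, ← hEcard, ← Finset.card_union_of_disjoint hEdisj.symm]
      apply Finset.card_le_card
      intro x hx
      rcases Finset.mem_union.mp hx with hx | hx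
      · obtain ⟨u, hu, hxu⟩ := Finset.mem_biUnion.mp hx
        exact hBsub u hu hxu
      · exact hEsub hx
    omega

lemma coe_desc (M : Multiset ℕ) : ((M.sort (· ≤ ·)).reverse : Multiset ℕ) = M := by
  rw [Multiset.coe_reverse, Multiset.sort_eq]

lemma len_desc (M : Multiset ℕ) : (M.sort (· ≤ ·)).reverse.length = Multiset.card M := by
  rw [List.length_reverse, Multiset.length_sort]

lemma sorted_desc (M : Multiset ℕ) : (M.sort (· ≤ ·)).reverse.Pairwise (· ≥ ·) := by
  have := Multiset.pairwise_sort (s := M) (r := (· ≤ ·))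
  rw [List.pairwise_reverse]
  exact this

lemma map_sub_sum (s : List ℕ) (t : ℕ) (h : ∀ x ∈ s, t ≤ x) :
    s.length * t + (s.map (· - t)).sum = s.sum := by
  induction s with
  | nil => simp
  | cons a s ih =>
    have ha : t ≤ a := h a (by simp)
    have hs := ih (fun x hx => h x (by simp [hx]))
    simp only [List.length_cons, List.map_cons, List.sum_cons, Nat.succ_mul]
    omega

lemma add_map_sub_sum (s : List ℕ) (t : ℕ) :
    s.sum ≤ s.length * t + (s.map (· - t)).sum := by
  induction s with
  | nil => simp
  | cons a s ih =>
    simp only [List.length_cons, List.map_cons, List.sum_cons, Nat.succ_mul]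
    have : a ≤ t + (a - t) := by omega
    omega

lemma topSum_eq_sum (M : Multiset ℕ) {k : ℕ} (hk : Multiset.card M ≤ k) :
    topSum M k = M.sum := by
  rw [topSum, List.take_of_length_le (by rw [len_desc]; exact hk)]
  conv_rhs => rw [← coe_desc M]
  rfl

lemma topSum_le (M : Multiset ℕ) (k t : ℕ) :
    topSum M k ≤ k * t + (M.map (· - t)).sum := by
  set l := (M.sort (· ≤ ·)).reverse with hl
  have h1 : (l.take k).sum ≤ (l.take k).length * t + ((l.take k).map (· - t)).sum :=
    add_map_sub_sum _ t
  have h3 : ((l.take k).map (· - t)).sum ≤ (l.map (· - t)).sum := by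
    apply List.Sublist.sum_le_sum
    · exact List.Sublist.map _ (List.take_sublist k l)
    · intro a _; exact Nat.zero_le a
  have h4 : (M.map (· - t)).sum = (l.map (· - t)).sum := by
    rw [← coe_desc M, Multiset.map_coe, Multiset.sum_coe]
  have h5 : (l.take k).length ≤ k := by
    rw [List.length_take]; exact min_le_left _ _
  calc topSum M k = (l.take k).sum := rfl
    _ ≤ (l.take k).length * t + ((l.take k).map (· - t)).sum := h1
    _ ≤ k * t + (M.map (· - t)).sum := by
        rw [h4]
        exact Nat.add_le_add (Nat.mul_le_mul_right t h5) h3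

lemma exists_thresh (M : Multiset ℕ) {k : ℕ} (hk1 : 1 ≤ k) (hk : k ≤ Multiset.card M) :
    ∃ t, k * t + (M.map (· - t)).sum ≤ topSum M k := by
  obtain ⟨l, hl⟩ : ∃ l' : List ℕ, l' = (M.sort (· ≤ ·)).reverse := ⟨_, rfl⟩
  have hsorted : l.Pairwise (· ≥ ·) := hl ▸ sorted_desc M
  have hlen : l.length = Multiset.card M := hl ▸ len_desc M
  have hcoe : (l : Multiset ℕ) = M := hl ▸ coe_desc M
  have htop : topSum M k = (l.take k).sum := by rw [topSum, ← hl]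
  have hkl : k ≤ l.length := by omega
  have hik : k - 1 < l.length := by omega
  set t := l.get ⟨k - 1, hik⟩ with ht
  refine ⟨t, ?_⟩
  have htake : ∀ x ∈ l.take k, t ≤ x := by
    intro x hx
    obtain ⟨i, hi, rfl⟩ := List.getElem_of_mem hx
    rw [List.length_take] at hi
    have hik2 : i < k := (lt_min_iff.mp hi).1
    have hi2 : i < l.length := (lt_min_iff.mp hi).2
    rw [List.getElem_take]
    exact hsorted.rel_get_of_le (a := ⟨i, hi2⟩) (b := ⟨k - 1, hik⟩)
      (Fin.mk_le_mk.mpr (by omega))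
  have hdrop : ∀ x ∈ l.drop k, x ≤ t := by
    intro x hx
    obtain ⟨i, hi, rfl⟩ := List.getElem_of_mem hx
    rw [List.length_drop] at hi
    rw [List.getElem_drop]
    exact hsorted.rel_get_of_lt (a := ⟨k - 1, hik⟩) (b := ⟨k + i, by omega⟩)
      (Fin.mk_lt_mk.mpr (by omega))
  have hmap : (M.map (· - t)).sum = (l.map (· - t)).sum := by
    rw [← hcoe, Multiset.map_coe, Multiset.sum_coe]
  have hsplit : (l.map (· - t)).sum
      = ((l.take k).map (· - t)).sum + ((l.drop k).map (· - t)).sum := by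
    rw [← List.sum_append, ← List.map_append, List.take_append_drop]
  have hdrop0 : ((l.drop k).map (· - t)).sum = 0 := by
    apply List.sum_eq_zero
    intro x hx
    obtain ⟨y, hy, rfl⟩ := List.mem_map.mp hx
    exact Nat.sub_eq_zero_of_le (hdrop y hy)
  have hlentake : (l.take k).length = k := by
    rw [List.length_take]; omega
  have hfin : k * t + ((l.take k).map (· - t)).sum = (l.take k).sum := by
    have h := map_sub_sum (l.take k) t htake
    rw [hlentake] at h
    exact h
  rw [hmap, hsplit, hdrop0, Nat.add_zero, hfin, htop]

lemma branchSize_eq (u : V) : branchSize G R u = (brF G R u).card := by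
  rw [branchSize]
  have : ({w : V | G.dist w R = G.dist w u + G.dist u R} : Set V) = ↑(brF G R u) := by
    ext w
    rw [Set.mem_setOf_eq, Finset.mem_coe, brF, Finset.mem_filter]
    simp [anc]
  rw [this, Set.ncard_coe_finset]

end TreeMaj

/-- For a finite rooted tree, the multiset of branch sizes majorizes the multiset of
distance numbers. -/
theorem branches_majorize_dists {V : Type*} [Fintype V] (G : SimpleGraph V)
    (hG : G.IsTree) (R : V) :
    ((Finset.univ : Finset V).val.map (branchSize G R)).sum
        = ((Finset.univ : Finset V).val.map (distNum G R)).sum ∧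
    ∀ k, topSum ((Finset.univ : Finset V).val.map (distNum G R)) k ≤
        topSum ((Finset.univ : Finset V).val.map (branchSize G R)) k := by
  classical
  open TreeMaj Finset in
  have hsumB : ∀ f : V → ℕ, ((Finset.univ : Finset V).val.map f).sum = ∑ v : V, f v := by
    intro f; rfl
  have key : ∀ t : ℕ, ∑ v : V, (distNum G R v - t) ≤ ∑ v : V, (branchSize G R v - t) := by
    intro t
    have h1 : ∑ v : V, (distNum G R v - t) = ∑ w : V, ((G.dist w R + 1) - t) := rfl
    have h2 : ∑ v : V, (branchSize G R v - t) = ∑ w : V, ((brF G R w).card - t) := by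
      apply Finset.sum_congr rfl; intro w _; rw [branchSize_eq]
    rw [h1, h2, ← sum_br_eq hG t]
    exact sum_br_le hG t
  have hsum : ∑ v : V, branchSize G R v = ∑ v : V, distNum G R v := by
    have h0 := sum_br_eq (R := R) hG 0
    rw [Finset.filter_true_of_mem (fun u _ => Nat.zero_le _)] at h0
    calc ∑ v : V, branchSize G R v = ∑ v : V, (brF G R v).card := by
          apply Finset.sum_congr rfl; intro w _; rw [branchSize_eq]
      _ = ∑ w : V, ((G.dist w R + 1) - 0) := h0
      _ = ∑ v : V, distNum G R v := by simp [distNum]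
  constructor
  · rw [hsumB, hsumB, hsum]
  · intro k
    set D := ((Finset.univ : Finset V).val.map (distNum G R)) with hD
    set B := ((Finset.univ : Finset V).val.map (branchSize G R)) with hB
    have hcD : Multiset.card D = Fintype.card V := by
      rw [hD, Multiset.card_map]; rfl
    have hcB : Multiset.card B = Fintype.card V := by
      rw [hB, Multiset.card_map]; rfl
    have hDsum : D.sum = ∑ v : V, distNum G R v := rfl
    have hBsum : B.sum = ∑ v : V, branchSize G R v := rfl
    rcases Nat.eq_zero_or_pos k with rfl | hk1
    · simp [topSum]
    rcases le_or_gt k (Fintype.card V) with hk | hk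
    · obtain ⟨t, hth⟩ := exists_thresh B hk1 (by omega)
      have c1 : topSum D k ≤ k * t + (D.map (· - t)).sum := topSum_le D k t
      have c2 : (D.map (· - t)).sum = ∑ v : V, (distNum G R v - t) := by
        rw [hD, Multiset.map_map]; rfl
      have c3 : (B.map (· - t)).sum = ∑ v : V, (branchSize G R v - t) := by
        rw [hB, Multiset.map_map]; rfl
      calc topSum D k ≤ k * t + (D.map (· - t)).sum := c1
        _ ≤ k * t + (B.map (· - t)).sum := by
            rw [c2, c3]; exact Nat.add_le_add_left (key t) _
        _ ≤ topSum B k := hth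
    · rw [topSum_eq_sum D (by omega), topSum_eq_sum B (by omega), hDsum, hBsum, hsum]
end

section
/- For every solid partition Λ ⊂ ℕ³, the product of the volume numbers is at most the product of the anti-volume numbers: ∏_{(i,j,k)∈Λ} V(i,j,k) ≤ ∏_{(i,j,k)∈Λ} V*(i,j,k). -/
open Finset

/-- Volume number: number of points of `Λ` coordinatewise above `c`. -/
def volNum (Λ : Finset (ℕ × ℕ × ℕ)) (c : ℕ × ℕ × ℕ) : ℕ :=
  (Λ.filter fun d => c.1 ≤ d.1 ∧ c.2.1 ≤ d.2.1 ∧ c.2.2 ≤ d.2.2).card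

/-- Anti-volume number: number of points of `Λ` coordinatewise below `c`. -/
def antiVolNum (Λ : Finset (ℕ × ℕ × ℕ)) (c : ℕ × ℕ × ℕ) : ℕ :=
  (Λ.filter fun d => d.1 ≤ c.1 ∧ d.2.1 ≤ c.2.1 ∧ d.2.2 ≤ c.2.2).card

section Aux
variable {α : Type*} [Preorder α] [DecidableEq α]
  [DecidableRel ((· ≤ ·) : α → α → Prop)]

def vN (Λ : Finset α) (c : α) : ℕ := (Λ.filter fun d => c ≤ d).card
def aN (Λ : Finset α) (c : α) : ℕ := (Λ.filter fun d => d ≤ c).card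
def IsLowerF (Λ : Finset α) : Prop := ∀ x ∈ Λ, ∀ y : α, y ≤ x → y ∈ Λ

lemma lower_nat_mem {s : Finset ℕ} (hs : IsLowerF s) {k : ℕ} :
    k ∈ s ↔ k < s.card := by
  constructor
  · intro hk
    by_contra h
    push_neg at h
    have hsub : range (k + 1) ⊆ s := fun b hb =>
      hs k hk b (Nat.lt_succ_iff.mp (mem_range.mp hb))
    have := card_le_card hsub
    simp at this; omega
  · intro hk
    by_contra h
    have hsub : s ⊆ range k := by
      intro a ha
      rw [mem_range]
      by_contra hak
      push_neg at hak
      exact h (hs a ha k hak)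
    have := card_le_card hsub
    simp at this; omega

lemma prod_range_sub (n : ℕ) : ∏ i ∈ range n, (n - i) = ∏ i ∈ range n, (i + 1) :=
  calc ∏ i ∈ range n, (n - i) = ∏ i ∈ range n, ((n - 1 - i) + 1) := by
        apply prod_congr rfl; intro j hj; rw [mem_range] at hj; omega
    _ = ∏ i ∈ range n, (i + 1) := prod_range_reflect (fun i => i + 1) n

lemma baseN (Λ : Finset ℕ) (hΛ : IsLowerF Λ) :
    ∏ c ∈ Λ, vN Λ c ≤ ∏ c ∈ Λ, aN Λ c := by
  have hr : Λ = range Λ.card := by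
    ext k; rw [mem_range]; exact lower_nat_mem hΛ
  apply le_of_eq
  set n := Λ.card with hn
  have h1 : ∀ c ∈ Λ, vN Λ c = n - c := by
    intro c hc
    have : Λ.filter (fun d => c ≤ d) = Ico c n := by
      rw [hr]; ext d; simp [mem_Ico]; omega
    rw [vN, this, Nat.card_Ico]
  have h2 : ∀ c ∈ Λ, aN Λ c = c + 1 := by
    intro c hc
    have hc' : c < n := by rw [← mem_range, ← hr]; exact hc
    have : Λ.filter (fun d => d ≤ c) = range (c + 1) := by
      rw [hr]; ext d; simp; omega
    rw [aN, this, card_range]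
  calc ∏ c ∈ Λ, vN Λ c = ∏ c ∈ Λ, (n - c) := prod_congr rfl h1
    _ = ∏ c ∈ range n, (n - c) := by rw [← hr]
    _ = ∏ c ∈ range n, (c + 1) := prod_range_sub n
    _ = ∏ c ∈ Λ, (c + 1) := by rw [← hr]
    _ = ∏ c ∈ Λ, aN Λ c := (prod_congr rfl h2).symm
end Aux

section Step
variable {α : Type*} [Preorder α] [DecidableEq α]
  [DecidableRel ((· ≤ ·) : α → α → Prop)]

lemma stepP
    (IH : ∀ Λ : Finset α, IsLowerF Λ → ∏ c ∈ Λ, vN Λ c ≤ ∏ c ∈ Λ, aN Λ c)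
    (Λ : Finset (ℕ × α)) (hΛ : IsLowerF Λ) :
    ∏ c ∈ Λ, vN Λ c ≤ ∏ c ∈ Λ, aN Λ c := by
  classical
  set sl : ℕ → Finset α := fun i => (Λ.filter fun c => c.1 = i).image Prod.snd with hsl
  set ht : α → ℕ := fun y => (Λ.filter fun c => c.2 = y).card with hht
  have mem_sl : ∀ {i : ℕ} {z : α}, z ∈ sl i ↔ (i, z) ∈ Λ := by
    intro i z
    simp only [hsl, mem_image, mem_filter]
    constructor
    · rintro ⟨⟨p, w⟩, ⟨hmem, h1⟩, h2⟩
      simp only at h1 h2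
      subst h1; subst h2; exact hmem
    · intro h; exact ⟨(i, z), ⟨h, rfl⟩, rfl⟩
  have mem_ht : ∀ {i : ℕ} {y : α}, (i, y) ∈ Λ ↔ i < ht y := by
    intro i y
    set Iy : Finset ℕ := (Λ.filter fun c => c.2 = y).image Prod.fst with hIy
    have memIy : ∀ {j : ℕ}, j ∈ Iy ↔ (j, y) ∈ Λ := by
      intro j
      simp only [hIy, mem_image, mem_filter]
      constructor
      · rintro ⟨⟨p, w⟩, ⟨hmem, h1⟩, h2⟩
        simp only at h1 h2
        subst h1; subst h2; exact hmem
      · intro h; exact ⟨(j, y), ⟨h, rfl⟩, rfl⟩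
    have hcard : Iy.card = ht y := by
      rw [hIy]
      apply card_image_of_injOn
      rintro ⟨p, w⟩ hp ⟨q, u⟩ hq hpq
      simp only [mem_coe, mem_filter] at hp hq
      simp only at hpq
      ext <;> simp [hpq, hp.2, hq.2]
    have hlow : IsLowerF Iy := by
      intro a ha b hb
      rw [memIy] at ha ⊢
      exact hΛ _ ha (b, y) (Prod.mk_le_mk.mpr ⟨hb, le_refl y⟩)
    rw [← memIy, lower_nat_mem hlow, hcard]
  have sl_lower : ∀ i, IsLowerF (sl i) := by
    intro i z hz w hw
    rw [mem_sl] at hz ⊢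
    exact hΛ _ hz (i, w) (Prod.mk_le_mk.mpr ⟨le_refl i, hw⟩)
  -- pointwise bound for vN
  have key_v : ∀ c ∈ Λ, vN Λ c ≤ (ht c.2 - c.1) * vN (sl c.1) c.2 := by
    rintro ⟨i, y⟩ hc
    have : vN Λ (i, y) ≤ ((Ico i (ht y)) ×ˢ ((sl i).filter fun z => y ≤ z)).card := by
      apply card_le_card_of_injOn (fun d => (d.1, d.2))
      · rintro ⟨p, z⟩ hd
        rw [mem_coe, mem_filter] at hd
        obtain ⟨hdΛ, hle⟩ := hd
        rw [Prod.mk_le_mk] at hle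
        rw [mem_coe, mem_product, mem_Ico, mem_filter, mem_sl]
        refine ⟨⟨hle.1, ?_⟩, ?_, hle.2⟩
        · rw [← mem_ht]
          exact hΛ _ hdΛ (p, y) (Prod.mk_le_mk.mpr ⟨le_refl p, hle.2⟩)
        · exact hΛ _ hdΛ (i, z) (Prod.mk_le_mk.mpr ⟨hle.1, le_refl z⟩)
      · rintro ⟨p, z⟩ _ ⟨q, u⟩ _ h
        simpa using h
    calc vN Λ (i, y) ≤ _ := this
      _ = (ht y - i) * vN (sl i) y := by
          rw [card_product, Nat.card_Ico]; rfl
  -- pointwise bound for aN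
  have key_a : ∀ c ∈ Λ, (c.1 + 1) * aN (sl c.1) c.2 ≤ aN Λ c := by
    rintro ⟨i, y⟩ hc
    have : ((range (i + 1)) ×ˢ ((sl i).filter fun z => z ≤ y)).card ≤ aN Λ (i, y) := by
      apply card_le_card_of_injOn (fun d => (d.1, d.2))
      · rintro ⟨p, z⟩ hd
        rw [mem_coe, mem_product, mem_range, mem_filter] at hd
        obtain ⟨hp, hz, hzy⟩ := hd
        rw [mem_sl] at hz
        rw [mem_coe, mem_filter]
        constructor
        · exact hΛ _ hz (p, z) (Prod.mk_le_mk.mpr ⟨Nat.lt_succ_iff.mp hp, le_refl z⟩)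
        · exact Prod.mk_le_mk.mpr ⟨Nat.lt_succ_iff.mp hp, hzy⟩
      · rintro ⟨p, z⟩ _ ⟨q, u⟩ _ h
        simpa using h
    calc (i + 1) * aN (sl i) y = _ := by rw [card_product, card_range]; rfl
      _ ≤ aN Λ (i, y) := this
  -- fiber description in the y-direction
  have fiber_y : ∀ y : α, (Λ.filter fun c => c.2 = y)
      = (range (ht y)).image (fun i => (i, y)) := by
    intro y
    ext ⟨p, z⟩
    simp only [mem_filter, mem_image, mem_range]
    constructor
    · rintro ⟨hmem, h⟩
      subst h
      exact ⟨p, mem_ht.mp hmem, rfl⟩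
    · rintro ⟨j, hj, h⟩
      obtain ⟨rfl, rfl⟩ : j = p ∧ y = z := by
        constructor <;> [exact congrArg Prod.fst h; exact congrArg Prod.snd h]
      exact ⟨mem_ht.mpr hj, rfl⟩
  -- product of (ht c.2 - c.1) equals product of (c.1 + 1)
  have prodA : ∏ c ∈ Λ, (ht c.2 - c.1) = ∏ c ∈ Λ, (c.1 + 1) := by
    rw [← prod_fiberwise_of_maps_to (fun c hc => mem_image_of_mem Prod.snd hc)
        (fun c => (ht c.2 - c.1)),
      ← prod_fiberwise_of_maps_to (fun c hc => mem_image_of_mem Prod.snd hc)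
        (fun c => (c.1 + 1))]
    apply prod_congr rfl
    intro y hy
    rw [fiber_y y, prod_image (by rintro a _ b _ h; simpa using h),
      prod_image (by rintro a _ b _ h; simpa using h)]
    exact prod_range_sub (ht y)
  -- product over slices
  have prodB : ∏ c ∈ Λ, vN (sl c.1) c.2 ≤ ∏ c ∈ Λ, aN (sl c.1) c.2 := by
    rw [← prod_fiberwise_of_maps_to (fun c hc => mem_image_of_mem Prod.fst hc)
        (fun c => vN (sl c.1) c.2),
      ← prod_fiberwise_of_maps_to (fun c hc => mem_image_of_mem Prod.fst hc)
        (fun c => aN (sl c.1) c.2)]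
    apply prod_le_prod'
    intro i hi
    have hv : ∏ c ∈ Λ.filter (fun c => c.1 = i), vN (sl c.1) c.2
        = ∏ z ∈ sl i, vN (sl i) z := by
      rw [hsl, prod_image ?_]
      · apply prod_congr rfl
        intro c hc
        rw [mem_filter] at hc
        rw [hc.2]
      · rintro ⟨p, z⟩ hp ⟨q, u⟩ hq h
        rw [mem_coe, mem_filter] at hp hq
        have h1 : p = q := hp.2.trans hq.2.symm
        have h2 : z = u := h
        subst h1; subst h2; rfl
    have ha : ∏ c ∈ Λ.filter (fun c => c.1 = i), aN (sl c.1) c.2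
        = ∏ z ∈ sl i, aN (sl i) z := by
      rw [hsl, prod_image ?_]
      · apply prod_congr rfl
        intro c hc
        rw [mem_filter] at hc
        rw [hc.2]
      · rintro ⟨p, z⟩ hp ⟨q, u⟩ hq h
        rw [mem_coe, mem_filter] at hp hq
        have h1 : p = q := hp.2.trans hq.2.symm
        have h2 : z = u := h
        subst h1; subst h2; rfl
    rw [hv, ha]
    exact IH (sl i) (sl_lower i)
  calc ∏ c ∈ Λ, vN Λ c
      ≤ ∏ c ∈ Λ, ((ht c.2 - c.1) * vN (sl c.1) c.2) := prod_le_prod' key_v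
    _ = (∏ c ∈ Λ, (ht c.2 - c.1)) * ∏ c ∈ Λ, vN (sl c.1) c.2 := prod_mul_distrib
    _ ≤ (∏ c ∈ Λ, (c.1 + 1)) * ∏ c ∈ Λ, aN (sl c.1) c.2 := by
        rw [prodA]; exact Nat.mul_le_mul_left _ prodB
    _ = ∏ c ∈ Λ, ((c.1 + 1) * aN (sl c.1) c.2) := prod_mul_distrib.symm
    _ ≤ ∏ c ∈ Λ, aN Λ c := prod_le_prod' key_a
end Step


/-- For a solid partition (finite lower order ideal in `ℕ³`), the product of volume
numbers is at most the product of anti-volume numbers. -/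
theorem prod_vol_le_prod_antiVol (Λ : Finset (ℕ × ℕ × ℕ))
    (hΛ : ∀ x ∈ Λ, ∀ y : ℕ × ℕ × ℕ,
      y.1 ≤ x.1 → y.2.1 ≤ x.2.1 → y.2.2 ≤ x.2.2 → y ∈ Λ) :
    ∏ c ∈ Λ, volNum Λ c ≤ ∏ c ∈ Λ, antiVolNum Λ c := by
  have hv : ∀ c, volNum Λ c = vN Λ c := by
    intro c
    unfold volNum vN
    congr 1
  have ha : ∀ c, antiVolNum Λ c = aN Λ c := by
    intro c
    unfold antiVolNum aN
    congr 1
  calc ∏ c ∈ Λ, volNum Λ c = ∏ c ∈ Λ, vN Λ c := prod_congr rfl fun c _ => hv c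
    _ ≤ ∏ c ∈ Λ, aN Λ c := by
        apply stepP (stepP baseN)
        intro x hx y hy
        rw [Prod.le_def, Prod.le_def] at hy
        exact hΛ x hx y hy.1 hy.2.1 hy.2.2
    _ = ∏ c ∈ Λ, antiVolNum Λ c := (prod_congr rfl fun c _ => ha c).symm
end
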